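/- arXiv:2504.12302 — 5 statements merged into one kernel-verified Lean document; each statement's English description precedes it below -/
import Mathlib

section
/- Let A be an m × k integer matrix of rank r. Then every minimal element n (with respect to the componentwise order on ℕ^k) of the set of nontrivial nonnegative integer solutions {n ∈ ℕ^k : A·n = 0, n ≠ 0} satisfies ‖n‖₁ ≤ (1 + k·‖A‖∞)^r. -/
open Finset

lemma pottier_row_lemma {m k : ℕ} (A : Matrix (Fin m) (Fin k) ℤ) (r : ℕ)
    (hr : r = (A.map ((↑) : ℤ → ℚ)).rank) :
    ∃ R : Finset (Fin m), R.card ≤ r ∧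
      ∀ d : Fin k → ℤ, (∀ ℓ ∈ R, A.mulVec d ℓ = 0) → A.mulVec d = 0 := by
  classical
  set Aq : Matrix (Fin m) (Fin k) ℚ := A.map ((↑) : ℤ → ℚ) with hAq
  have hrank : Module.finrank ℚ ↥(Submodule.span ℚ (Set.range Aq)) = r := by
    rw [hr, ← Matrix.rank_transpose Aq, Matrix.rank, Matrix.range_mulVecLin]
    rfl
  obtain ⟨b, hbsub, hbspan, hbind⟩ := exists_linearIndependent ℚ (Set.range Aq)
  have hbfin : b.Finite := (Set.finite_range Aq).subset hbsub
  haveI : Fintype b := hbfin.fintype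
  have hcard : b.toFinset.card = r := by
    rw [← finrank_span_set_eq_card hbind, hbspan, hrank]
  have hex : ∀ x ∈ b, ∃ ℓ : Fin m, Aq ℓ = x := fun x hx => hbsub hx
  set R : Finset (Fin m) :=
    b.toFinset.attach.image
      (fun x => (hex x.1 (Set.mem_toFinset.mp x.2)).choose) with hR
  refine ⟨R, ?_, ?_⟩
  · calc R.card ≤ b.toFinset.attach.card := Finset.card_image_le
      _ = r := by rw [Finset.card_attach, hcard]
  · intro d hd
    set dq : Fin k → ℚ := fun i => (d i : ℚ) with hdq
    have hrowzero : ∀ ℓ ∈ R, ∑ i, Aq ℓ i * dq i = 0 := by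
      intro ℓ hℓ
      have h0 : A.mulVec d ℓ = 0 := hd ℓ hℓ
      have : ((A.mulVec d ℓ : ℤ) : ℚ) = ∑ i, Aq ℓ i * dq i := by
        simp [Matrix.mulVec, dotProduct, hAq, hdq, Matrix.map_apply]
      rw [h0] at this
      simpa using this.symm
    have hbase : ∀ x ∈ b, ∑ i, x i * dq i = 0 := by
      intro x hx
      obtain ⟨ℓ0, hmemR, hxe⟩ : ∃ ℓ0 ∈ R, Aq ℓ0 = x := by
        refine ⟨(hex x hx).choose, ?_, (hex x hx).choose_spec⟩
        rw [hR]
        exact Finset.mem_image.mpr ⟨⟨x, Set.mem_toFinset.mpr hx⟩, Finset.mem_attach _ _, rfl⟩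
      rw [← hxe]
      exact hrowzero ℓ0 hmemR
    have hspanall : ∀ y ∈ Submodule.span ℚ b, ∑ i, y i * dq i = 0 := by
      intro y hy
      induction hy using Submodule.span_induction with
      | mem x hx => exact hbase x hx
      | zero => simp
      | add x z _ _ hx hz => simp [add_mul, Finset.sum_add_distrib, hx, hz]
      | smul c x _ hx =>
          simp only [Pi.smul_apply, smul_eq_mul, mul_assoc, ← Finset.mul_sum, hx, mul_zero]
    funext ℓ
    have hmem : Aq ℓ ∈ Submodule.span ℚ b := by
      rw [hbspan]
      exact Submodule.subset_span (Set.mem_range_self ℓ)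
    have h0 : ∑ i, Aq ℓ i * dq i = 0 := hspanall _ hmem
    have : ((A.mulVec d ℓ : ℤ) : ℚ) = 0 := by
      rw [← h0]
      simp [Matrix.mulVec, dotProduct, hAq, hdq, Matrix.map_apply]
    exact_mod_cast this

lemma pottier_term_bound (a x y : ℝ) (h1 : x ≤ y) (h2 : y - 1 < x) :
    -(max a 0) ≤ a * (x - y) ∧ a * (x - y) ≤ max (-a) 0 := by
  rcases le_total 0 a with ha | ha
  · rw [max_eq_left ha, max_eq_right (by linarith : -a ≤ 0)]
    constructor
    · nlinarith
    · nlinarith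
  · rw [max_eq_right ha, max_eq_left (by linarith : (0:ℝ) ≤ -a)]
    constructor
    · nlinarith
    · nlinarith

set_option maxHeartbeats 1000000 in
/-- Pottier's bound: every minimal nontrivial nonnegative integer solution `n` of the
homogeneous system `A · n = 0` satisfies `‖n‖₁ ≤ (1 + k·‖A‖∞)^r`, where `r` is the
rank of `A`. -/
theorem pottier_bound (m k : ℕ) (A : Matrix (Fin m) (Fin k) ℤ) (r : ℕ)
    (hr : r = (A.map ((↑) : ℤ → ℚ)).rank)
    (n : Fin k → ℕ)
    (hmin : Minimal (fun x : Fin k → ℕ =>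
      x ≠ 0 ∧ A.mulVec (fun i => (x i : ℤ)) = 0) n) :
    ∑ i, n i ≤
      (1 + k * (Finset.univ.sup fun p : Fin m × Fin k => (A p.1 p.2).natAbs)) ^ r := by
  classical
  obtain ⟨⟨hn0, hAn⟩, hminle⟩ := hmin
  set M : ℕ := Finset.univ.sup (fun p : Fin m × Fin k => (A p.1 p.2).natAbs) with hMdef
  set s : ℕ := ∑ i, n i with hsdef
  have hs0 : 0 < s := by
    rcases Function.ne_iff.mp hn0 with ⟨i, hi⟩
    exact Finset.sum_pos' (fun _ _ => Nat.zero_le _)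
      ⟨i, Finset.mem_univ i, Nat.pos_of_ne_zero hi⟩
  have hk0 : 0 < k := by
    rcases Function.ne_iff.mp hn0 with ⟨i, _⟩
    exact i.pos
  have hAbs : ∀ ℓ i, ((A ℓ i).natAbs : ℤ) ≤ (M : ℤ) := by
    intro ℓ i
    exact_mod_cast Finset.le_sup (f := fun p : Fin m × Fin k => (A p.1 p.2).natAbs)
      (Finset.mem_univ (ℓ, i))
  have hns : ∀ i, n i ≤ s := fun i =>
    Finset.single_le_sum (f := fun i => n i) (fun _ _ => Nat.zero_le _) (Finset.mem_univ i)
  -- offsets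
  set K : ℝ := 2 * (k + 1) * (s + 1) with hKdef
  have hK0 : (0:ℝ) < K := by positivity
  set γ : Fin k → ℝ := fun i => ((n i : ℝ) * (i.1 + 1) * Real.sqrt 2) / K with hγdef
  have hsqrt2 : Real.sqrt 2 < 2 := by
    nlinarith [Real.sq_sqrt (show (0:ℝ) ≤ 2 by norm_num), Real.sqrt_nonneg 2]
  have hγ0 : ∀ i, 0 ≤ γ i := fun i => by positivity
  have hγ1 : ∀ i, γ i < 1 := by
    intro i
    rw [hγdef]
    rw [div_lt_one hK0, hKdef]
    have h4 : (0:ℝ) ≤ Real.sqrt 2 := Real.sqrt_nonneg 2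
    have h12 : (n i : ℝ) * (i.1 + 1) ≤ (s : ℝ) * k := by
      have : n i * (i.1 + 1) ≤ s * k := Nat.mul_le_mul (hns i) i.isLt
      exact_mod_cast this
    have hsk : (0:ℝ) ≤ (s:ℝ) * k := by positivity
    calc (n i : ℝ) * (i.1 + 1) * Real.sqrt 2 ≤ ((s:ℝ) * k) * 2 :=
          mul_le_mul h12 (le_of_lt hsqrt2) h4 hsk
      _ < 2 * ((k:ℝ) + 1) * ((s:ℝ) + 1) := by
          have hs' : (0:ℝ) ≤ (s:ℝ) := by positivity
          have hk' : (0:ℝ) ≤ (k:ℝ) := by positivity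
          nlinarith [hs', hk']
  -- jump set
  set J : Finset (Fin k × ℕ) :=
    Finset.univ.biUnion (fun i => (Finset.Icc 1 (n i)).image (fun t => (i, t))) with hJdef
  have hmemJ : ∀ p : Fin k × ℕ, p ∈ J ↔ 1 ≤ p.2 ∧ p.2 ≤ n p.1 := by
    intro p
    rw [hJdef]
    simp only [Finset.mem_biUnion, Finset.mem_univ, true_and, Finset.mem_image,
      Finset.mem_Icc]
    constructor
    · rintro ⟨i, t, ⟨h1, h2⟩, rfl⟩; exact ⟨h1, h2⟩
    · rintro ⟨h1, h2⟩; exact ⟨p.1, p.2, ⟨h1, h2⟩, rfl⟩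
  have hJcard : J.card = s := by
    rw [hJdef, Finset.card_biUnion]
    · rw [hsdef]
      refine Finset.sum_congr rfl (fun i _ => ?_)
      rw [Finset.card_image_of_injective _ (fun a b h => by injection h), Nat.card_Icc]
      omega
    · intro x _ y _ hxy
      rw [Function.onFun, Finset.disjoint_left]
      rintro p hp hq
      simp only [Finset.mem_image] at hp hq
      obtain ⟨t, _, rfl⟩ := hp
      obtain ⟨t', _, h2⟩ := hq
      exact hxy (congrArg Prod.fst h2).symm
  set τ : Fin k × ℕ → ℝ := fun p => ((p.2 : ℝ) - γ p.1) / (n p.1 : ℝ) with hτdef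
  have hτrange : ∀ p ∈ J, 0 < τ p ∧ τ p ≤ 1 := by
    intro p hp
    obtain ⟨h1, h2⟩ := (hmemJ p).mp hp
    have hn1 : (0:ℝ) < (n p.1 : ℝ) := by
      exact_mod_cast Nat.lt_of_lt_of_le Nat.zero_lt_one (le_trans h1 h2)
    constructor
    · apply div_pos _ hn1
      have : (1:ℝ) ≤ (p.2:ℝ) := by exact_mod_cast h1
      nlinarith [hγ1 p.1]
    · rw [div_le_one hn1]
      have : (p.2:ℝ) ≤ (n p.1 : ℝ) := by exact_mod_cast h2
      nlinarith [hγ0 p.1]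
  have hτinj : Set.InjOn τ ↑J := by
    intro p hp q hq hpq
    obtain ⟨hp1, hp2⟩ := (hmemJ p).mp (by exact_mod_cast hp)
    obtain ⟨hq1, hq2⟩ := (hmemJ q).mp (by exact_mod_cast hq)
    have hnp : (0:ℝ) < (n p.1 : ℝ) := by
      exact_mod_cast Nat.lt_of_lt_of_le Nat.zero_lt_one (le_trans hp1 hp2)
    have hnq : (0:ℝ) < (n q.1 : ℝ) := by
      exact_mod_cast Nat.lt_of_lt_of_le Nat.zero_lt_one (le_trans hq1 hq2)
    rw [hτdef] at hpq
    simp only at hpq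
    rw [div_eq_div_iff (ne_of_gt hnp) (ne_of_gt hnq)] at hpq
    by_cases hij : p.1 = q.1
    · -- same i: conclude t equal
      have hcancel : ((p.2:ℝ)) = (q.2:ℝ) := by
        rw [hij] at hpq
        have h2 : ((p.2:ℝ) - γ q.1) = ((q.2:ℝ) - γ q.1) :=
          mul_right_cancel₀ (ne_of_gt hnq) hpq
        linarith
      have : p.2 = q.2 := by exact_mod_cast hcancel
      exact Prod.ext hij this
    · exfalso
      -- irrationality contradiction
      set c : ℚ := ((n p.1 : ℚ) * (n q.1 : ℚ) * ((p.1.1 : ℚ) - (q.1.1 : ℚ))) /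
        ((2 * (k+1) * (s+1) : ℚ)) with hcdef
      have hc0 : c ≠ 0 := by
        rw [hcdef]
        have h1 : (n p.1 : ℚ) ≠ 0 := by
          have := hp2; intro h; rw [show n p.1 = 0 by exact_mod_cast h] at this; omega
        have h2 : (n q.1 : ℚ) ≠ 0 := by
          have := hq2; intro h; rw [show n q.1 = 0 by exact_mod_cast h] at this; omega
        have h3 : ((p.1.1 : ℚ) - (q.1.1 : ℚ)) ≠ 0 := by
          intro h
          apply hij
          have : (p.1.1 : ℚ) = q.1.1 := by linarith [h]
          exact Fin.ext (by exact_mod_cast this)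
        have hden : ((2 * (k+1) * (s+1) : ℚ)) ≠ 0 := by positivity
        exact div_ne_zero (mul_ne_zero (mul_ne_zero h1 h2) h3) hden
      have hcast : (c:ℝ) = ((n p.1:ℝ) * (n q.1:ℝ) * ((p.1.1:ℝ) - (q.1.1:ℝ))) / K := by
        rw [hcdef, hKdef]
        push_cast
        ring
      have heq : ((p.2 : ℝ) * (n q.1:ℝ) - (q.2:ℝ) * (n p.1:ℝ)) = Real.sqrt 2 * (c:ℝ) := by
        rw [hcast]
        rw [hγdef] at hpq
        simp only at hpq
        field_simp at hpq ⊢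
        linear_combination hpq
      have hirr : Irrational (Real.sqrt 2 * (c:ℝ)) := irrational_sqrt_two.mul_ratCast hc0
      apply hirr
      refine ⟨((p.2 : ℚ) * (n q.1:ℚ) - (q.2:ℚ) * (n p.1:ℚ)), ?_⟩
      rw [← heq]
      push_cast
      ring
  set T : Finset ℝ := J.image τ with hTdef
  have hTcard : T.card = s := by
    rw [hTdef, Finset.card_image_of_injOn hτinj, hJcard]
  set e : Fin s ↪o ℝ := T.orderEmbOfFin hTcard with hedef
  have heT : ∀ j : Fin s, e j ∈ T := fun j => T.orderEmbOfFin_mem hTcard j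
  have hT01 : ∀ x ∈ T, 0 < x ∧ x ≤ 1 := by
    intro x hx
    rw [hTdef] at hx
    obtain ⟨p, hp, rfl⟩ := Finset.mem_image.mp hx
    exact hτrange p hp
  set θ : Fin s → ℝ := fun j =>
    if _h : (j : ℕ) = 0 then 0 else
      e ⟨(j:ℕ) - 1, Nat.lt_of_le_of_lt (Nat.sub_le _ _) j.isLt⟩ with hθdef
  have hθ0 : ∀ j, 0 ≤ θ j := by
    intro j
    rw [hθdef]; dsimp only
    split
    · exact le_refl 0
    · exact le_of_lt (hT01 _ (heT _)).1
  have hθ1 : ∀ j, θ j ≤ 1 := by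
    intro j
    rw [hθdef]; dsimp only
    split
    · norm_num
    · exact (hT01 _ (heT _)).2
  have hθmono : Monotone θ := by
    intro j j' hjj
    rw [hθdef]; dsimp only
    by_cases h1 : (j : ℕ) = 0
    · rw [dif_pos h1]
      by_cases h2 : (j' : ℕ) = 0
      · rw [dif_pos h2]
      · rw [dif_neg h2]
        exact le_of_lt (hT01 _ (heT _)).1
    · rw [dif_neg h1]
      have h2 : (j' : ℕ) ≠ 0 := by
        have : (j : ℕ) ≤ (j' : ℕ) := hjj
        omega
      rw [dif_neg h2]
      apply e.monotone
      rw [Fin.mk_le_mk]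
      have : (j : ℕ) ≤ (j' : ℕ) := hjj
      omega
  set Q : Fin s → Fin k → ℕ := fun j i => (⌊θ j * (n i : ℝ) + γ i⌋).toNat with hQdef
  have hfl0 : ∀ j i, (0:ℝ) ≤ θ j * (n i : ℝ) + γ i := by
    intro j i
    have h1 := hθ0 j
    have h2 := hγ0 i
    positivity
  have hQint : ∀ j i, (Q j i : ℤ) = ⌊θ j * (n i : ℝ) + γ i⌋ := by
    intro j i
    rw [hQdef]; dsimp only
    rw [Int.toNat_of_nonneg (Int.floor_nonneg.mpr (hfl0 j i))]
  have hQn : ∀ j i, Q j i ≤ n i := by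
    intro j i
    have hx : θ j * (n i : ℝ) + γ i < (n i : ℝ) + 1 := by
      have h1 : θ j * (n i : ℝ) ≤ 1 * (n i : ℝ) :=
        mul_le_mul_of_nonneg_right (hθ1 j) (Nat.cast_nonneg _)
      have := hγ1 i
      linarith
    have : (Q j i : ℤ) < (n i : ℤ) + 1 := by
      rw [hQint]
      exact Int.floor_lt.mpr (by push_cast; exact hx)
    exact_mod_cast Int.lt_add_one_iff.mp this
  have hQmono : ∀ (j j' : Fin s), j ≤ j' → ∀ i, Q j i ≤ Q j' i := by
    intro j j' hjj i
    have : (Q j i : ℤ) ≤ (Q j' i : ℤ) := by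
      rw [hQint, hQint]
      apply Int.floor_le_floor
      have := hθmono hjj
      have : θ j * (n i : ℝ) ≤ θ j' * (n i : ℝ) :=
        mul_le_mul_of_nonneg_right this (Nat.cast_nonneg _)
      linarith
    exact_mod_cast this
  -- counting
  have countA : ∀ θ' : ℝ, 0 ≤ θ' → θ' ≤ 1 → ∀ i : Fin k,
      (⌊θ' * (n i : ℝ) + γ i⌋).toNat
        = ((Finset.Icc 1 (n i)).filter (fun t => τ (i, t) ≤ θ')).card := by
    intro θ' h0 h1 i
    by_cases hni : n i = 0
    · rw [hni]
      simp only [Nat.cast_zero, mul_zero, zero_add]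
      rw [Int.floor_eq_zero_iff.mpr ⟨hγ0 i, hγ1 i⟩]
      simp
    · have hnpos : (0:ℝ) < (n i : ℝ) := by
        exact_mod_cast Nat.pos_of_ne_zero hni
      set F : ℕ := (⌊θ' * (n i : ℝ) + γ i⌋).toNat with hFdef
      have hFint : (F : ℤ) = ⌊θ' * (n i : ℝ) + γ i⌋ := by
        rw [hFdef]
        exact Int.toNat_of_nonneg (Int.floor_nonneg.mpr (by positivity))
      have hFle : F ≤ n i := by
        have hx : θ' * (n i : ℝ) + γ i < (n i : ℝ) + 1 := by
          have : θ' * (n i : ℝ) ≤ 1 * (n i : ℝ) :=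
            mul_le_mul_of_nonneg_right h1 (Nat.cast_nonneg _)
          have := hγ1 i
          linarith
        have : (F : ℤ) < (n i : ℤ) + 1 := by
          rw [hFint]; exact Int.floor_lt.mpr (by push_cast; exact hx)
        exact_mod_cast Int.lt_add_one_iff.mp this
      have hfilter : (Finset.Icc 1 (n i)).filter (fun t => τ (i, t) ≤ θ')
          = Finset.Icc 1 F := by
        ext t
        simp only [Finset.mem_filter, Finset.mem_Icc]
        constructor
        · rintro ⟨⟨ht1, ht2⟩, hτt⟩
          refine ⟨ht1, ?_⟩
          rw [hτdef] at hτt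
          dsimp only at hτt
          rw [div_le_iff₀ hnpos] at hτt
          have : (t : ℝ) ≤ θ' * (n i : ℝ) + γ i := by linarith
          have : (t : ℤ) ≤ (F : ℤ) := by
            rw [hFint]
            exact Int.le_floor.mpr (by push_cast; exact this)
          exact_mod_cast this
        · rintro ⟨ht1, ht2⟩
          refine ⟨⟨ht1, le_trans ht2 hFle⟩, ?_⟩
          rw [hτdef]
          dsimp only
          rw [div_le_iff₀ hnpos]
          have h3 : (t : ℤ) ≤ ⌊θ' * (n i : ℝ) + γ i⌋ := by
            rw [← hFint]; exact_mod_cast ht2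
          have h4 : (t : ℝ) ≤ θ' * (n i : ℝ) + γ i := by
            have := Int.le_floor.mp h3
            push_cast at this
            exact this
          linarith
      rw [hfilter, Nat.card_Icc]
      omega
  have countAll : ∀ θ' : ℝ,
      ∑ i, ((Finset.Icc 1 (n i)).filter (fun t => τ (i, t) ≤ θ')).card
        = (J.filter (fun p => τ p ≤ θ')).card := by
    intro θ'
    rw [hJdef, Finset.filter_biUnion, Finset.card_biUnion]
    · refine Finset.sum_congr rfl (fun i _ => ?_)
      rw [Finset.filter_image, Finset.card_image_of_injective _ (fun a b h => by injection h)]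
    · intro x _ y _ hxy
      rw [Function.onFun, Finset.disjoint_left]
      rintro p hp hq
      simp only [Finset.mem_filter, Finset.mem_image] at hp hq
      obtain ⟨⟨t, _, rfl⟩, _⟩ := hp
      obtain ⟨⟨t', _, h2⟩, _⟩ := hq
      exact hxy (congrArg Prod.fst h2).symm
  have countT : ∀ θ' : ℝ,
      (J.filter (fun p => τ p ≤ θ')).card = (T.filter (fun x => x ≤ θ')).card := by
    intro θ'
    rw [hTdef, Finset.filter_image]
    rw [Finset.card_image_of_injOn (hτinj.mono (by exact_mod_cast Finset.filter_subset _ J))]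
  have countE : ∀ idx : Fin s, (T.filter (fun x => x ≤ e idx)).card = (idx : ℕ) + 1 := by
    intro idx
    have himg : Finset.univ.image (⇑e) = T := by
      apply Finset.eq_of_subset_of_card_le
      · intro x hx
        obtain ⟨j, _, rfl⟩ := Finset.mem_image.mp hx
        exact heT j
      · rw [Finset.card_image_of_injective _ e.injective, Finset.card_univ, Fintype.card_fin,
          hTcard]
    rw [← himg, Finset.filter_image, Finset.card_image_of_injective _ e.injective]
    have : Finset.univ.filter (fun x : Fin s => e x ≤ e idx) = Finset.Iic idx := by
      ext x
      simp [OrderEmbedding.le_iff_le]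
    rw [this, Fin.card_Iic]
  have hQsum : ∀ j : Fin s, ∑ i, Q j i = (j : ℕ) := by
    intro j
    rw [hQdef]
    dsimp only
    by_cases h : (j : ℕ) = 0
    · rw [h]
      rw [hθdef]
      dsimp only
      rw [dif_pos h]
      refine Finset.sum_eq_zero (fun i _ => ?_)
      rw [zero_mul, zero_add, Int.floor_eq_zero_iff.mpr ⟨hγ0 i, hγ1 i⟩]
      rfl
    · have hθj : θ j = e ⟨(j:ℕ) - 1, Nat.lt_of_le_of_lt (Nat.sub_le _ _) j.isLt⟩ := by
        rw [hθdef]; dsimp only; rw [dif_neg h]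
      calc ∑ i, (⌊θ j * (n i : ℝ) + γ i⌋).toNat
          = ∑ i, ((Finset.Icc 1 (n i)).filter (fun t => τ (i, t) ≤ θ j)).card :=
            Finset.sum_congr rfl (fun i _ => countA (θ j) (hθ0 j) (hθ1 j) i)
        _ = (J.filter (fun p => τ p ≤ θ j)).card := countAll (θ j)
        _ = (T.filter (fun x => x ≤ θ j)).card := countT (θ j)
        _ = (j : ℕ) := by
            rw [hθj, countE]
            exact Nat.succ_pred_eq_of_pos (Nat.pos_of_ne_zero h)
  -- values of the partial sums under A
  set v : Fin s → Fin m → ℤ := fun j => A.mulVec (fun i => (Q j i : ℤ)) with hvdef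
  set Pos : Fin m → ℝ := fun ℓ => ∑ i, max ((A ℓ i : ℝ)) 0 with hPosdef
  set Neg : Fin m → ℝ := fun ℓ => ∑ i, max (-(A ℓ i : ℝ)) 0 with hNegdef
  set C : Fin m → ℝ := fun ℓ => ∑ i, (A ℓ i : ℝ) * γ i with hCdef
  have hAnR : ∀ ℓ, ∑ i, (A ℓ i : ℝ) * (n i : ℝ) = 0 := by
    intro ℓ
    have h' : (∑ i, A ℓ i * (n i : ℤ)) = 0 := by
      simpa [Matrix.mulVec, dotProduct] using congrFun hAn ℓ
    have h2 := congrArg (fun z : ℤ => (z : ℝ)) h'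
    push_cast at h2
    simpa using h2
  have hbox : ∀ (j : Fin s) ℓ,
      C ℓ - Pos ℓ ≤ ((v j ℓ : ℤ) : ℝ) ∧ ((v j ℓ : ℤ) : ℝ) ≤ C ℓ + Neg ℓ := by
    intro j ℓ
    have hvsum : ((v j ℓ : ℤ) : ℝ) = ∑ i, (A ℓ i : ℝ) * ((Q j i : ℤ) : ℝ) := by
      rw [hvdef]
      dsimp only
      simp only [Matrix.mulVec, dotProduct]
      push_cast
      ring
    have hterm : ∀ i : Fin k,
        -(max ((A ℓ i : ℝ)) 0) ≤ (A ℓ i : ℝ) * (((Q j i : ℤ) : ℝ) - (θ j * (n i : ℝ) + γ i))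
        ∧ (A ℓ i : ℝ) * (((Q j i : ℤ) : ℝ) - (θ j * (n i : ℝ) + γ i)) ≤ max (-(A ℓ i : ℝ)) 0 := by
      intro i
      have hf1 : ((Q j i : ℤ) : ℝ) ≤ θ j * (n i : ℝ) + γ i := by
        rw [hQint]; exact Int.floor_le _
      have hf2 : θ j * (n i : ℝ) + γ i - 1 < ((Q j i : ℤ) : ℝ) := by
        rw [hQint]; exact Int.sub_one_lt_floor _
      exact pottier_term_bound _ _ _ hf1 hf2
    have hsx : ∑ i, (A ℓ i : ℝ) * (θ j * (n i : ℝ) + γ i) = C ℓ := by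
      have hexp : ∑ i, (A ℓ i : ℝ) * (θ j * (n i : ℝ) + γ i)
          = θ j * (∑ i, (A ℓ i : ℝ) * (n i : ℝ)) + ∑ i, (A ℓ i : ℝ) * γ i := by
        rw [Finset.mul_sum, ← Finset.sum_add_distrib]
        exact Finset.sum_congr rfl (fun i _ => by ring)
      rw [hexp, hAnR ℓ, mul_zero, zero_add, hCdef]
    have hdiff : ((v j ℓ : ℤ) : ℝ) - C ℓ
        = ∑ i, (A ℓ i : ℝ) * (((Q j i : ℤ) : ℝ) - (θ j * (n i : ℝ) + γ i)) := by
      rw [hvsum, ← hsx, ← Finset.sum_sub_distrib]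
      exact Finset.sum_congr rfl (fun i _ => by ring)
    constructor
    · have hlow := Finset.sum_le_sum (fun i (_ : i ∈ Finset.univ) => (hterm i).1)
      rw [← hdiff] at hlow
      have hnegsum : ∑ i, -(max ((A ℓ i : ℝ)) 0) = -(Pos ℓ) := by
        rw [hPosdef]
        dsimp only
        rw [← Finset.sum_neg_distrib]
      rw [hnegsum] at hlow
      linarith
    · have hhigh := Finset.sum_le_sum (fun i (_ : i ∈ Finset.univ) => (hterm i).2)
      rw [← hdiff] at hhigh
      have hnegsum : ∑ i, max (-(A ℓ i : ℝ)) 0 = Neg ℓ := by rw [hNegdef]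
      rw [hnegsum] at hhigh
      linarith
  have hPN : ∀ ℓ, Pos ℓ + Neg ℓ ≤ ((k * M : ℕ) : ℝ) := by
    intro ℓ
    rw [hPosdef, hNegdef]
    dsimp only
    rw [← Finset.sum_add_distrib]
    have hle : ∀ i ∈ Finset.univ, max ((A ℓ i : ℝ)) 0 + max (-(A ℓ i : ℝ)) 0 ≤ (M : ℝ) := by
      intro i _
      have habs : |(A ℓ i : ℝ)| ≤ (M : ℝ) := by
        have h2 : ((A ℓ i).natAbs : ℝ) ≤ (M : ℝ) := by exact_mod_cast hAbs ℓ i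
        rw [Nat.cast_natAbs] at h2
        rwa [Int.cast_abs] at h2
      rcases le_total 0 ((A ℓ i : ℝ)) with ha | ha
      · rw [max_eq_left ha, max_eq_right (by linarith : -(A ℓ i:ℝ) ≤ 0)]
        rw [abs_of_nonneg ha] at habs
        linarith
      · rw [max_eq_right ha, max_eq_left (by linarith : (0:ℝ) ≤ -(A ℓ i:ℝ))]
        rw [abs_of_nonpos ha] at habs
        linarith
    calc ∑ i, (max ((A ℓ i : ℝ)) 0 + max (-(A ℓ i : ℝ)) 0) ≤ ∑ _i : Fin k, (M : ℝ) :=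
          Finset.sum_le_sum hle
      _ = ((k * M : ℕ) : ℝ) := by
          rw [Finset.sum_const, Finset.card_univ, Fintype.card_fin]
          push_cast
          ring
  set bI : Fin m → ℤ := fun ℓ => ⌈C ℓ - Pos ℓ⌉ with hbIdef
  have hvb : ∀ (j : Fin s) ℓ, 0 ≤ v j ℓ - bI ℓ ∧ v j ℓ - bI ℓ ≤ ((k * M : ℕ) : ℤ) := by
    intro j ℓ
    obtain ⟨hlo, hhi⟩ := hbox j ℓ
    constructor
    · have hble : bI ℓ ≤ v j ℓ := by
        rw [hbIdef]
        exact Int.ceil_le.mpr hlo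
      omega
    · have h2 : C ℓ - Pos ℓ ≤ (bI ℓ : ℝ) := by
        rw [hbIdef]
        exact Int.le_ceil _
      have h3 : ((v j ℓ - bI ℓ : ℤ) : ℝ) ≤ Pos ℓ + Neg ℓ := by
        push_cast
        linarith
      have h4 : ((v j ℓ - bI ℓ : ℤ) : ℝ) ≤ ((k * M : ℕ) : ℝ) := le_trans h3 (hPN ℓ)
      exact_mod_cast h4
  obtain ⟨R, hRcard, hRspan⟩ := pottier_row_lemma A r hr
  set F : Fin s → ({ℓ // ℓ ∈ R} → Fin (k * M + 1)) := fun j ℓ =>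
    ⟨(v j ℓ.1 - bI ℓ.1).toNat, by
      have h := hvb j ℓ.1
      have : ((k * M : ℕ) : ℤ) = (k * M : ℤ) := by push_cast; ring
      omega⟩ with hFdef
  have key : ∀ j j' : Fin s, j < j' → (∀ ℓ ∈ R, v j ℓ = v j' ℓ) → False := by
    intro j j' hjj hveq
    set dn : Fin k → ℕ := fun i => Q j' i - Q j i with hdndef
    have hQle : ∀ i, Q j i ≤ Q j' i := hQmono j j' (le_of_lt hjj)
    have hdcast : ∀ i, ((dn i : ℤ)) = (Q j' i : ℤ) - (Q j i : ℤ) := by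
      intro i
      rw [hdndef]
      exact Nat.cast_sub (hQle i)
    have hmv0 : A.mulVec (fun i => (dn i : ℤ)) = 0 := by
      apply hRspan
      intro ℓ hℓ
      have hlin : A.mulVec (fun i => (dn i : ℤ)) ℓ = v j' ℓ - v j ℓ := by
        rw [hvdef]
        dsimp only
        simp only [Matrix.mulVec, dotProduct]
        rw [← Finset.sum_sub_distrib]
        refine Finset.sum_congr rfl (fun i _ => ?_)
        rw [hdcast i]
        ring
      rw [hlin, hveq ℓ hℓ, sub_self]
    have hsumd : ∑ i, dn i = (j' : ℕ) - (j : ℕ) := by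
      rw [hdndef]
      dsimp only
      rw [Finset.sum_tsub_distrib _ (fun i _ => hQle i), hQsum, hQsum]
    have hd0 : dn ≠ 0 := by
      intro h
      rw [h] at hsumd
      simp only [Pi.zero_apply, Finset.sum_const_zero] at hsumd
      have hlt : (j : ℕ) < (j' : ℕ) := hjj
      omega
    have hdle : dn ≤ n := by
      intro i
      calc dn i ≤ Q j' i := Nat.sub_le _ _
        _ ≤ n i := hQn j' i
    have hnled := hminle ⟨hd0, hmv0⟩ hdle
    have hsled : s ≤ ∑ i, dn i := by
      rw [hsdef]
      exact Finset.sum_le_sum (fun i _ => hnled i)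
    rw [hsumd] at hsled
    have hj's := j'.isLt
    have hlt : (j : ℕ) < (j' : ℕ) := hjj
    omega
  have hFinj : Function.Injective F := by
    intro j j' hFjj
    by_contra hne
    have hveq : ∀ ℓ ∈ R, v j ℓ = v j' ℓ := by
      intro ℓ hℓ
      have h1 := congrFun hFjj ⟨ℓ, hℓ⟩
      rw [hFdef] at h1
      dsimp only at h1
      have h2 : (v j ℓ - bI ℓ).toNat = (v j' ℓ - bI ℓ).toNat := congrArg Fin.val h1
      have h3 := (hvb j ℓ).1
      have h4 := (hvb j' ℓ).1
      omega
    rcases lt_or_gt_of_ne hne with h | h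
    · exact key j j' h hveq
    · exact key j' j h (fun ℓ hℓ => (hveq ℓ hℓ).symm)
  have hcount : s ≤ (k * M + 1) ^ R.card := by
    calc s = Fintype.card (Fin s) := (Fintype.card_fin s).symm
      _ ≤ Fintype.card ({ℓ // ℓ ∈ R} → Fin (k * M + 1)) :=
          Fintype.card_le_of_injective F hFinj
      _ = (k * M + 1) ^ R.card := by
          rw [Fintype.card_fun, Fintype.card_fin, Fintype.card_coe]
  have hfinal : (k * M + 1) ^ R.card ≤ (1 + k * M) ^ r := by
    rw [Nat.add_comm 1 (k * M)]
    exact Nat.pow_le_pow_right (Nat.succ_le_succ (Nat.zero_le _)) hRcard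
  exact le_trans hcount hfinal
end

section
/- Let A be an m × k integer matrix of rank r and let b ∈ ℤ^m. Then every minimal element m (with respect to the componentwise order on ℕ^k) of the solution set {x ∈ ℕ^k : A·x = b} satisfies ‖m‖₁ ≤ (1 + k·‖A‖∞ + ‖b‖∞)^{r+1}. -/
open Matrix Module

noncomputable section AuxMinSol

open Classical in
/-- support of a rational vector -/
def qsupp {k : ℕ} (x : Fin k → ℚ) : Finset (Fin k) :=
  Finset.univ.filter (fun j => x j ≠ 0)

lemma mem_qsupp {k : ℕ} {x : Fin k → ℚ} {j : Fin k} : j ∈ qsupp x ↔ x j ≠ 0 := by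
  classical
  simp [qsupp]

lemma aux_binom (a c : ℕ) : ∀ n : ℕ, a ^ (n+1) + (n+1) * a ^ n * c ≤ (a + c) ^ (n+1) := by
  intro n
  induction n with
  | zero => simp
  | succ n ih =>
    have h1 : (a + c) ^ (n+2) = (a + c) * (a + c) ^ (n+1) := by ring
    have h2 : (a + c) * (a ^ (n+1) + (n+1) * a ^ n * c) ≤ (a + c) * (a + c) ^ (n+1) :=
      Nat.mul_le_mul_left _ ih
    calc a ^ (n+2) + (n+2) * a ^ (n+1) * c
        ≤ (a + c) * (a ^ (n+1) + (n+1) * a ^ n * c) := by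
          have hid : (a+c) * (a^(n+1) + (n+1)*a^n*c)
              = a^(n+2) + (n+2)*a^(n+1)*c + (n+1)*a^n*c^2 := by ring
          omega
      _ ≤ (a + c) ^ (n+2) := by rw [h1]; exact h2

lemma aux_fact_pow : ∀ n : ℕ, (n+1).factorial ≤ (n+1) ^ n := by
  intro n
  induction n with
  | zero => simp
  | succ n ih =>
    calc (n+2).factorial = (n+2) * (n+1).factorial := rfl
      _ ≤ (n+2) * (n+1) ^ n := Nat.mul_le_mul_left _ ih
      _ ≤ (n+2) * (n+2) ^ n := by
          exact Nat.mul_le_mul_left _ (Nat.pow_le_pow_left (by omega) n)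
      _ = (n+2) ^ (n+1) := by ring

lemma aux_nat_main (k M B r : ℕ) (hM : 1 ≤ M) (hB : 1 ≤ B) (hr : 1 ≤ r) (hrk : r ≤ k) :
    r * r.factorial * M ^ (r-1) * B + (k - r) * ((r+1) * r.factorial * M ^ r)
      ≤ (1 + k * M + B) ^ (r+1) := by
  have hbase : (k*M) ^ (r+1) + (r+1) * (k*M) ^ r * (B+1) ≤ (k*M + (B+1)) ^ (r+1) :=
    aux_binom (k*M) (B+1) r
  have hbase' : (k*M + (B+1)) ^ (r+1) = (1 + k*M + B) ^ (r+1) := by ring_nf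
  -- term 1
  obtain ⟨r', rfl⟩ : ∃ r', r = r' + 1 := ⟨r - 1, by omega⟩
  have hfact : (r'+1).factorial ≤ (r'+1) ^ r' := aux_fact_pow r'
  have t1 : (r'+1) * (r'+1).factorial * M ^ r' * B ≤ (r'+1+1) * (k*M) ^ (r'+1) * (B+1) := by
    have h1 : (r'+1) * (r'+1).factorial ≤ (r'+1) * (r'+1)^r' := Nat.mul_le_mul_left _ hfact
    have h2 : (r'+1) * (r'+1)^r' = (r'+1)^(r'+1) := by ring
    have h3 : (r'+1)^(r'+1) ≤ k^(r'+1) := Nat.pow_le_pow_left (by omega) _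
    have h4 : (k*M)^(r'+1) = k^(r'+1) * M^(r'+1) := by rw [Nat.mul_pow]
    have h5 : M ^ r' ≤ M ^ (r'+1) := Nat.pow_le_pow_right hM (by omega)
    calc (r'+1) * (r'+1).factorial * M ^ r' * B
        ≤ k^(r'+1) * M^(r'+1) * B := by
          exact Nat.mul_le_mul (Nat.mul_le_mul (h1.trans (h2.le.trans h3) : _) h5) le_rfl
      _ ≤ (r'+1+1) * (k*M) ^ (r'+1) * (B+1) := by
          rw [h4]
          calc k^(r'+1) * M^(r'+1) * B ≤ (k^(r'+1) * M^(r'+1)) * (B+1) := by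
                exact Nat.mul_le_mul le_rfl (by omega)
            _ ≤ (r'+1+1) * (k^(r'+1) * M^(r'+1)) * (B+1) := by
                exact Nat.mul_le_mul (Nat.le_mul_of_pos_left _ (by omega)) le_rfl
  -- term 2
  set r := r' + 1
  have t2 : (k - r) * ((r+1) * r.factorial * M ^ r) ≤ (k*M) ^ (r+1) := by
    rcases Nat.lt_or_ge r k with hlt | hge
    · have hfac2 : (r+1).factorial ≤ (r+1)^r := aux_fact_pow r
      have h6 : (r+1) * r.factorial = (r+1).factorial := (Nat.factorial_succ r).symm
      have h7 : (r+1)^r ≤ k^r := Nat.pow_le_pow_left (by omega) _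
      have : (k - r) * ((r+1) * r.factorial * M ^ r) ≤ k * (k^r * M^r) := by
        apply Nat.mul_le_mul (by omega)
        rw [h6]
        exact Nat.mul_le_mul (hfac2.trans h7) le_rfl
      calc (k - r) * ((r+1) * r.factorial * M ^ r) ≤ k * (k^r * M^r) := this
        _ = k^(r+1) * M^r := by ring
        _ ≤ k^(r+1) * M^(r+1) := Nat.mul_le_mul le_rfl (Nat.pow_le_pow_right hM (by omega))
        _ = (k*M)^(r+1) := by rw [Nat.mul_pow]
    · have : k - r = 0 := by omega
      simp [this]
  have t1' : r * r.factorial * M ^ (r-1) * B ≤ (r+1) * (k*M) ^ r * (B+1) := by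
    rw [show r - 1 = r' from Nat.add_sub_cancel r' 1]; simpa using t1
  calc r * r.factorial * M ^ (r-1) * B + (k - r) * ((r+1) * r.factorial * M ^ r)
      ≤ (r+1) * (k*M) ^ r * (B+1) + (k*M) ^ (r+1) := Nat.add_le_add t1' t2
    _ ≤ (k*M + (B+1)) ^ (r+1) := by omega
    _ = (1 + k*M + B) ^ (r+1) := hbase'

lemma abs_det_le {s : ℕ} (N : Matrix (Fin s) (Fin s) ℚ) (f : Fin s → ℚ)
    (hf : ∀ j, 0 ≤ f j) (h : ∀ i j, |N i j| ≤ f j) :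
    |N.det| ≤ (s.factorial : ℚ) * ∏ j, f j := by
  rw [Matrix.det_apply]
  calc |∑ σ : Equiv.Perm (Fin s), Equiv.Perm.sign σ • ∏ i, N (σ i) i|
      ≤ ∑ σ : Equiv.Perm (Fin s), |Equiv.Perm.sign σ • ∏ i, N (σ i) i| :=
        Finset.abs_sum_le_sum_abs _ _
    _ ≤ ∑ _σ : Equiv.Perm (Fin s), ∏ j, f j := by
        apply Finset.sum_le_sum
        intro σ _
        have h1 : |Equiv.Perm.sign σ • ∏ i, N (σ i) i| = |∏ i, N (σ i) i| := by
          rcases Int.units_eq_one_or (Equiv.Perm.sign σ) with hs | hs <;>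
            simp [hs, abs_neg]
        rw [h1, Finset.abs_prod]
        apply Finset.prod_le_prod
        · intro i _; exact abs_nonneg _
        · intro i _; exact h (σ i) i
    _ = (s.factorial : ℚ) * ∏ j, f j := by
        rw [Finset.sum_const, Finset.card_univ, Fintype.card_perm, Fintype.card_fin,
          nsmul_eq_mul]

lemma card_le_rank {m k : ℕ} (Aq : Matrix (Fin m) (Fin k) ℚ) (S : Finset (Fin k))
    (h : LinearIndependent ℚ (fun j : {j // j ∈ S} => Aqᵀ (j : Fin k))) :
    S.card ≤ Aq.rank := by
  classical
  let V := Submodule.span ℚ (Set.range Aqᵀ)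
  let v : {j // j ∈ S} → V := fun j => ⟨Aqᵀ (j : Fin k), Submodule.subset_span ⟨j, rfl⟩⟩
  have hv : LinearIndependent ℚ v := by
    apply LinearIndependent.of_comp (V.subtype)
    exact h
  have := hv.fintype_card_le_finrank
  rw [Fintype.card_coe] at this
  rwa [Matrix.rank_eq_finrank_span_cols]

lemma exists_invertible_rows {m s : ℕ} (N : Matrix (Fin m) (Fin s) ℚ)
    (h : LinearIndependent ℚ (fun u : Fin s => Nᵀ u)) :
    ∃ f : Fin s → Fin m, IsUnit (N.submatrix f id) := by
  classical
  -- N has rank s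
  have hinj : Function.Injective N.mulVec := Matrix.mulVec_injective_iff.mpr h
  have hrank : N.rank = s := by
    have : Function.Injective N.mulVecLin := hinj
    rw [Matrix.rank, LinearMap.finrank_range_of_inj this, finrank_pi]
    simp
  have hrankT : Nᵀ.rank = s := by rw [Matrix.rank_transpose]; exact hrank
  have hspan : Submodule.span ℚ (Set.range (fun i : Fin m => N i)) = ⊤ := by
    have h1 : Nᵀ.rank = finrank ℚ (Submodule.span ℚ (Set.range Nᵀᵀ)) :=
      Matrix.rank_eq_finrank_span_cols Nᵀ
    rw [transpose_transpose] at h1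
    apply Submodule.eq_top_of_finrank_eq
    rw [← h1, hrankT, finrank_pi]
    simp
  obtain ⟨t, hts, hspan2, hli⟩ := exists_linearIndependent ℚ (Set.range (fun i : Fin m => N i))
  rw [hspan] at hspan2
  have htfin : t.Finite := hli.setFinite
  haveI : Fintype t := htfin.fintype
  have hcard : t.toFinset.card = s := by
    have h2 := finrank_span_set_eq_card hli
    rw [hspan2] at h2
    rw [← h2, finrank_top, finrank_pi]
    simp
  -- choice of row indices
  have hchoice : ∀ v : t, ∃ i : Fin m, N i = (v : Fin s → ℚ) := fun v => hts v.2
  choose g hg using hchoice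
  have hcard2 : Fintype.card t = s := by rwa [Set.toFinset_card] at hcard
  let e : Fin s ≃ t := (Fintype.equivFinOfCardEq hcard2).symm
  refine ⟨g ∘ e, ?_⟩
  rw [← Matrix.linearIndependent_rows_iff_isUnit]
  have : (fun u : Fin s => (N.submatrix (g ∘ e) id) u) = fun u => ((e u : Fin s → ℚ)) := by
    funext u
    ext j
    show N ((g ∘ e) u) (id j) = _
    rw [Function.comp_apply, hg (e u)]
    rfl
  show LinearIndependent ℚ (fun u : Fin s => (N.submatrix (g ∘ e) id) u); rw [this]
  exact hli.comp e (Equiv.injective e)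

lemma caratheodory_cone {m k : ℕ} (Aq : Matrix (Fin m) (Fin k) ℚ) (r : ℕ)
    (hr : Aq.rank = r) :
    ∀ (n : ℕ) (t : Fin n → ℚ) (c : Fin n → Fin k → ℚ),
      (∀ u, 0 ≤ t u) → (∀ u, Aq.mulVec (c u) = 0) →
      ∃ (n' : ℕ) (t' : Fin n' → ℚ) (c' : Fin n' → Fin k → ℚ),
        n' ≤ k - r ∧ (∀ u, 0 ≤ t' u) ∧ (∀ u, ∃ v, c' u = c v) ∧
        ∑ u, t' u • c' u = ∑ u, t u • c u := by
  classical
  have hker : finrank ℚ (LinearMap.ker Aq.mulVecLin) = k - r := by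
    have h1 : finrank ℚ (LinearMap.range Aq.mulVecLin)
        + finrank ℚ (LinearMap.ker Aq.mulVecLin) = finrank ℚ (Fin k → ℚ) :=
      LinearMap.finrank_range_add_finrank_ker _
    have h2 : Aq.rank = finrank ℚ (LinearMap.range Aq.mulVecLin) := rfl
    rw [← h2, hr, finrank_pi] at h1
    simp at h1
    omega
  intro n
  induction n using Nat.strong_induction_on with
  | _ n ih =>
    intro t c ht hc
    rcases le_or_gt n (k - r) with hn | hn
    · exact ⟨n, t, c, hn, ht, fun u => ⟨u, rfl⟩, rfl⟩
    -- n > k - r : find a dependency among the c's inside the kernel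
    · have hn1 : 1 ≤ n := by omega
      let K := LinearMap.ker Aq.mulVecLin
      let cK : Fin n → K := fun u => ⟨c u, by
        rw [LinearMap.mem_ker, Matrix.mulVecLin_apply, hc u]⟩
      have hdep : ¬ LinearIndependent ℚ cK := by
        intro hli
        have := hli.fintype_card_le_finrank
        rw [Fintype.card_fin, hker] at this
        omega
      obtain ⟨γ, hγsum, u₁, hγu₁⟩ := Fintype.not_linearIndependent_iff.mp hdep
      have hγc : ∑ u, γ u • c u = 0 := by
        have := congrArg (Subtype.val) hγsum
        simpa using this
      -- wlog γ has a positive entry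
      have hmain : ∀ γ : Fin n → ℚ, (∑ u, γ u • c u = 0) → (∃ u₀, 0 < γ u₀) →
          ∃ (n' : ℕ) (t' : Fin n' → ℚ) (c' : Fin n' → Fin k → ℚ),
            n' ≤ k - r ∧ (∀ u, 0 ≤ t' u) ∧ (∀ u, ∃ v, c' u = c v) ∧
            ∑ u, t' u • c' u = ∑ u, t u • c u := by
        intro γ hγc ⟨u₀, hu₀⟩
        let P : Finset (Fin n) := Finset.univ.filter (fun u => 0 < γ u)
        have hPne : P.Nonempty := ⟨u₀, by simp [P, hu₀]⟩
        obtain ⟨w, hwP, hwmin⟩ := Finset.exists_min_image P (fun u => t u / γ u) hPne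
        have hγw : 0 < γ w := by simpa [P] using hwP
        set ts := t w / γ w with hts
        have hts0 : 0 ≤ ts := div_nonneg (ht w) hγw.le
        have ht'' : ∀ u, 0 ≤ t u - ts * γ u := by
          intro u
          rcases le_or_gt (γ u) 0 with hγu | hγu
          · have : ts * γ u ≤ 0 := mul_nonpos_of_nonneg_of_nonpos hts0 hγu
            have := ht u; linarith
          · have huP : u ∈ P := by simp [P, hγu]
            have := hwmin u huP
            rw [div_le_div_iff₀ hγw hγu] at this
            have : ts * γ u ≤ t u := by
              rw [hts, div_mul_eq_mul_div, div_le_iff₀ hγw]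
              linarith [this]
            linarith
        have hw0 : t w - ts * γ w = 0 := by
          rw [hts, div_mul_cancel₀ _ (ne_of_gt hγw), sub_self]
        have hsum : ∑ u, (t u - ts * γ u) • c u = ∑ u, t u • c u := by
          rw [Finset.sum_congr rfl (fun u _ => sub_smul (t u) (ts * γ u) (c u))]
          rw [Finset.sum_sub_distrib]
          have : ∑ u, (ts * γ u) • c u = ts • ∑ u, γ u • c u := by
            rw [Finset.smul_sum]
            exact Finset.sum_congr rfl (fun u _ => by rw [smul_smul])
          rw [this, hγc, smul_zero, sub_zero]
        -- remove index w
        obtain ⟨n₁, rfl⟩ : ∃ n₁, n = n₁ + 1 := ⟨n - 1, by omega⟩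
        have hsplit : ∑ u, (t u - ts * γ u) • c u
            = ∑ v : Fin n₁, (t (w.succAbove v) - ts * γ (w.succAbove v)) • c (w.succAbove v) := by
          rw [Fin.sum_univ_succAbove _ w, hw0, zero_smul, zero_add]
        obtain ⟨n', t', c', h1, h2, h3, h4⟩ :=
          ih n₁ (by omega) (fun v => t (w.succAbove v) - ts * γ (w.succAbove v))
            (fun v => c (w.succAbove v)) (fun v => ht'' _) (fun v => hc _)
        refine ⟨n', t', c', h1, h2, fun u => ?_, ?_⟩
        · obtain ⟨v, hv⟩ := h3 u
          exact ⟨w.succAbove v, hv⟩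
        · rw [h4, ← hsplit, hsum]
      rcases lt_or_ge 0 (γ u₁) with hpos | hneg
      · exact hmain γ hγc ⟨u₁, hpos⟩
      · refine hmain (-γ) ?_ ⟨u₁, ?_⟩
        · rw [← neg_zero, ← hγc, ← Finset.sum_neg_distrib]
          exact Finset.sum_congr rfl (fun u _ => by simp [neg_smul])
        · have : γ u₁ < 0 := lt_of_le_of_ne hneg hγu₁
          simpa using this

lemma sum_le_of_indep {m k : ℕ} (A : Matrix (Fin m) (Fin k) ℤ) (bq : Fin m → ℚ)
    (M B r : ℕ) (hM : 1 ≤ M)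
    (hA : ∀ i j, |((A i j : ℚ))| ≤ (M:ℚ)) (hb : ∀ i, |bq i| ≤ (B:ℚ))
    (hr : (A.map ((↑) : ℤ → ℚ)).rank = r)
    (x : Fin k → ℚ) (hx0 : ∀ j, 0 ≤ x j)
    (hxb : (A.map ((↑) : ℤ → ℚ)).mulVec x = bq)
    (hli : LinearIndependent ℚ
      (fun j : {j // j ∈ qsupp x} => (A.map ((↑) : ℤ → ℚ))ᵀ (j : Fin k))) :
    ∑ j, x j ≤ ((r * r.factorial * M ^ (r-1) * B : ℕ) : ℚ) := by
  classical
  set Aq := A.map ((↑) : ℤ → ℚ) with hAq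
  set T := qsupp x with hT
  set p := T.card with hp
  have hpr : p ≤ r := by rw [← hr]; exact card_le_rank Aq T hli
  let e : {j // j ∈ T} ≃ Fin p := T.equivFin
  let N : Matrix (Fin m) (Fin p) ℚ := Matrix.of fun i u => Aq i ((e.symm u) : Fin k)
  have hNli : LinearIndependent ℚ (fun u : Fin p => Nᵀ u) := by
    have := hli.comp e.symm e.symm.injective
    exact this
  obtain ⟨f, hf⟩ := exists_invertible_rows N hNli
  set Q := N.submatrix f id with hQ
  -- integrality of Q
  let Qz : Matrix (Fin p) (Fin p) ℤ := Matrix.of fun u v => A (f u) ((e.symm v) : Fin k)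
  have hQz : Q = Qz.map ((↑) : ℤ → ℚ) := by
    ext u v
    simp [hQ, Qz, N, Matrix.submatrix_apply, Matrix.map_apply, hAq]
  have hdet : Q.det = ((Qz.det : ℤ) : ℚ) := by
    rw [hQz]
    have h0 : Qz.map ((↑) : ℤ → ℚ) = (Int.castRingHom ℚ).mapMatrix Qz := rfl
    rw [h0, ← RingHom.map_det]
    rfl
  have hdetQ : Q.det ≠ 0 := by
    intro h0
    have := (Matrix.isUnit_iff_isUnit_det Q).mp hf
    rw [h0] at this
    exact (not_isUnit_zero : ¬ IsUnit (0:ℚ)) this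
  have hdet1 : (1:ℚ) ≤ |Q.det| := by
    have hz : Qz.det ≠ 0 := by
      intro h0; rw [hdet, h0] at hdetQ; exact hdetQ (by norm_num)
    have : (1:ℤ) ≤ |Qz.det| := Int.one_le_abs hz
    rw [hdet, ← Int.cast_abs]
    exact_mod_cast this
  set xs : Fin p → ℚ := fun u => x ((e.symm u) : Fin k) with hxs
  set w : Fin p → ℚ := fun u => bq (f u) with hw
  -- Q * xs = w
  have hQxs : Q.mulVec xs = w := by
    funext u
    have hstep : ∀ i : Fin m, ∑ v : Fin p, Aq i ((e.symm v) : Fin k) * x ((e.symm v) : Fin k)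
        = bq i := by
      intro i
      have h1 : ∑ v : Fin p, Aq i ((e.symm v) : Fin k) * x ((e.symm v) : Fin k)
          = ∑ j : {j // j ∈ T}, Aq i (j : Fin k) * x (j : Fin k) :=
        Equiv.sum_comp e.symm (fun j => Aq i (j : Fin k) * x (j : Fin k))
      have h2 : ∑ j : {j // j ∈ T}, Aq i (j : Fin k) * x (j : Fin k)
          = ∑ j ∈ T, Aq i j * x j := T.sum_coe_sort (fun j => Aq i j * x j)
      have h3 : ∑ j ∈ T, Aq i j * x j = ∑ j : Fin k, Aq i j * x j := by
        apply Finset.sum_subset (Finset.subset_univ T)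
        intro j _ hj
        have : x j = 0 := by
          by_contra hxj
          exact hj (mem_qsupp.mpr hxj)
        rw [this, mul_zero]
      have h4 : ∑ j : Fin k, Aq i j * x j = (Aq.mulVec x) i := rfl
      rw [h1, h2, h3, h4, hxb]
    calc (Q.mulVec xs) u = ∑ v : Fin p, Aq (f u) ((e.symm v) : Fin k) * x ((e.symm v) : Fin k) := by
          simp [Matrix.mulVec, dotProduct, hQ, Matrix.submatrix_apply, N, hxs]
      _ = bq (f u) := hstep (f u)
  have hcramer : Q.det • xs = Q.cramer w := by
    rw [← hQxs, Matrix.cramer_eq_adjugate_mulVec, Matrix.mulVec_mulVec, Matrix.adjugate_mul,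
      Matrix.smul_mulVec, Matrix.one_mulVec]
  -- entrywise bound
  have hxsle : ∀ u, |xs u| ≤ (p.factorial : ℚ) * ((B:ℚ) * (M:ℚ) ^ (p-1)) := by
    intro u
    have h5 : Q.det * xs u = (Q.updateCol u w).det := by
      have := congrFun hcramer u
      simpa [Matrix.cramer_apply] using this
    have hbound : |(Q.updateCol u w).det|
        ≤ (p.factorial : ℚ) * ∏ j, (if j = u then (B:ℚ) else (M:ℚ)) := by
      apply abs_det_le
      · intro j; split <;> positivity
      · intro i j
        rw [Matrix.updateCol_apply]
        split
        · exact hb (f i)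
        · have : |Q i j| ≤ (M:ℚ) := by
            simp only [hQ, Matrix.submatrix_apply, N, Matrix.of_apply, hAq, Matrix.map_apply]
            exact hA (f i) _
          exact this
    have hprod : ∏ j, (if j = u then (B:ℚ) else (M:ℚ)) = (B:ℚ) * (M:ℚ) ^ (p-1) := by
      rw [← Finset.mul_prod_erase Finset.univ _ (Finset.mem_univ u)]
      simp only [if_pos rfl]
      congr 1
      rw [Finset.prod_congr rfl (fun j hj => if_neg (Finset.ne_of_mem_erase hj)),
        Finset.prod_const, Finset.card_erase_of_mem (Finset.mem_univ u), Finset.card_univ,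
        Fintype.card_fin]
    calc |xs u| ≤ |Q.det| * |xs u| := le_mul_of_one_le_left (abs_nonneg _) hdet1
      _ = |Q.det * xs u| := (abs_mul _ _).symm
      _ = |(Q.updateCol u w).det| := by rw [h5]
      _ ≤ (p.factorial : ℚ) * ((B:ℚ) * (M:ℚ) ^ (p-1)) := by rw [← hprod]; exact hbound
  -- sum up
  have hsum : ∑ j, x j = ∑ u : Fin p, xs u := by
    have h1 : ∑ u : Fin p, xs u = ∑ j : {j // j ∈ T}, x (j : Fin k) :=
      Equiv.sum_comp e.symm (fun j : {j // j ∈ T} => x (j : Fin k))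
    have h2 : ∑ j : {j // j ∈ T}, x (j : Fin k) = ∑ j ∈ T, x j := T.sum_coe_sort x
    have h3 : ∑ j ∈ T, x j = ∑ j, x j := by
      apply Finset.sum_subset (Finset.subset_univ T)
      intro j _ hj
      by_contra hxj
      exact hj (mem_qsupp.mpr hxj)
    rw [h1, h2, h3]
  rw [hsum]
  have h6 : ∑ u : Fin p, xs u ≤ ∑ _u : Fin p, (p.factorial : ℚ) * ((B:ℚ) * (M:ℚ) ^ (p-1)) :=
    Finset.sum_le_sum fun u _ => (le_abs_self _).trans (hxsle u)
  have h7 : ∑ _u : Fin p, (p.factorial : ℚ) * ((B:ℚ) * (M:ℚ) ^ (p-1))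
      = ((p * (p.factorial * (B * M ^ (p-1))) : ℕ) : ℚ) := by
    rw [Finset.sum_const, Finset.card_univ, Fintype.card_fin, nsmul_eq_mul]
    push_cast
    ring
  have h8 : (p * (p.factorial * (B * M ^ (p-1))) : ℕ) ≤ r * r.factorial * M ^ (r-1) * B := by
    have hf1 : p.factorial ≤ r.factorial := Nat.factorial_le hpr
    have hf2 : M ^ (p-1) ≤ M ^ (r-1) := Nat.pow_le_pow_right hM (by omega)
    calc p * (p.factorial * (B * M ^ (p-1)))
        ≤ r * (r.factorial * (B * M ^ (r-1))) :=
          Nat.mul_le_mul hpr (Nat.mul_le_mul hf1 (Nat.mul_le_mul le_rfl hf2))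
      _ = r * r.factorial * M ^ (r-1) * B := by ring
  calc ∑ u : Fin p, xs u ≤ ((p * (p.factorial * (B * M ^ (p-1))) : ℕ) : ℚ) := by
        rw [← h7]; exact h6
    _ ≤ ((r * r.factorial * M ^ (r-1) * B : ℕ) : ℚ) := by exact_mod_cast h8

lemma exists_small_kernel {m k : ℕ} (A : Matrix (Fin m) (Fin k) ℤ)
    (M r : ℕ) (hM : 1 ≤ M)
    (hA : ∀ i j, |((A i j : ℚ))| ≤ (M:ℚ))
    (hr : (A.map ((↑) : ℤ → ℚ)).rank = r)
    (S : Finset (Fin k))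
    (hdep : ¬ LinearIndependent ℚ
      (fun j : {j // j ∈ S} => (A.map ((↑) : ℤ → ℚ))ᵀ (j : Fin k))) :
    ∃ c : Fin k → ℚ, (∀ j, ∃ z : ℤ, c j = (z:ℚ)) ∧ c ≠ 0 ∧
      (A.map ((↑) : ℤ → ℚ)).mulVec c = 0 ∧ (∀ j, j ∉ S → c j = 0) ∧
      (∀ j, |c j| ≤ ((r.factorial * M ^ r : ℕ) : ℚ)) ∧ (qsupp c).card ≤ r + 1 := by
  classical
  set Aq := A.map ((↑) : ℤ → ℚ) with hAq
  -- minimal dependent subset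
  let D : Finset (Finset (Fin k)) := S.powerset.filter
    (fun T => ¬ LinearIndependent ℚ (fun j : {j // j ∈ T} => Aqᵀ (j : Fin k)))
  have hSD : S ∈ D := by
    simp only [D, Finset.mem_filter, Finset.mem_powerset]
    exact ⟨subset_rfl, hdep⟩
  obtain ⟨S', hS'D, hS'min⟩ := Finset.exists_min_image D Finset.card ⟨S, hSD⟩
  have hS'sub : S' ⊆ S := by
    have := hS'D; simp only [D, Finset.mem_filter, Finset.mem_powerset] at this; exact this.1
  have hS'dep : ¬ LinearIndependent ℚ (fun j : {j // j ∈ S'} => Aqᵀ (j : Fin k)) := by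
    have := hS'D; simp only [D, Finset.mem_filter, Finset.mem_powerset] at this; exact this.2
  -- dependency
  obtain ⟨g, hgsum, j₁, hgj₁⟩ := Fintype.not_linearIndependent_iff.mp hS'dep
  let γ : Fin k → ℚ := fun j => if h : j ∈ S' then g ⟨j, h⟩ else 0
  set j₀ : Fin k := (j₁ : Fin k) with hj₀
  have hj₀S' : j₀ ∈ S' := j₁.2
  have hγj₀ : γ j₀ ≠ 0 := by
    simp only [γ, dif_pos hj₀S']
    convert hgj₁ <;> exact rfl
  have hrowdep : ∀ i, ∑ j ∈ S', γ j * Aq i j = 0 := by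
    intro i
    have h1 := congrFun hgsum i
    simp only [Finset.sum_apply, Pi.smul_apply, Pi.zero_apply, smul_eq_mul] at h1
    have h2 : ∑ j ∈ S', γ j * Aq i j
        = ∑ j : {j // j ∈ S'}, γ (j : Fin k) * Aq i (j : Fin k) :=
      (S'.sum_coe_sort (fun j => γ j * Aq i j)).symm
    rw [h2]
    rw [← h1]
    apply Finset.sum_congr rfl
    intro j _
    simp only [γ, dif_pos j.2]
    rfl
  set S'' := S'.erase j₀ with hS''
  set p := S''.card with hp
  have hj₀S'' : j₀ ∉ S'' := Finset.notMem_erase _ _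
  have hS''card : S'.card = p + 1 := by
    rw [hp, hS'', Finset.card_erase_of_mem hj₀S']
    have : 0 < S'.card := Finset.card_pos.mpr ⟨j₀, hj₀S'⟩
    omega
  have hS''indep : LinearIndependent ℚ (fun j : {j // j ∈ S''} => Aqᵀ (j : Fin k)) := by
    by_contra hdep''
    have hmem : S'' ∈ D := by
      simp only [D, Finset.mem_filter, Finset.mem_powerset]
      exact ⟨(Finset.erase_subset _ _).trans hS'sub, hdep''⟩
    have := hS'min S'' hmem
    omega
  have hpr : p ≤ r := by rw [← hr]; exact card_le_rank Aq S'' hS''indep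
  -- δ coefficients
  set δ : Fin k → ℚ := fun j => -γ j / γ j₀ with hδ
  have hfulldep : ∀ i, ∑ j ∈ S'', δ j * Aq i j = Aq i j₀ := by
    intro i
    have h1 : γ j₀ * Aq i j₀ + ∑ j ∈ S'', γ j * Aq i j = 0 := by
      have h0 := Finset.sum_erase_add S' (fun j => γ j * Aq i j) hj₀S'
      have h0' := hrowdep i
      rw [hS'']
      linarith
    have h2 : ∑ j ∈ S'', δ j * Aq i j = (-1 / γ j₀) * ∑ j ∈ S'', γ j * Aq i j := by
      rw [Finset.mul_sum]
      apply Finset.sum_congr rfl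
      intro j _
      rw [hδ]
      field_simp
    rw [h2]
    have h3 : ∑ j ∈ S'', γ j * Aq i j = -(γ j₀ * Aq i j₀) := by linarith
    rw [h3]
    field_simp
  -- submatrix machinery
  let e : {j // j ∈ S''} ≃ Fin p := S''.equivFin
  let N : Matrix (Fin m) (Fin p) ℚ := Matrix.of fun i u => Aq i ((e.symm u) : Fin k)
  have hNli : LinearIndependent ℚ (fun u : Fin p => Nᵀ u) :=
    hS''indep.comp e.symm e.symm.injective
  obtain ⟨f, hf⟩ := exists_invertible_rows N hNli
  set Q := N.submatrix f id with hQ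
  let Qz : Matrix (Fin p) (Fin p) ℤ := Matrix.of fun u v => A (f u) ((e.symm v) : Fin k)
  have hQz : Q = Qz.map ((↑) : ℤ → ℚ) := by
    ext u v
    simp [hQ, Qz, N, Matrix.submatrix_apply, Matrix.map_apply, hAq]
  have hdet : Q.det = ((Qz.det : ℤ) : ℚ) := by
    rw [hQz]
    have h0 : Qz.map ((↑) : ℤ → ℚ) = (Int.castRingHom ℚ).mapMatrix Qz := rfl
    rw [h0, ← RingHom.map_det]
    rfl
  have hQabs : ∀ u v, |Q u v| ≤ (M:ℚ) := by
    intro u v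
    simp only [hQ, Matrix.submatrix_apply, N, Matrix.of_apply, hAq, Matrix.map_apply]
    exact hA (f u) _
  set w : Fin p → ℚ := fun u => Aq (f u) j₀ with hw
  have hwabs : ∀ u, |w u| ≤ (M:ℚ) := by
    intro u
    simp only [hw, hAq, Matrix.map_apply]
    exact hA (f u) _
  set δs : Fin p → ℚ := fun u => δ ((e.symm u) : Fin k) with hδs
  have hQδ : Q.mulVec δs = w := by
    funext u
    have h1 : (Q.mulVec δs) u = ∑ v : Fin p, Aq (f u) ((e.symm v) : Fin k) * δ ((e.symm v) : Fin k) := by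
      simp [Matrix.mulVec, dotProduct, hQ, Matrix.submatrix_apply, N, hδs]
    rw [h1]
    have h2 : ∑ v : Fin p, Aq (f u) ((e.symm v) : Fin k) * δ ((e.symm v) : Fin k)
        = ∑ j : {j // j ∈ S''}, Aq (f u) (j : Fin k) * δ (j : Fin k) :=
      Equiv.sum_comp e.symm (fun j : {j // j ∈ S''} => Aq (f u) (j : Fin k) * δ (j : Fin k))
    have h3 : ∑ j : {j // j ∈ S''}, Aq (f u) (j : Fin k) * δ (j : Fin k)
        = ∑ j ∈ S'', Aq (f u) j * δ j := S''.sum_coe_sort (fun j => Aq (f u) j * δ j)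
    rw [h2, h3]
    have h4 : ∑ j ∈ S'', Aq (f u) j * δ j = ∑ j ∈ S'', δ j * Aq (f u) j :=
      Finset.sum_congr rfl (fun j _ => mul_comm _ _)
    rw [h4, hfulldep (f u)]
  have hcr : Q.det • δs = Q.cramer w := by
    rw [← hQδ, Matrix.cramer_eq_adjugate_mulVec, Matrix.mulVec_mulVec, Matrix.adjugate_mul,
      Matrix.smul_mulVec, Matrix.one_mulVec]
  -- the kernel vector
  set c : Fin k → ℚ :=
    fun j => if j = j₀ then -Q.det else if h : j ∈ S'' then Q.cramer w (e ⟨j, h⟩) else 0 with hc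
  have hdetQ : Q.det ≠ 0 := by
    intro h0
    have := (Matrix.isUnit_iff_isUnit_det Q).mp hf
    rw [h0] at this
    exact (not_isUnit_zero : ¬ IsUnit (0:ℚ)) this
  -- bounds
  have hdetbound : |Q.det| ≤ ((p.factorial * M ^ p : ℕ) : ℚ) := by
    have := abs_det_le Q (fun _ => (M:ℚ)) (fun _ => by positivity) (fun i j => hQabs i j)
    rw [Finset.prod_const, Finset.card_univ, Fintype.card_fin] at this
    push_cast
    exact this
  have hcramerbound : ∀ u, |Q.cramer w u| ≤ ((p.factorial * M ^ p : ℕ) : ℚ) := by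
    intro u
    rw [Matrix.cramer_apply]
    have := abs_det_le (Q.updateCol u w) (fun _ => (M:ℚ)) (fun _ => by positivity)
      (fun i j => by
        rw [Matrix.updateCol_apply]
        split
        · exact hwabs i
        · exact hQabs i j)
    rw [Finset.prod_const, Finset.card_univ, Fintype.card_fin] at this
    push_cast
    exact this
  have hmono : ((p.factorial * M ^ p : ℕ) : ℚ) ≤ ((r.factorial * M ^ r : ℕ) : ℚ) := by
    have : (p.factorial * M ^ p : ℕ) ≤ r.factorial * M ^ r :=
      Nat.mul_le_mul (Nat.factorial_le hpr) (Nat.pow_le_pow_right hM hpr)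
    exact_mod_cast this
  refine ⟨c, ?_, ?_, ?_, ?_, ?_, ?_⟩
  · -- integrality
    intro j
    simp only [hc]
    split
    · exact ⟨-Qz.det, by rw [hdet]; push_cast; ring⟩
    · split
      · rename_i hj hj2
        refine ⟨(Qz.updateCol (e ⟨j, hj2⟩) (fun u => A (f u) j₀)).det, ?_⟩
        rw [Matrix.cramer_apply]
        have hupd : Q.updateCol (e ⟨j, hj2⟩) w
            = (Qz.updateCol (e ⟨j, hj2⟩) (fun u => A (f u) j₀)).map ((↑) : ℤ → ℚ) := by
          ext u v
          rw [Matrix.map_apply, Matrix.updateCol_apply, Matrix.updateCol_apply]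
          split
          · simp [hw, hAq, Matrix.map_apply]
          · rw [hQz, Matrix.map_apply]
        rw [hupd]
        have h0 : (Qz.updateCol (e ⟨j, hj2⟩) (fun u => A (f u) j₀)).map ((↑) : ℤ → ℚ)
            = (Int.castRingHom ℚ).mapMatrix _ := rfl
        rw [h0, ← RingHom.map_det]
        rfl
      · exact ⟨0, by norm_num⟩
  · -- nonzero
    intro h0
    have := congrFun h0 j₀
    simp only [hc, if_pos rfl, Pi.zero_apply, neg_eq_zero] at this
    exact hdetQ this
  · -- kernel
    funext i
    have hzero : ∀ j, j ≠ j₀ → j ∉ S'' → c j = 0 := by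
      intro j h1 h2
      simp only [hc, if_neg h1, dif_neg h2]
    have h1 : (Aq.mulVec c) i = ∑ j, Aq i j * c j := rfl
    have h2 : ∑ j, Aq i j * c j = ∑ j ∈ insert j₀ S'', Aq i j * c j := by
      symm
      apply Finset.sum_subset (Finset.subset_univ _)
      intro j _ hj
      simp only [Finset.mem_insert, not_or] at hj
      rw [hzero j hj.1 hj.2, mul_zero]
    have h3 : ∑ j ∈ insert j₀ S'', Aq i j * c j
        = Aq i j₀ * (-Q.det) + ∑ j ∈ S'', Aq i j * c j := by
      rw [Finset.sum_insert hj₀S'']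
      congr 1
      simp only [hc, if_pos rfl]
    have h4 : ∀ j ∈ S'', Aq i j * c j = Q.det * (δ j * Aq i j) := by
      intro j hj
      have hjne : j ≠ j₀ := fun hje => hj₀S'' (hje ▸ hj)
      have : c j = Q.cramer w (e ⟨j, hj⟩) := by simp only [hc, if_neg hjne, dif_pos hj]
      rw [this, ← hcr]
      simp only [Pi.smul_apply, smul_eq_mul, hδs]
      rw [Equiv.symm_apply_apply]
      ring
    rw [h1, h2, h3, Finset.sum_congr rfl h4, ← Finset.mul_sum, hfulldep i]
    simp only [Pi.zero_apply]
    ring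
  · -- zero outside S
    intro j hj
    have h1 : j ≠ j₀ := fun hje => hj (hje ▸ hS'sub hj₀S')
    have h2 : j ∉ S'' := fun hje => hj (hS'sub ((Finset.erase_subset _ _) hje))
    simp only [hc, if_neg h1, dif_neg h2]
  · -- bounds
    intro j
    simp only [hc]
    split
    · rw [abs_neg]; exact hdetbound.trans hmono
    · split
      · exact (hcramerbound _).trans hmono
      · simp only [abs_zero]
        positivity
  · -- support size
    have hsub : qsupp c ⊆ insert j₀ S'' := by
      intro j hj
      rw [mem_qsupp] at hj
      by_contra hmem
      simp only [Finset.mem_insert, not_or] at hmem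
      exact hj (by simp only [hc, if_neg hmem.1, dif_neg hmem.2])
    calc (qsupp c).card ≤ (insert j₀ S'').card := Finset.card_le_card hsub
      _ ≤ p + 1 := by rw [Finset.card_insert_of_notMem hj₀S'']
      _ ≤ r + 1 := by omega

def IsGood {m k : ℕ} (Aq : Matrix (Fin m) (Fin k) ℚ) (M r : ℕ) (c : Fin k → ℚ) : Prop :=
  (∀ j, ∃ z : ℤ, c j = (z:ℚ)) ∧ (∀ j, 0 ≤ c j) ∧ c ≠ 0 ∧ Aq.mulVec c = 0 ∧
    ∑ j, c j ≤ (((r+1) * r.factorial * M ^ r : ℕ) : ℚ)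

lemma decompose {m k : ℕ} (A : Matrix (Fin m) (Fin k) ℤ) (bq : Fin m → ℚ)
    (M B r : ℕ) (hM : 1 ≤ M)
    (hA : ∀ i j, |((A i j : ℚ))| ≤ (M:ℚ)) (hb : ∀ i, |bq i| ≤ (B:ℚ))
    (hr : (A.map ((↑) : ℤ → ℚ)).rank = r) :
    ∀ (N : ℕ) (x : Fin k → ℚ), (qsupp x).card = N → (∀ j, 0 ≤ x j) →
    (A.map ((↑) : ℤ → ℚ)).mulVec x = bq →
    ∃ (y : Fin k → ℚ) (n : ℕ) (t : Fin n → ℚ) (c : Fin n → Fin k → ℚ),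
      (∀ j, 0 ≤ y j) ∧ (A.map ((↑) : ℤ → ℚ)).mulVec y = bq ∧
      (∑ j, y j) ≤ ((r * r.factorial * M ^ (r-1) * B : ℕ) : ℚ) ∧
      (∀ u, 0 ≤ t u) ∧ (∀ u, IsGood (A.map ((↑) : ℤ → ℚ)) M r (c u)) ∧
      x = y + ∑ u, t u • c u := by
  classical
  set Aq := A.map ((↑) : ℤ → ℚ) with hAq
  have hgood : ∀ cg : Fin k → ℚ, (∀ j, ∃ z : ℤ, cg j = (z:ℚ)) → cg ≠ 0 → Aq.mulVec cg = 0 →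
      (∀ j, |cg j| ≤ ((r.factorial * M ^ r : ℕ) : ℚ)) → (qsupp cg).card ≤ r + 1 →
      (∀ j, 0 ≤ cg j) → IsGood Aq M r cg := by
    intro cg h1 h2 h3 h4 h5 h6
    refine ⟨h1, h6, h2, h3, ?_⟩
    have hz : ∑ j, cg j = ∑ j ∈ qsupp cg, cg j := by
      symm
      apply Finset.sum_subset (Finset.subset_univ _)
      intro j _ hj
      by_contra hcj
      exact hj (mem_qsupp.mpr hcj)
    rw [hz]
    calc ∑ j ∈ qsupp cg, cg j ≤ ∑ _j ∈ qsupp cg, ((r.factorial * M ^ r : ℕ) : ℚ) :=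
          Finset.sum_le_sum (fun j _ => (le_abs_self _).trans (h4 j))
      _ = ((qsupp cg).card : ℚ) * ((r.factorial * M ^ r : ℕ) : ℚ) := by
          rw [Finset.sum_const, nsmul_eq_mul]
      _ ≤ ((r+1 : ℕ) : ℚ) * ((r.factorial * M ^ r : ℕ) : ℚ) := by
          apply mul_le_mul_of_nonneg_right _ (by positivity)
          exact_mod_cast h5
      _ = (((r+1) * r.factorial * M ^ r : ℕ) : ℚ) := by push_cast; ring
  intro N
  induction N using Nat.strong_induction_on with
  | _ N ih =>
  intro x hcard hx0 hxb
  by_cases hli : LinearIndependent ℚ (fun j : {j // j ∈ qsupp x} => Aqᵀ (j : Fin k))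
  · -- base case
    refine ⟨x, 0, (fun _ => 0), (fun _ _ => 0), hx0, hxb, ?_, ?_, ?_, ?_⟩
    · exact sum_le_of_indep A bq M B r hM hA hb hr x hx0 hxb hli
    · intro u; exact u.elim0
    · intro u; exact u.elim0
    · simp
  · -- dependent case
    obtain ⟨c, hcz, hcne, hck, hcout, hcabs, hccard⟩ :=
      exists_small_kernel A M r hM hA hr (qsupp x) hli
    have hcx : ∀ j, c j ≠ 0 → 0 < x j := by
      intro j hj
      rcases (hx0 j).lt_or_eq with h | h
      · exact h
      · exact absurd (hcout j (fun hmem => (mem_qsupp.mp hmem) h.symm)) hj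
    have hNpos : 0 < N := by
      obtain ⟨j, hj⟩ : ∃ j, c j ≠ 0 := by
        by_contra hall; push_neg at hall; exact hcne (funext hall)
      have hmem : j ∈ qsupp x := mem_qsupp.mpr (ne_of_gt (hcx j hj))
      have := Finset.card_pos.mpr ⟨j, hmem⟩
      omega
    -- the cone step, applied with cg = c or cg = -c
    have hcone : ∀ cg : Fin k → ℚ, (∀ j, ∃ z : ℤ, cg j = (z:ℚ)) → cg ≠ 0 → Aq.mulVec cg = 0 →
        (∀ j, cg j ≠ 0 → 0 < x j) →
        (∀ j, |cg j| ≤ ((r.factorial * M ^ r : ℕ) : ℚ)) → (qsupp cg).card ≤ r + 1 →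
        (∀ j, 0 ≤ cg j) →
        ∃ (y : Fin k → ℚ) (n : ℕ) (t : Fin n → ℚ) (cf : Fin n → Fin k → ℚ),
          (∀ j, 0 ≤ y j) ∧ Aq.mulVec y = bq ∧
          (∑ j, y j) ≤ ((r * r.factorial * M ^ (r-1) * B : ℕ) : ℚ) ∧
          (∀ u, 0 ≤ t u) ∧ (∀ u, IsGood Aq M r (cf u)) ∧
          x = y + ∑ u, t u • cf u := by
      intro cg hint hne hker hpos habs hcard2 hnn
      have hPne : (qsupp cg).Nonempty := by
        obtain ⟨j, hj⟩ : ∃ j, cg j ≠ 0 := by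
          by_contra hall; push_neg at hall; exact hne (funext hall)
        exact ⟨j, mem_qsupp.mpr hj⟩
      obtain ⟨js, hjs, hjsmin⟩ := Finset.exists_min_image (qsupp cg) (fun j => x j / cg j) hPne
      have hcjs : 0 < cg js := lt_of_le_of_ne (hnn js) (Ne.symm (mem_qsupp.mp hjs))
      set ts := x js / cg js with hts
      have hts0 : 0 ≤ ts := div_nonneg (le_of_lt (hpos js (mem_qsupp.mp hjs))) hcjs.le
      set x' : Fin k → ℚ := x - ts • cg with hx'
      have hx'j : ∀ j, x' j = x j - ts * cg j := fun j => rfl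
      have hx'0 : ∀ j, 0 ≤ x' j := by
        intro j
        rw [hx'j]
        rcases eq_or_ne (cg j) 0 with hcj | hcj
        · rw [hcj, mul_zero, sub_zero]; exact hx0 j
        · have hcjpos : 0 < cg j := lt_of_le_of_ne (hnn j) (Ne.symm hcj)
          have hmem : j ∈ qsupp cg := mem_qsupp.mpr hcj
          have hdd := hjsmin j hmem
          rw [div_le_div_iff₀ hcjs hcjpos] at hdd
          have hle : ts * cg j ≤ x j := by
            rw [hts, div_mul_eq_mul_div, div_le_iff₀ hcjs]
            linarith
          linarith
      have hx'js : x' js = 0 := by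
        rw [hx'j, hts]
        rw [div_mul_cancel₀ _ (ne_of_gt hcjs), sub_self]
      have hsupp' : qsupp x' ⊆ (qsupp x).erase js := by
        intro j hj
        rw [mem_qsupp] at hj
        rw [Finset.mem_erase]
        refine ⟨?_, mem_qsupp.mpr ?_⟩
        · intro hje; rw [hje] at hj; exact hj hx'js
        · intro hxj
          apply hj
          rw [hx'j, hxj]
          rcases eq_or_ne (cg j) 0 with hcj | hcj
          · rw [hcj]; ring
          · exact absurd hxj (ne_of_gt (hpos j hcj))
      have hjsx : js ∈ qsupp x := mem_qsupp.mpr (ne_of_gt (hpos js (mem_qsupp.mp hjs)))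
      have hcard' : (qsupp x').card < N := by
        calc (qsupp x').card ≤ ((qsupp x).erase js).card := Finset.card_le_card hsupp'
          _ = (qsupp x).card - 1 := Finset.card_erase_of_mem hjsx
          _ < N := by omega
      have hx'b : Aq.mulVec x' = bq := by
        rw [hx', Matrix.mulVec_sub, hxb, Matrix.mulVec_smul, hker, smul_zero, sub_zero]
      obtain ⟨y, n, t, cf, hy0, hyb, hysum, ht0, hgoods, heq⟩ :=
        ih (qsupp x').card hcard' x' rfl hx'0 hx'b
      refine ⟨y, n+1, Fin.cons ts t, Fin.cons cg cf, hy0, hyb, hysum, ?_, ?_, ?_⟩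
      · intro u
        refine Fin.cases ?_ ?_ u
        · simpa using hts0
        · intro v; simpa using ht0 v
      · intro u
        refine Fin.cases ?_ ?_ u
        · simpa using hgood cg hint hne hker habs hcard2 hnn
        · intro v; simpa using hgoods v
      · rw [Fin.sum_univ_succ]
        simp only [Fin.cons_zero, Fin.cons_succ]
        have : x = x' + ts • cg := by rw [hx']; abel
        rw [this, heq]
        abel
    by_cases hPn : ∃ j, c j < 0
    · by_cases hPp : ∃ j, 0 < c j
      · -- mixed signs: convex split
        obtain ⟨j1, hj1⟩ := hPn
        obtain ⟨j2, hj2⟩ := hPp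
        -- tp from negative part
        have hPnne : (Finset.univ.filter (fun j => c j < 0)).Nonempty :=
          ⟨j1, by simp [hj1]⟩
        obtain ⟨jn, hjnmem, hjnmin⟩ := Finset.exists_min_image _ (fun j => x j / (-c j)) hPnne
        have hcjn : c jn < 0 := by simpa using hjnmem
        have hxjn : 0 < x jn := hcx jn (ne_of_lt hcjn)
        set tp := x jn / (-c jn) with htp
        have htp0 : 0 < tp := div_pos hxjn (by linarith)
        -- tn from positive part
        have hPpne : (Finset.univ.filter (fun j => 0 < c j)).Nonempty :=
          ⟨j2, by simp [hj2]⟩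
        obtain ⟨jp, hjpmem, hjpmin⟩ := Finset.exists_min_image _ (fun j => x j / c j) hPpne
        have hcjp : 0 < c jp := by simpa using hjpmem
        have hxjp : 0 < x jp := hcx jp (ne_of_gt hcjp)
        set tn := x jp / c jp with htn
        have htn0 : 0 < tn := div_pos hxjp hcjp
        -- the two boundary points
        set xp : Fin k → ℚ := x + tp • c with hxp
        set xn : Fin k → ℚ := x - tn • c with hxn
        have hxpj : ∀ j, xp j = x j + tp * c j := fun j => rfl
        have hxnj : ∀ j, xn j = x j - tn * c j := fun j => rfl
        have hxp0 : ∀ j, 0 ≤ xp j := by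
          intro j
          rw [hxpj]
          rcases le_or_gt 0 (c j) with hcj | hcj
          · have : 0 ≤ tp * c j := mul_nonneg htp0.le hcj
            linarith [hx0 j]
          · have hmem : j ∈ Finset.univ.filter (fun j => c j < 0) := by simp [hcj]
            have hdd := hjnmin j hmem
            rw [div_le_div_iff₀ (by linarith) (by linarith)] at hdd
            have : tp * (-c j) ≤ x j := by
              rw [htp, div_mul_eq_mul_div, div_le_iff₀ (by linarith : (0:ℚ) < -c jn)]
              linarith
            linarith
        have hxn0 : ∀ j, 0 ≤ xn j := by
          intro j
          rw [hxnj]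
          rcases le_or_gt (c j) 0 with hcj | hcj
          · have : tn * c j ≤ 0 := mul_nonpos_of_nonneg_of_nonpos htn0.le hcj
            linarith [hx0 j]
          · have hmem : j ∈ Finset.univ.filter (fun j => 0 < c j) := by simp [hcj]
            have hdd := hjpmin j hmem
            rw [div_le_div_iff₀ hcjp hcj] at hdd
            have : tn * c j ≤ x j := by
              rw [htn, div_mul_eq_mul_div, div_le_iff₀ hcjp]
              linarith
            linarith
        have hxpjn : xp jn = 0 := by
          have h1 : c jn ≠ 0 := ne_of_lt hcjn
          rw [hxpj, htp, div_neg, neg_mul, div_mul_cancel₀ _ h1]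
          ring
        have hxnjp : xn jp = 0 := by
          have h1 : c jp ≠ 0 := ne_of_gt hcjp
          rw [hxnj, htn, div_mul_cancel₀ _ h1]
          ring
        have hsuppp : qsupp xp ⊆ (qsupp x).erase jn := by
          intro j hj
          rw [mem_qsupp] at hj
          rw [Finset.mem_erase]
          refine ⟨?_, mem_qsupp.mpr ?_⟩
          · intro hje; rw [hje] at hj; exact hj hxpjn
          · intro hxj
            apply hj
            rw [hxpj, hxj]
            rcases eq_or_ne (c j) 0 with hcj | hcj
            · rw [hcj]; ring
            · exact absurd hxj (ne_of_gt (hcx j hcj))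
        have hsuppn : qsupp xn ⊆ (qsupp x).erase jp := by
          intro j hj
          rw [mem_qsupp] at hj
          rw [Finset.mem_erase]
          refine ⟨?_, mem_qsupp.mpr ?_⟩
          · intro hje; rw [hje] at hj; exact hj hxnjp
          · intro hxj
            apply hj
            rw [hxnj, hxj]
            rcases eq_or_ne (c j) 0 with hcj | hcj
            · rw [hcj]; ring
            · exact absurd hxj (ne_of_gt (hcx j hcj))
        have hjnx : jn ∈ qsupp x := mem_qsupp.mpr (ne_of_gt hxjn)
        have hjpx : jp ∈ qsupp x := mem_qsupp.mpr (ne_of_gt hxjp)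
        have hcardp : (qsupp xp).card < N := by
          calc (qsupp xp).card ≤ ((qsupp x).erase jn).card := Finset.card_le_card hsuppp
            _ = (qsupp x).card - 1 := Finset.card_erase_of_mem hjnx
            _ < N := by omega
        have hcardn : (qsupp xn).card < N := by
          calc (qsupp xn).card ≤ ((qsupp x).erase jp).card := Finset.card_le_card hsuppn
            _ = (qsupp x).card - 1 := Finset.card_erase_of_mem hjpx
            _ < N := by omega
        have hxpb : Aq.mulVec xp = bq := by
          rw [hxp, Matrix.mulVec_add, hxb, Matrix.mulVec_smul, hck, smul_zero, add_zero]
        have hxnb : Aq.mulVec xn = bq := by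
          rw [hxn, Matrix.mulVec_sub, hxb, Matrix.mulVec_smul, hck, smul_zero, sub_zero]
        obtain ⟨yp, np, ttp, ccp, hyp0, hypb, hypsum, htp0', hgoodsp, heqp⟩ :=
          ih (qsupp xp).card hcardp xp rfl hxp0 hxpb
        obtain ⟨yn, nn, ttn, ccn, hyn0, hynb, hynsum, htn0', hgoodsn, heqn⟩ :=
          ih (qsupp xn).card hcardn xn rfl hxn0 hxnb
        set lam := tn / (tp + tn) with hlam
        set mu := tp / (tp + tn) with hmu
        have htptn : 0 < tp + tn := by linarith
        have hlam0 : 0 ≤ lam := div_nonneg htn0.le htptn.le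
        have hmu0 : 0 ≤ mu := div_nonneg htp0.le htptn.le
        have hlammu : lam + mu = 1 := by
          rw [hlam, hmu]
          field_simp
          ring
        have hxconv : x = lam • xp + mu • xn := by
          funext j
          simp only [Pi.add_apply, Pi.smul_apply, smul_eq_mul]
          rw [hxpj, hxnj, hlam, hmu]
          field_simp
          ring
        refine ⟨lam • yp + mu • yn, np + nn,
          Fin.append (fun u => lam * ttp u) (fun u => mu * ttn u),
          Fin.append ccp ccn, ?_, ?_, ?_, ?_, ?_, ?_⟩
        · intro j
          simp only [Pi.add_apply, Pi.smul_apply, smul_eq_mul]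
          have := hyp0 j; have := hyn0 j
          positivity
        · rw [Matrix.mulVec_add, Matrix.mulVec_smul, Matrix.mulVec_smul, hypb, hynb,
            ← add_smul, hlammu, one_smul]
        · have h1 : ∑ j, (lam • yp + mu • yn) j = lam * ∑ j, yp j + mu * ∑ j, yn j := by
            simp only [Pi.add_apply, Pi.smul_apply, smul_eq_mul]
            rw [Finset.sum_add_distrib, Finset.mul_sum, Finset.mul_sum]
          rw [h1]
          calc lam * ∑ j, yp j + mu * ∑ j, yn j
              ≤ lam * ((r * r.factorial * M ^ (r-1) * B : ℕ) : ℚ)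
                + mu * ((r * r.factorial * M ^ (r-1) * B : ℕ) : ℚ) := by
                apply add_le_add
                · exact mul_le_mul_of_nonneg_left hypsum hlam0
                · exact mul_le_mul_of_nonneg_left hynsum hmu0
            _ = ((r * r.factorial * M ^ (r-1) * B : ℕ) : ℚ) := by
                rw [← add_mul, hlammu, one_mul]
        · intro u
          refine Fin.addCases ?_ ?_ u
          · intro v; rw [Fin.append_left]; exact mul_nonneg hlam0 (htp0' v)
          · intro v; rw [Fin.append_right]; exact mul_nonneg hmu0 (htn0' v)
        · intro u
          refine Fin.addCases ?_ ?_ u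
          · intro v; rw [Fin.append_left]; exact hgoodsp v
          · intro v; rw [Fin.append_right]; exact hgoodsn v
        · have hsplit : ∑ u : Fin (np + nn),
              (Fin.append (fun u => lam * ttp u) (fun u => mu * ttn u)) u
                • (Fin.append ccp ccn) u
              = lam • (∑ u, ttp u • ccp u) + mu • (∑ u, ttn u • ccn u) := by
            rw [Fin.sum_univ_add]
            congr 1
            · rw [Finset.smul_sum]
              apply Finset.sum_congr rfl
              intro v _
              rw [Fin.append_left, Fin.append_left, smul_smul]
            · rw [Finset.smul_sum]
              apply Finset.sum_congr rfl
              intro v _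
              rw [Fin.append_right, Fin.append_right, smul_smul]
          rw [hsplit, hxconv, heqp, heqn]
          rw [smul_add, smul_add]
          abel
      · -- all entries nonpositive: use -c
        push_neg at hPp
        have hnn : ∀ j, 0 ≤ (-c) j := by
          intro j; simp only [Pi.neg_apply]
          have := hPp j; linarith
        refine hcone (-c) ?_ ?_ ?_ ?_ ?_ ?_ hnn
        · intro j; obtain ⟨z, hz⟩ := hcz j; exact ⟨-z, by simp [hz]⟩
        · intro h0
          apply hcne
          funext j
          have := congrFun h0 j
          simp only [Pi.neg_apply, Pi.zero_apply, neg_eq_zero] at this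
          exact this
        · rw [Matrix.mulVec_neg, hck, neg_zero]
        · intro j hj
          apply hcx j
          simp only [Pi.neg_apply, ne_eq, neg_eq_zero] at hj
          exact hj
        · intro j
          simp only [Pi.neg_apply, abs_neg]
          exact hcabs j
        · have : qsupp (-c) = qsupp c := by
            ext j
            simp only [mem_qsupp, Pi.neg_apply, ne_eq, neg_eq_zero]
          rw [this]
          exact hccard
    · -- all entries nonnegative: use c
      push_neg at hPn
      exact hcone c hcz hcne hck hcx hcabs hccard (fun j => hPn j)

end AuxMinSol

/-- Every minimal nonnegative integer solution `x` of the system `A · x = b` satisfies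
`‖x‖₁ ≤ (1 + k·‖A‖∞ + ‖b‖∞)^(r+1)`, where `r` is the rank of `A`. -/
theorem minimal_solution_bound (m k : ℕ) (A : Matrix (Fin m) (Fin k) ℤ) (b : Fin m → ℤ)
    (r : ℕ) (hr : r = (A.map ((↑) : ℤ → ℚ)).rank)
    (x : Fin k → ℕ)
    (hmin : Minimal (fun y : Fin k → ℕ =>
      A.mulVec (fun i => (y i : ℤ)) = b) x) :
    ∑ i, x i ≤
      (1 + k * (Finset.univ.sup fun p : Fin m × Fin k => (A p.1 p.2).natAbs)
         + Finset.univ.sup fun i => (b i).natAbs) ^ (r + 1) := by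
  classical
  set Mn := (Finset.univ.sup fun p : Fin m × Fin k => (A p.1 p.2).natAbs) with hMn
  set Bn := (Finset.univ.sup fun i => (b i).natAbs) with hBn
  have hsol : A.mulVec (fun i => ((x i : ℤ))) = b := hmin.1
  -- trivial case : b = 0
  by_cases hb0 : ∀ i, b i = 0
  · have hP0 : A.mulVec (fun i => (((fun _ => 0 : Fin k → ℕ) i : ℤ))) = b := by
      have : (fun i => (((fun _ => 0 : Fin k → ℕ) i : ℤ))) = (0 : Fin k → ℤ) := by
        funext i; simp
      rw [this, Matrix.mulVec_zero]
      funext i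
      exact (hb0 i).symm
    have hxle := hmin.2 hP0 (fun j => Nat.zero_le _)
    have : ∀ i, x i = 0 := fun i => Nat.le_zero.mp (hxle i)
    simp [this]
  · push_neg at hb0
    obtain ⟨i₀, hi₀⟩ := hb0
    have hB : 1 ≤ Bn := by
      have h1 : (b i₀).natAbs ≤ Bn :=
        Finset.le_sup (f := fun i => (b i).natAbs) (Finset.mem_univ i₀)
      have h2 : 1 ≤ (b i₀).natAbs := by
        rcases Int.natAbs_eq_zero.mp.mt hi₀ with h
        omega
      omega
    have hAne : A ≠ 0 := by
      intro h0
      apply hi₀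
      rw [← hsol, h0, Matrix.zero_mulVec]
      rfl
    obtain ⟨i₁, j₁, hij⟩ : ∃ i j, A i j ≠ 0 := by
      by_contra hall
      push_neg at hall
      exact hAne (by ext i j; exact hall i j)
    have hM : 1 ≤ Mn := by
      have h1 : (A i₁ j₁).natAbs ≤ Mn := Finset.le_sup (f := fun p : Fin m × Fin k => (A p.1 p.2).natAbs) (Finset.mem_univ (i₁, j₁))
      have h2 : 1 ≤ (A i₁ j₁).natAbs := by
        rcases Int.natAbs_eq_zero.mp.mt hij with h
        omega
      omega
    set Aq := A.map ((↑) : ℤ → ℚ) with hAq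
    have hr1 : 1 ≤ r := by
      rcases Nat.eq_zero_or_pos r with h0 | h
      · exfalso
        have hrank0 : Aq.rank = 0 := by rw [← hr, h0]
        have hbot : LinearMap.range Aq.mulVecLin = ⊥ := by
          have h2 : Aq.rank = finrank ℚ (LinearMap.range Aq.mulVecLin) := rfl
          rw [h2] at hrank0
          exact Submodule.finrank_eq_zero.mp hrank0
        have hcol : Aq.mulVec (fun j => if j = j₁ then 1 else 0) = 0 := by
          have hmem : Aq.mulVec (fun j => if j = j₁ then 1 else 0) ∈ LinearMap.range Aq.mulVecLin :=
            ⟨(fun j => if j = j₁ then 1 else 0), rfl⟩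
          rw [hbot] at hmem
          simpa using hmem
        have := congrFun hcol i₁
        simp only [Matrix.mulVec, dotProduct, Pi.zero_apply] at this
        rw [Finset.sum_eq_single j₁] at this
        · simp only [if_pos rfl, if_true, mul_one, hAq, Matrix.map_apply, Int.cast_eq_zero] at this
          exact hij this
        · intro j _ hj; simp [hj]
        · intro hmem; exact absurd (Finset.mem_univ j₁) hmem
      · exact h
    have hrk : r ≤ k := by
      rw [hr]
      exact Matrix.rank_le_width Aq
    -- rational data
    set bq : Fin m → ℚ := fun i => ((b i : ℤ) : ℚ) with hbq
    have hA : ∀ i j, |((A i j : ℚ))| ≤ (Mn:ℚ) := by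
      intro i j
      have h1 : (A i j).natAbs ≤ Mn := Finset.le_sup (f := fun p : Fin m × Fin k => (A p.1 p.2).natAbs) (Finset.mem_univ (i, j))
      rw [← Int.cast_abs]
      rw [Int.abs_eq_natAbs]
      exact_mod_cast h1
    have hbb : ∀ i, |bq i| ≤ (Bn:ℚ) := by
      intro i
      have h1 : (b i).natAbs ≤ Bn :=
        Finset.le_sup (f := fun i => (b i).natAbs) (Finset.mem_univ i)
      rw [hbq, ← Int.cast_abs, Int.abs_eq_natAbs]
      exact_mod_cast h1
    set xq : Fin k → ℚ := fun j => ((x j : ℕ) : ℚ) with hxq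
    have hxq0 : ∀ j, 0 ≤ xq j := fun j => by positivity
    have hxqb : Aq.mulVec xq = bq := by
      funext i
      have h1 := congrFun hsol i
      simp only [Matrix.mulVec, dotProduct] at h1 ⊢
      show ∑ j, Aq i j * xq j = ((b i : ℤ) : ℚ)
      rw [← h1]
      push_cast
      apply Finset.sum_congr rfl
      intro j _
      rw [hAq]
      simp [Matrix.map_apply, hxq]
    obtain ⟨y, n, t, c, hy0, hyb, hysum, ht0, hgoods, heq⟩ :=
      decompose A bq Mn Bn r hM hA hbb hr.symm (qsupp xq).card xq rfl hxq0 hxqb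
    obtain ⟨n', t', c', hn', ht'0, hc'of, hsumeq⟩ :=
      caratheodory_cone Aq r hr.symm n t c ht0 (fun u => (hgoods u).2.2.2.1)
    have hgoods' : ∀ u, IsGood Aq Mn r (c' u) := by
      intro u
      obtain ⟨v, hv⟩ := hc'of u
      rw [hv]
      exact hgoods v
    have heq' : xq = y + ∑ u, t' u • c' u := by rw [heq, hsumeq]
    -- coordinates
    have hcoord : ∀ j, xq j = y j + ∑ u, t' u * c' u j := by
      intro j
      have := congrFun heq' j
      simpa [Finset.sum_apply] using this
    -- minimality gives t' u ≤ 1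
    have ht'le : ∀ u, t' u ≤ 1 := by
      intro u
      by_contra hgt
      push_neg at hgt
      obtain ⟨hint, hnn, hne, hker, hsum⟩ := hgoods' u
      choose cz hcz using hint
      have hcz0 : ∀ j, 0 ≤ cz j := by
        intro j
        have := hnn j
        rw [hcz j] at this
        exact_mod_cast this
      have hczle : ∀ j, (cz j).toNat ≤ x j := by
        intro j
        have h1 : (c' u j : ℚ) ≤ xq j := by
          rw [hcoord j]
          have h2 : t' u * c' u j ≤ ∑ v, t' v * c' v j := by
            apply Finset.single_le_sum (f := fun v => t' v * c' v j)
            · intro v _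
              exact mul_nonneg (ht'0 v) ((hgoods' v).2.1 j)
            · exact Finset.mem_univ u
          have h3 : c' u j ≤ t' u * c' u j := by
            nlinarith [hnn j]
          linarith [hy0 j]
        rw [hcz j] at h1
        have h1' : ((cz j : ℤ) : ℚ) ≤ ((x j : ℕ) : ℚ) := h1
        have h4 : cz j ≤ (x j : ℤ) := by exact_mod_cast h1'
        omega
      set w : Fin k → ℕ := fun j => x j - (cz j).toNat with hw
      have hwz : ∀ j, ((w j : ℕ) : ℤ) = (x j : ℤ) - cz j := by
        intro j
        have := hczle j
        have := hcz0 j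
        simp only [hw]
        omega
      have hczker : A.mulVec cz = 0 := by
        funext i
        have h1 := congrFun hker i
        simp only [Matrix.mulVec, dotProduct, Pi.zero_apply] at h1 ⊢
        have h2 : ∑ j, Aq i j * c' u j = ((∑ j, A i j * cz j : ℤ) : ℚ) := by
          push_cast
          apply Finset.sum_congr rfl
          intro j _
          rw [hcz j, hAq]
          simp [Matrix.map_apply]
        rw [h2] at h1
        exact_mod_cast h1
      have hPw : A.mulVec (fun i => ((w i : ℤ))) = b := by
        have h1 : (fun i => ((w i : ℤ))) = (fun i => ((x i : ℤ))) - cz := by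
          funext j
          simp only [Pi.sub_apply]
          exact hwz j
        rw [h1, Matrix.mulVec_sub, hsol, hczker, sub_zero]
      have hwle : w ≤ x := fun j => by simp only [hw]; omega
      have hxlew := hmin.2 hPw hwle
      have hczzero : ∀ j, cz j = 0 := by
        intro j
        have h1 := hxlew j
        have h2 := hwle j
        have h3 := hczle j
        have h4 := hcz0 j
        simp only [hw] at h1 h2
        omega
      apply hne
      funext j
      rw [hcz j, hczzero j]
      simp
    -- final summation
    have hsumx : ((∑ i, x i : ℕ) : ℚ) = ∑ j, xq j := by
      push_cast [hxq]
      rfl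
    have hcsum : ∀ u, ∑ j, (t' u • c' u) j = t' u * ∑ j, c' u j := by
      intro u
      simp only [Pi.smul_apply, smul_eq_mul]
      rw [Finset.mul_sum]
    set CB1 : ℚ := (((r+1) * r.factorial * Mn ^ r : ℕ) : ℚ) with hCB1
    have hterm : ∀ u, t' u * ∑ j, c' u j ≤ CB1 := by
      intro u
      have hsnn : 0 ≤ ∑ j, c' u j := Finset.sum_nonneg (fun j _ => (hgoods' u).2.1 j)
      have hsle : ∑ j, c' u j ≤ CB1 := (hgoods' u).2.2.2.2
      calc t' u * ∑ j, c' u j ≤ 1 * CB1 :=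
            mul_le_mul (ht'le u) hsle hsnn zero_le_one
        _ = CB1 := one_mul _
    have h1 : ∑ j, xq j = ∑ j, y j + ∑ u, t' u * ∑ j, c' u j := by
      rw [heq']
      simp only [Pi.add_apply, Finset.sum_apply, Pi.smul_apply, smul_eq_mul]
      rw [Finset.sum_add_distrib]
      congr 1
      rw [Finset.sum_comm]
      apply Finset.sum_congr rfl
      intro u _
      rw [Finset.mul_sum]
    have h2 : ∑ u, t' u * ∑ j, c' u j ≤ ((k - r : ℕ) : ℚ) * CB1 := by
      calc ∑ u, t' u * ∑ j, c' u j ≤ Finset.univ.card • CB1 :=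
            Finset.sum_le_card_nsmul _ _ _ (fun u _ => hterm u)
        _ = ((n' : ℕ) : ℚ) * CB1 := by
            rw [Finset.card_univ, Fintype.card_fin, nsmul_eq_mul]
        _ ≤ ((k - r : ℕ) : ℚ) * CB1 := by
            apply mul_le_mul_of_nonneg_right _ (by positivity)
            exact_mod_cast hn'
    have hkey : ∑ j, xq j
        ≤ ((r * r.factorial * Mn ^ (r-1) * Bn + (k - r) * ((r+1) * r.factorial * Mn ^ r) : ℕ) : ℚ) := by
      rw [h1]
      push_cast [hCB1] at hysum h2 ⊢
      linarith
    have hnat := aux_nat_main k Mn Bn r hM hB hr1 hrk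
    have hfinal : ((∑ i, x i : ℕ) : ℚ) ≤ (((1 + k * Mn + Bn) ^ (r+1) : ℕ) : ℚ) := by
      rw [hsumx]
      refine hkey.trans ?_
      exact_mod_cast hnat
    exact_mod_cast hfinal
end

section
/- Let G = (Q, T) be a strongly connected D-VASS, let I ⊆ {1, …, D} with |I| = c ≥ 1, and let n ∈ ℕ satisfy |Q| ≤ 2^n and Σ_{p →^t q ∈ T} ‖t‖∞ ≤ 2^n. Let A be an integer with A > 2^{n+1}. Suppose p⁰(r₀) → p¹(r₁) → ⋯ → p^L(r_L) is an I-walk in G such that for every i ∈ I there exists L' ∈ {0, …, L} with r_{L'}(i) ≥ A^{1+c^c}. Then there is an I-walk in G starting from p⁰(r₀), of length less than A^{(c+1)^{(c+1)}}, whose final location r'' satisfies r''(i) > A − 2^n for every i ∈ I. -/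
/-- An edge (transition) of a `D`-dimensional VASS over state space `Q`:
source state, displacement label in `ℤ^D`, target state. -/
abbrev Edge (D : ℕ) (Q : Type) := Q × (Fin D → ℤ) × Q

/-- A `D`-dimensional vector addition system with states over state space `Q`. -/
structure VASS (D : ℕ) (Q : Type) where
  T : Finset (Edge D Q)

/-- `IsPath G p q π` : `π` is a sequence of consecutive transitions of `G` from `p` to `q`. -/
def IsPath {D : ℕ} {Q : Type} (G : VASS D Q) : Q → Q → List (Edge D Q) → Prop
  | p, q, [] => p = q
  | p, q, e :: π => e ∈ G.T ∧ e.1 = p ∧ IsPath G e.2.2 q π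

/-- The displacement of a path: the sum of its labels. -/
def disp {D : ℕ} {Q : Type} (π : List (Edge D Q)) : Fin D → ℤ :=
  fun i => (π.map fun e => e.2.1 i).sum

namespace Rackoff

variable {D : ℕ} {Q : Type}

/-- State reached after following a list of edges from `p`. -/
def endSt (p : Q) (l : List (Edge D Q)) : Q := l.foldl (fun _ e => e.2.2) p

lemma disp_append (a b : List (Edge D Q)) (i : Fin D) :
    disp (a ++ b) i = disp a i + disp b i := by simp [disp]

lemma disp_take_succ (l : List (Edge D Q)) (g : ℕ) (hg : g < l.length) (i : Fin D) :
    disp (l.take (g+1)) i = disp (l.take g) i + (l.get ⟨g, hg⟩).2.1 i := by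
  show (List.map _ (l.take (g+1))).sum = _
  rw [List.map_take, List.sum_take_succ _ _ (by simpa using hg)]
  simp [disp, List.map_take]

lemma isPath_append {G : VASS D Q} {p r q : Q} {a b : List (Edge D Q)}
    (h1 : IsPath G p r a) (h2 : IsPath G r q b) : IsPath G p q (a ++ b) := by
  induction a generalizing p with
  | nil => cases h1; simpa using h2
  | cons e t ih => exact ⟨h1.1, h1.2.1, ih h1.2.2⟩

lemma isPath_take_drop {G : VASS D Q} {q : Q} {π : List (Edge D Q)} :
    ∀ (g : ℕ) (p : Q), IsPath G p q π →
      IsPath G p (endSt p (π.take g)) (π.take g) ∧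
      IsPath G (endSt p (π.take g)) q (π.drop g) := by
  induction π with
  | nil => intro g p h; simp [endSt]; exact ⟨rfl, h⟩
  | cons e t ih =>
    intro g p h
    cases g with
    | zero => exact ⟨rfl, h⟩
    | succ g =>
      obtain ⟨he, hp, ht⟩ := h
      have := ih g e.2.2 ht
      exact ⟨⟨he, hp, by simpa [endSt] using this.1⟩, by simpa [endSt] using this.2⟩

lemma isPath_mem_T {G : VASS D Q} {p q : Q} {π : List (Edge D Q)}
    (h : IsPath G p q π) : ∀ e ∈ π, e ∈ G.T := by
  induction π generalizing p with
  | nil => simp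
  | cons e t ih =>
    intro a ha
    rcases List.mem_cons.1 ha with rfl | ha
    · exact h.1
    · exact ih h.2.2 a ha

lemma label_bound {G : VASS D Q} {n : ℕ}
    (hT : (∑ e ∈ G.T, Finset.univ.sup fun i => (e.2.1 i).natAbs) ≤ 2 ^ n)
    {e : Edge D Q} (he : e ∈ G.T) (i : Fin D) : |e.2.1 i| ≤ (2 ^ n : ℤ) := by
  have h1 : (e.2.1 i).natAbs ≤ Finset.univ.sup fun j => (e.2.1 j).natAbs :=
    Finset.le_sup (f := fun j => (e.2.1 j).natAbs) (Finset.mem_univ i)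
  have h2 : (Finset.univ.sup fun j => (e.2.1 j).natAbs)
      ≤ ∑ e ∈ G.T, Finset.univ.sup fun i => (e.2.1 i).natAbs :=
    Finset.single_le_sum (f := fun e => Finset.univ.sup fun i => (e.2.1 i).natAbs)
      (fun _ _ => Nat.zero_le _) he
  have h3 : (e.2.1 i).natAbs ≤ 2 ^ n := le_trans (le_trans h1 h2) hT
  calc |e.2.1 i| = ((e.2.1 i).natAbs : ℤ) := Int.abs_eq_natAbs _
    _ ≤ ((2 ^ n : ℕ) : ℤ) := by exact_mod_cast h3
    _ = (2 ^ n : ℤ) := by push_cast; ring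

lemma disp_bound {G : VASS D Q} {n : ℕ}
    (hT : (∑ e ∈ G.T, Finset.univ.sup fun i => (e.2.1 i).natAbs) ≤ 2 ^ n)
    {l : List (Edge D Q)} (hl : ∀ e ∈ l, e ∈ G.T) (i : Fin D) :
    |disp l i| ≤ (l.length : ℤ) * 2 ^ n := by
  induction l with
  | nil => simp [disp]
  | cons e t ih =>
    have h1 : |disp t i| ≤ (t.length : ℤ) * 2 ^ n :=
      ih (fun a ha => hl a (List.mem_cons_of_mem _ ha))
    have h2 : |e.2.1 i| ≤ (2 ^ n : ℤ) := label_bound hT (hl e List.mem_cons_self) i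
    have h3 : disp (e :: t) i = e.2.1 i + disp t i := by simp [disp]
    rw [h3]
    calc |e.2.1 i + disp t i| ≤ |e.2.1 i| + |disp t i| := abs_add_le _ _
      _ ≤ 2 ^ n + (t.length : ℤ) * 2 ^ n := add_le_add h2 h1
      _ = ((e :: t).length : ℤ) * 2 ^ n := by push_cast [List.length_cons]; ring

lemma exp_ineq {c : ℕ} (hc : 1 ≤ c) : 2 + c + c ^ (c + 1) ≤ (c + 1) ^ (c + 1) := by
  obtain ⟨d, rfl⟩ := Nat.exists_eq_add_of_le hc
  have h1 : (1 + d + 1) ^ (1 + d + 1) = (d + 2) ^ 2 * (d + 2) ^ d := by ring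
  have h2 : (d + 2) ^ d ≥ (1 + d) ^ d := Nat.pow_le_pow_left (by omega) d
  have h3 : (d + 2) ^ 2 * (d + 2) ^ d ≥ (d + 2) ^ 2 * (1 + d) ^ d :=
    Nat.mul_le_mul_left _ h2
  have h4 : (d + 2) ^ 2 * (1 + d) ^ d
      = (1 + d) ^ (d + 2) + 2 * (1 + d) ^ (d + 1) + (1 + d) ^ d := by ring
  have h5 : (1 + d) ^ (d + 1) ≥ 1 + d := Nat.le_self_pow (by omega) _
  have h6 : (1 + d) ^ d ≥ 1 := Nat.one_le_pow _ _ (by omega)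
  have h7 : (1 + d) ^ (1 + d + 1) = (1 + d) ^ (d + 2) := by ring_nf
  omega

lemma shorten [Fintype Q] (G : VASS D Q) (I : Finset (Fin D)) (r : Fin D → ℤ) (B : ℕ)
    (hB : 0 < B) :
    ∀ (N : ℕ) (π : List (Edge D Q)) (p q : Q), π.length ≤ N → IsPath G p q π →
    (∀ g ≤ π.length, ∀ i ∈ I, 0 ≤ r i + disp (π.take g) i ∧ r i + disp (π.take g) i < B) →
    ∃ σ : List (Edge D Q), IsPath G p q σ ∧
      (∀ i ∈ I, disp σ i = disp π i) ∧
      (∀ g ≤ σ.length, ∀ i ∈ I, 0 ≤ r i + disp (σ.take g) i) ∧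
      σ.length < Fintype.card Q * B ^ I.card := by
  intro N
  induction N with
  | zero =>
    intro π p q hlen hπ hbdd
    have : π = [] := List.length_eq_zero_iff.mp (Nat.le_zero.mp hlen)
    subst this
    refine ⟨[], hπ, fun _ _ => rfl, ?_, ?_⟩
    · intro g hg i hi
      simpa using (hbdd 0 (by simp) i hi).1
    · have h1 : 0 < Fintype.card Q := Fintype.card_pos_iff.mpr ⟨p⟩
      have h2 : 0 < B ^ I.card := Nat.pow_pos hB
      simpa using Nat.mul_pos h1 h2
  | succ N ih =>
    intro π p q hlen hπ hbdd
    by_cases hshort : π.length < Fintype.card Q * B ^ I.card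
    · exact ⟨π, hπ, fun _ _ => rfl, fun g hg i hi => (hbdd g hg i hi).1, hshort⟩
    push_neg at hshort
    classical
    set L := π.length with hL
    have hval : ∀ g ≤ L, ∀ i : I, (r i + disp (π.take g) i).toNat < B := by
      intro g hg i
      have h := hbdd g hg i i.2
      omega
    let f : Fin (L + 1) → Q × (I → Fin B) := fun g =>
      (endSt p (π.take g), fun i => ⟨(r i + disp (π.take g) i).toNat,
        hval g (Nat.lt_succ_iff.mp g.2) i⟩)
    have hcardlt : Fintype.card (Q × (I → Fin B)) < Fintype.card (Fin (L + 1)) := by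
      rw [Fintype.card_prod, Fintype.card_fun, Fintype.card_fin, Fintype.card_coe,
        Fintype.card_fin]
      omega
    obtain ⟨x, y, hxy, hfxy⟩ := Fintype.exists_ne_map_eq_of_card_lt f hcardlt
    have key : ∀ (g1 g2 : ℕ) (h12 : g1 < g2) (h2L : g2 ≤ L),
        f ⟨g1, by omega⟩ = f ⟨g2, by omega⟩ →
        ∃ σ : List (Edge D Q), IsPath G p q σ ∧
          (∀ i ∈ I, disp σ i = disp π i) ∧
          (∀ g ≤ σ.length, ∀ i ∈ I, 0 ≤ r i + disp (σ.take g) i) ∧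
          σ.length < Fintype.card Q * B ^ I.card := by
      intro g1 g2 h12 h2L hf
      have hst : endSt p (π.take g1) = endSt p (π.take g2) := congrArg Prod.fst hf
      have hdeq : ∀ i ∈ I, disp (π.take g1) i = disp (π.take g2) i := by
        intro i hi
        have heq := congrFun (congrArg Prod.snd hf) ⟨i, hi⟩
        have h1 := (hbdd g1 (le_of_lt (lt_of_lt_of_le h12 h2L)) i hi).1
        have h2 := (hbdd g2 h2L i hi).1
        have := congrArg (fun x : Fin B => (x : ℤ)) heq
        simp only [f, Int.toNat_of_nonneg h1, Int.toNat_of_nonneg h2] at this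
        omega
      set π' : List (Edge D Q) := π.take g1 ++ π.drop g2 with hπ'
      have hlen1 : (π.take g1).length = g1 := by
        rw [List.length_take]; omega
      have hlen' : π'.length = g1 + (L - g2) := by
        rw [hπ', List.length_append, hlen1, List.length_drop]
      have hp1 := (isPath_take_drop g1 p hπ).1
      have hp2 := (isPath_take_drop g2 p hπ).2
      rw [← hst] at hp2
      have hpath' : IsPath G p q π' := isPath_append hp1 hp2
      have htake_le : ∀ g ≤ g1, π'.take g = π.take g := by
        intro g hg
        rw [hπ', List.take_append, hlen1, Nat.sub_eq_zero_of_le hg,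
          List.take_take, min_eq_left hg, List.take_zero, List.append_nil]
      have htake_gt : ∀ g, g1 ≤ g → ∀ i,
          disp (π'.take g) i = disp (π.take g1) i - disp (π.take g2) i
            + disp (π.take (g2 + (g - g1))) i := by
        intro g hg i
        have e1 : π'.take g = π.take g1 ++ (π.drop g2).take (g - g1) := by
          rw [hπ', List.take_append,
            List.take_of_length_le (by rw [hlen1]; exact hg), hlen1]
        have e2 : π.take (g2 + (g - g1)) = π.take g2 ++ (π.drop g2).take (g - g1) :=
          List.take_add ..
        rw [e1, e2, disp_append, disp_append]
        ring
      have hlenN : π'.length ≤ N := by omega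
      have hbdd' : ∀ g ≤ π'.length, ∀ i ∈ I,
          0 ≤ r i + disp (π'.take g) i ∧ r i + disp (π'.take g) i < B := by
        intro g hg i hi
        by_cases hgg : g ≤ g1
        · rw [htake_le g hgg]
          exact hbdd g (by omega) i hi
        · push_neg at hgg
          have h3 : disp (π'.take g) i = disp (π.take (g2 + (g - g1))) i := by
            rw [htake_gt g (le_of_lt hgg) i, hdeq i hi]; ring
          rw [h3]
          exact hbdd (g2 + (g - g1)) (by omega) i hi
      obtain ⟨σ, hσp, hσd, hσn, hσl⟩ := ih π' p q hlenN hpath' hbdd'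
      refine ⟨σ, hσp, ?_, hσn, hσl⟩
      intro i hi
      have h4 : disp π' i = disp π i := by
        have h6 := htake_gt π'.length (by omega) i
        rw [List.take_length] at h6
        have h5 : g2 + (π'.length - g1) = L := by omega
        rw [h6, h5, hdeq i hi, hL, List.take_length]
        ring
      rw [hσd i hi, h4]
    rcases Nat.lt_trichotomy x.val y.val with h | h | h
    · exact key x.val y.val h (by omega) (by convert hfxy using 2 <;> omega)
    · exact absurd (Fin.val_injective h) hxy
    · exact key y.val x.val h (by omega) (by convert hfxy.symm using 2 <;> omega)

lemma main [Fintype Q] (G : VASS D Q) (n : ℕ)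
    (hQ : Fintype.card Q ≤ 2 ^ n)
    (hT : (∑ e ∈ G.T, Finset.univ.sup fun i => (e.2.1 i).natAbs) ≤ 2 ^ n)
    (A : ℤ) (hA : 2 ^ (n + 1) < A) :
    ∀ (c : ℕ) (I : Finset (Fin D)), I.card = c →
    ∀ (p₀ pL : Q) (r₀ : Fin D → ℤ) (π : List (Edge D Q)),
    IsPath G p₀ pL π →
    (∀ g ≤ π.length, ∀ i ∈ I, 0 ≤ r₀ i + disp (π.take g) i) →
    (∀ i ∈ I, ∃ g ≤ π.length, A ^ (1 + c ^ c) ≤ r₀ i + disp (π.take g) i) →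
    ∃ (σ : List (Edge D Q)) (q'' : Q),
      IsPath G p₀ q'' σ ∧
      (∀ g ≤ σ.length, ∀ i ∈ I, 0 ≤ r₀ i + disp (σ.take g) i) ∧
      (σ.length : ℤ) < A ^ ((c + 1) ^ (c + 1)) ∧
      (∀ i ∈ I, A - 2 ^ n < r₀ i + disp σ i) := by
  classical
  have h2n1 : (1 : ℤ) ≤ 2 ^ n := one_le_pow₀ (by norm_num)
  have h2nA : 2 * 2 ^ n < A := by
    have : (2 : ℤ) ^ (n + 1) = 2 * 2 ^ n := by rw [pow_succ]; ring
    omega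
  have hA3 : (3 : ℤ) ≤ A := by omega
  intro c
  induction c with
  | zero =>
    intro I hI p₀ pL r₀ π hπ hnn hhigh
    have hIe : I = ∅ := Finset.card_eq_zero.mp hI
    subst hIe
    refine ⟨[], p₀, rfl, ?_, ?_, ?_⟩
    · intro g hg i hi; exact absurd hi (Finset.notMem_empty i)
    · simpa using by omega
    · intro i hi; exact absurd hi (Finset.notMem_empty i)
  | succ c ih =>
    intro I hI p₀ pL r₀ π hπ hnn hhigh
    set k : ℕ := (c + 1) ^ (c + 1) with hk
    have hk1 : 1 ≤ k := Nat.one_le_pow _ _ (by omega)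
    have hAkpos : (0 : ℤ) < A ^ k := pow_pos (by omega) _
    have hAAk : A ≤ A ^ k := by
      calc A = A ^ 1 := (pow_one A).symm
        _ ≤ A ^ k := pow_le_pow_right₀ (by omega) hk1
    set M : ℤ := 2 ^ n * A ^ k + A with hM
    have hMpos : 0 < M := by positivity
    have hpow1k : A ^ (1 + k) = A * A ^ k := by rw [pow_add, pow_one]
    have hMle : M + 2 ^ n ≤ A ^ (1 + k) := by
      rw [hpow1k, hM]
      nlinarith [hAkpos, hAAk, h2nA, h2n1]
    -- threshold exponent is 1 + k
    have hthr : ∀ i ∈ I, ∃ g ≤ π.length, A ^ (1 + k) ≤ r₀ i + disp (π.take g) i := by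
      simpa [hk] using hhigh
    -- find τ : first time some coordinate reaches M
    have hex : ∃ g, g ≤ π.length ∧ ∃ i ∈ I, M ≤ r₀ i + disp (π.take g) i := by
      have hIne : I.Nonempty := Finset.card_pos.mp (by omega)
      obtain ⟨i₀, hi₀⟩ := hIne
      obtain ⟨g, hg, hge⟩ := hthr i₀ hi₀
      exact ⟨g, hg, i₀, hi₀, le_trans (by omega) hge⟩
    set τ := Nat.find hex with hτ
    obtain ⟨hτlen, istar, histar, hMτ⟩ := Nat.find_spec hex
    have hmin : ∀ g < τ, ∀ i ∈ I, r₀ i + disp (π.take g) i < M := by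
      intro g hg i hi
      by_contra hcon
      push_neg at hcon
      exact Nat.find_min hex hg ⟨by omega, i, hi, hcon⟩
    -- prefix σ₁
    set qτ := endSt p₀ (π.take τ) with hqτ
    have hppre := (isPath_take_drop τ p₀ hπ).1
    have hpsuf := (isPath_take_drop τ p₀ hπ).2
    obtain ⟨σ₁, hσ₁path, hσ₁disp, hσ₁nn, hσ₁len⟩ :
        ∃ σ₁ : List (Edge D Q), IsPath G p₀ qτ σ₁ ∧
          (∀ i ∈ I, disp σ₁ i = disp (π.take τ) i) ∧
          (∀ g ≤ σ₁.length, ∀ i ∈ I, 0 ≤ r₀ i + disp (σ₁.take g) i) ∧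
          (σ₁.length : ℤ) < 2 ^ n * (M + 2 ^ n) ^ (c + 1) := by
      rcases Nat.eq_zero_or_pos τ with hτ0 | hτpos
      · refine ⟨[], ?_, ?_, ?_, ?_⟩
        · rw [hqτ, hτ0]; simp [endSt]; rfl
        · intro i hi; rw [hτ0]; simp
        · intro g hg i hi
          simp only [List.length_nil, Nat.le_zero] at hg
          subst hg
          simpa using hnn 0 (by omega) i hi
        · simp only [List.length_nil, Nat.cast_zero]
          positivity
      · -- bounded prefix: all values in [0, M + 2^n)
        have hlentake : (π.take τ).length = τ := by rw [List.length_take]; omega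
        have hbdd : ∀ g ≤ (π.take τ).length, ∀ i ∈ I,
            0 ≤ r₀ i + disp ((π.take τ).take g) i ∧
            r₀ i + disp ((π.take τ).take g) i < ((M + 2 ^ n).toNat : ℤ) := by
          intro g hg i hi
          rw [hlentake] at hg
          have htt : (π.take τ).take g = π.take g := by
            rw [List.take_take, min_eq_left hg]
          rw [htt]
          have hnn' := hnn g (by omega) i hi
          have hcast : ((M + 2 ^ n).toNat : ℤ) = M + 2 ^ n :=
            Int.toNat_of_nonneg (by omega)
          rw [hcast]
          refine ⟨hnn', ?_⟩
          rcases Nat.lt_or_ge g τ with hgτ | hgτ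
          · have := hmin g hgτ i hi; omega
          · -- g = τ
            have hgeq : g = τ := by omega
            rcases Nat.eq_zero_or_pos g with h0 | hpos
            · omega
            · have hglt : g - 1 < π.length := by omega
              have hstep := disp_take_succ π (g - 1) hglt i
              have hg1 : g - 1 + 1 = g := by omega
              rw [hg1] at hstep
              have hmem : π.get ⟨g - 1, hglt⟩ ∈ G.T :=
                isPath_mem_T hπ _ (List.get_mem π _)
              have hlab := label_bound hT hmem i
              have hprev := hmin (g - 1) (by omega) i hi
              have habs : |(π.get ⟨g - 1, hglt⟩).2.1 i| ≤ (2 ^ n : ℤ) := hlab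
              have : r₀ i + disp (π.take g) i
                  = (r₀ i + disp (π.take (g - 1)) i) + (π.get ⟨g - 1, hglt⟩).2.1 i := by
                rw [hstep]; ring
              rw [this]
              have := abs_le.mp habs
              omega
        obtain ⟨σ₁, hp, hd, hn', hl⟩ := shorten G I r₀ (M + 2 ^ n).toNat
          (by omega) (π.take τ).length (π.take τ) p₀ qτ le_rfl hppre hbdd
        refine ⟨σ₁, hp, hd, hn', ?_⟩
        have hcast : ((M + 2 ^ n).toNat : ℤ) = M + 2 ^ n := Int.toNat_of_nonneg (by omega)
        have hlz : (σ₁.length : ℤ) < (Fintype.card Q : ℤ) * (M + 2 ^ n) ^ I.card := by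
          have := hl
          have hc2 : ((Fintype.card Q * (M + 2 ^ n).toNat ^ I.card : ℕ) : ℤ)
              = (Fintype.card Q : ℤ) * (M + 2 ^ n) ^ I.card := by
            push_cast [hcast]
            ring
          calc (σ₁.length : ℤ) < ((Fintype.card Q * (M + 2 ^ n).toNat ^ I.card : ℕ) : ℤ) := by
                exact_mod_cast hl
            _ = (Fintype.card Q : ℤ) * (M + 2 ^ n) ^ I.card := hc2
        have hQz : (Fintype.card Q : ℤ) ≤ 2 ^ n := by exact_mod_cast hQ
        have hMn : (0 : ℤ) ≤ (M + 2 ^ n) ^ I.card := by positivity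
        calc (σ₁.length : ℤ) < (Fintype.card Q : ℤ) * (M + 2 ^ n) ^ I.card := hlz
          _ ≤ 2 ^ n * (M + 2 ^ n) ^ I.card := mul_le_mul_of_nonneg_right hQz hMn
          _ = 2 ^ n * (M + 2 ^ n) ^ (c + 1) := by rw [hI]
    -- suffix
    set ρ := π.drop τ with hρ
    set r' : Fin D → ℤ := fun j => r₀ j + disp (π.take τ) j with hr'
    have hρlen : ρ.length = π.length - τ := by simp [hρ]
    have hsplit : ∀ g i, disp (π.take (τ + g)) i = disp (π.take τ) i + disp (ρ.take g) i := by
      intro g i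
      rw [List.take_add, disp_append]
    set I' := I.erase istar with hI'
    have hI'card : I'.card = c := by
      rw [hI', Finset.card_erase_of_mem histar, hI]
      omega
    have hI'sub : ∀ i ∈ I', i ∈ I := fun i hi => Finset.mem_of_mem_erase hi
    have hρnn : ∀ g ≤ ρ.length, ∀ i ∈ I', 0 ≤ r' i + disp (ρ.take g) i := by
      intro g hg i hi
      have h := hnn (τ + g) (by omega) i (hI'sub i hi)
      rw [hsplit g i] at h
      simp only [hr']
      linarith [h]
    have hτle : ∀ i ∈ I, ∀ g ≤ π.length, A ^ (1 + k) ≤ r₀ i + disp (π.take g) i → τ ≤ g := by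
      intro i hi g hg hge
      by_contra hcon
      push_neg at hcon
      have := hmin g hcon i hi
      have hMA : M ≤ A ^ (1 + k) := by omega
      omega
    have hρhigh : ∀ i ∈ I', ∃ g ≤ ρ.length, A ^ (1 + c ^ c) ≤ r' i + disp (ρ.take g) i := by
      intro i hi
      obtain ⟨g, hg, hge⟩ := hthr i (hI'sub i hi)
      have hτg : τ ≤ g := hτle i (hI'sub i hi) g hg hge
      refine ⟨g - τ, by omega, ?_⟩
      have heq : τ + (g - τ) = g := by omega
      have h := hsplit (g - τ) i
      rw [heq] at h
      have hexple : A ^ (1 + c ^ c) ≤ A ^ (1 + k) := by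
        apply pow_le_pow_right₀ (by omega)
        have h1 : c ^ c ≤ (c + 1) ^ c := Nat.pow_le_pow_left (by omega) c
        have h2 : (c + 1) ^ c ≤ (c + 1) ^ (c + 1) := Nat.pow_le_pow_right (by omega) (by omega)
        omega
      simp only [hr']
      omega
    obtain ⟨σ₂, q'', hσ₂path, hσ₂nn, hσ₂len, hσ₂fin⟩ :=
      ih I' hI'card qτ pL r' ρ hpsuf hρnn hρhigh
    -- note IH bound exponent : (c+1)^(c+1) = k
    have hσ₂len' : (σ₂.length : ℤ) < A ^ k := by simpa [hk] using hσ₂len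
    have hσ₂T : ∀ e ∈ σ₂, e ∈ G.T := isPath_mem_T hσ₂path
    have hwstar : M ≤ r' istar := by simpa [hr'] using hMτ
    -- the combined walk
    refine ⟨σ₁ ++ σ₂, q'', isPath_append hσ₁path hσ₂path, ?_, ?_, ?_⟩
    · -- nonnegativity
      intro g hg i hi
      rcases Nat.lt_or_ge g (σ₁.length + 1) with hgle | hggt
      · have htg : (σ₁ ++ σ₂).take g = σ₁.take g := by
          rw [List.take_append, Nat.sub_eq_zero_of_le (by omega),
            List.take_zero, List.append_nil]
        rw [htg]
        exact hσ₁nn g (by omega) i hi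
      · have htg : (σ₁ ++ σ₂).take g = σ₁ ++ σ₂.take (g - σ₁.length) := by
          rw [List.take_append, List.take_of_length_le (by omega)]
        rw [htg, disp_append]
        have hdisp1 : disp σ₁ i = disp (π.take τ) i := hσ₁disp i hi
        set m := g - σ₁.length with hm
        have hmle : m ≤ σ₂.length := by
          rw [List.length_append] at hg
          omega
        rcases eq_or_ne i istar with rfl | hne
        · -- coordinate istar stays high
          have hTm : ∀ e ∈ σ₂.take m, e ∈ G.T :=
            fun e he => hσ₂T e (List.take_subset m σ₂ he)
          have hb := disp_bound hT hTm i
          have habs := abs_le.mp hb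
          have hlen2 : ((σ₂.take m).length : ℤ) ≤ A ^ k - 1 := by
            have : (σ₂.take m).length ≤ σ₂.length := by
              rw [List.length_take]; omega
            have h2 : ((σ₂.take m).length : ℤ) ≤ (σ₂.length : ℤ) := by exact_mod_cast this
            omega
          have hmul : ((σ₂.take m).length : ℤ) * 2 ^ n ≤ (A ^ k - 1) * 2 ^ n :=
            mul_le_mul_of_nonneg_right hlen2 (by positivity)
          have : (A ^ k - 1) * 2 ^ n = 2 ^ n * A ^ k - 2 ^ n := by ring
          rw [hdisp1]
          have hws : M ≤ r₀ i + disp (π.take τ) i := hMτ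
          rw [hM] at hws
          omega
        · have hiI' : i ∈ I' := Finset.mem_erase.mpr ⟨hne, hi⟩
          have := hσ₂nn m hmle i hiI'
          rw [hdisp1]
          simp only [hr'] at this
          omega
    · -- length
      rw [List.length_append]
      set E : ℕ := 1 + (1 + k) * (c + 1) with hE
      have hbase : (0 : ℤ) ≤ M + 2 ^ n := by omega
      have hpowle : (M + 2 ^ n) ^ (c + 1) ≤ (A ^ (1 + k)) ^ (c + 1) :=
        pow_le_pow_left₀ hbase hMle _
      have h2A : (2 : ℤ) ^ n ≤ A := by omega
      have hApow : (0 : ℤ) ≤ (A ^ (1 + k)) ^ (c + 1) := by positivity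
      have hlen1 : (σ₁.length : ℤ) < A * (A ^ (1 + k)) ^ (c + 1) := by
        calc (σ₁.length : ℤ) < 2 ^ n * (M + 2 ^ n) ^ (c + 1) := hσ₁len
          _ ≤ 2 ^ n * (A ^ (1 + k)) ^ (c + 1) :=
              mul_le_mul_of_nonneg_left hpowle (by positivity)
          _ ≤ A * (A ^ (1 + k)) ^ (c + 1) := mul_le_mul_of_nonneg_right h2A hApow
      have hEeq : A * (A ^ (1 + k)) ^ (c + 1) = A ^ E := by
        rw [hE, ← pow_mul, pow_add, pow_one]
      have hE' : E = 1 + (1 + k) * (c + 1) := hE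
      have hexpand : (1 + k) * (c + 1) = (c + 1) + k * (c + 1) := by ring
      have hkE : A ^ k ≤ A ^ E := by
        apply pow_le_pow_right₀ (by omega)
        have h1 : k * 1 ≤ k * (c + 1) := Nat.mul_le_mul_left _ (by omega)
        have h2 : k * 1 = k := by ring
        omega
      have hEtarget : E + 1 ≤ (c + 1 + 1) ^ (c + 1 + 1) := by
        have e1 := exp_ineq (c := c + 1) (by omega)
        have hkc : (c + 1) ^ (c + 1 + 1) = k * (c + 1) := by rw [hk, pow_succ]
        rw [hkc] at e1
        omega
      have hfin : A ^ E + A ^ E ≤ A ^ (E + 1) := by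
        have hAE : (0 : ℤ) < A ^ E := pow_pos (by omega) E
        have h1 : A ^ E * 2 ≤ A ^ E * A := mul_le_mul_of_nonneg_left (by omega) (le_of_lt hAE)
        rw [pow_succ]
        linarith [h1]
      have htar : A ^ (E + 1) ≤ A ^ ((c + 1 + 1) ^ (c + 1 + 1)) :=
        pow_le_pow_right₀ (by omega) hEtarget
      push_cast
      rw [hEeq] at hlen1
      calc (σ₁.length : ℤ) + σ₂.length < A ^ E + A ^ k := by linarith
        _ ≤ A ^ E + A ^ E := by linarith [hkE]
        _ ≤ A ^ (E + 1) := hfin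
        _ ≤ A ^ ((c + 1 + 1) ^ (c + 1 + 1)) := htar
    · -- final values
      intro i hi
      rw [disp_append, hσ₁disp i hi]
      rcases eq_or_ne i istar with rfl | hne
      · have hb := disp_bound hT hσ₂T i
        have habs := abs_le.mp hb
        have hlen2 : (σ₂.length : ℤ) ≤ A ^ k - 1 := by omega
        have hmul : (σ₂.length : ℤ) * 2 ^ n ≤ (A ^ k - 1) * 2 ^ n :=
          mul_le_mul_of_nonneg_right hlen2 (by positivity)
        have hexp : (A ^ k - 1) * 2 ^ n = 2 ^ n * A ^ k - 2 ^ n := by ring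
        have hws : M ≤ r₀ i + disp (π.take τ) i := hMτ
        rw [hM] at hws
        omega
      · have hiI' : i ∈ I' := Finset.mem_erase.mpr ⟨hne, hi⟩
        have := hσ₂fin i hiI'
        simp only [hr'] at this
        omega

end Rackoff

/-- Rackoff-style lemma, part (I): if along an `I`-walk every coordinate of `I` gets at
least as large as `A^{1+c^c}` at some point, then there is a short `I`-walk from the same
starting configuration whose final location is `> A - 2^n` on all coordinates of `I`. -/
theorem rackoff_part_I (D : ℕ) (Q : Type) [Fintype Q] (G : VASS D Q)
    (hsc : ∀ p q : Q, ∃ π : List (Edge D Q), IsPath G p q π)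
    (I : Finset (Fin D)) (c : ℕ) (hc : c = I.card) (hc1 : 1 ≤ c)
    (n : ℕ) (hQ : Fintype.card Q ≤ 2 ^ n)
    (hT : (∑ e ∈ G.T, Finset.univ.sup fun i => (e.2.1 i).natAbs) ≤ 2 ^ n)
    (A : ℤ) (hA : 2 ^ (n + 1) < A)
    (p₀ pL : Q) (r₀ : Fin D → ℤ) (π : List (Edge D Q))
    (hπ : IsPath G p₀ pL π)
    (hIwalk : ∀ g ≤ π.length, ∀ i ∈ I, 0 ≤ r₀ i + disp (π.take g) i)
    (hhigh : ∀ i ∈ I, ∃ g ≤ π.length, A ^ (1 + c ^ c) ≤ r₀ i + disp (π.take g) i) :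
    ∃ (σ : List (Edge D Q)) (q'' : Q),
      IsPath G p₀ q'' σ ∧
      (∀ g ≤ σ.length, ∀ i ∈ I, 0 ≤ r₀ i + disp (σ.take g) i) ∧
      (σ.length : ℤ) < A ^ ((c + 1) ^ (c + 1)) ∧
      (∀ i ∈ I, A - 2 ^ n < r₀ i + disp σ i) :=
  Rackoff.main G n hQ hT A hA c I hc.symm p₀ pL r₀ π hπ hIwalk hhigh
end

section
/- Let G = (Q, T) be a strongly connected D-VASS, let I ⊆ {1, …, D} with |I| = c ≥ 1, and let n ∈ ℕ satisfy |Q| ≤ 2^n and Σ_{p →^t q ∈ T} ‖t‖∞ ≤ 2^n. Let A be an integer with A > 2^{n+1}. Suppose p⁰(r₀) → p¹(r₁) → ⋯ → p^L(r_L) is an I-walk in G such that for every i ∈ I there exists L' ∈ {0, …, L} with r_{L'}(i) ≥ A^{1+c^c}. Then there is an I-walk p⁰(r₀) →^σ p⁰(r) in G, returning to the starting state p⁰, with |σ| < A^{(c+1)^{(c+1)}} and r(i) > A − 2^{n+1} for every i ∈ I. -/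
namespace Rack
variable {D : ℕ} {Q : Type} {G : VASS D Q}

def stateAt (p : Q) : List (Edge D Q) → ℕ → Q
  | _, 0 => p
  | [], _+1 => p
  | e :: π, g+1 => stateAt e.2.2 π g

@[simp] lemma stateAt_zero (p : Q) (π : List (Edge D Q)) : stateAt p π 0 = p := by
  cases π <;> rfl

@[simp] lemma stateAt_nil (p : Q) (g : ℕ) : stateAt p ([] : List (Edge D Q)) g = p := by
  cases g <;> rfl

@[simp] lemma stateAt_cons (p : Q) (e : Edge D Q) (π : List (Edge D Q)) (g : ℕ) :
    stateAt p (e :: π) (g+1) = stateAt e.2.2 π g := rfl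

@[simp] lemma disp_nil (i : Fin D) : disp ([] : List (Edge D Q)) i = 0 := rfl

@[simp] lemma disp_cons (e : Edge D Q) (π : List (Edge D Q)) (i : Fin D) :
    disp (e :: π) i = e.2.1 i + disp π i := by simp [disp]

lemma disp_append (π₁ π₂ : List (Edge D Q)) (i : Fin D) :
    disp (π₁ ++ π₂) i = disp π₁ i + disp π₂ i := by simp [disp]

lemma isPath_nil (p : Q) : IsPath G p p [] := by simp [IsPath]

lemma isPath_append {p a q : Q} {π₁ π₂ : List (Edge D Q)}
    (h₁ : IsPath G p a π₁) (h₂ : IsPath G a q π₂) : IsPath G p q (π₁ ++ π₂) := by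
  induction π₁ generalizing p with
  | nil => cases h₁; simpa using h₂
  | cons e π ih => exact ⟨h₁.1, h₁.2.1, ih h₁.2.2⟩

lemma isPath_take_drop {p q : Q} {π : List (Edge D Q)} (h : IsPath G p q π) (g : ℕ) :
    IsPath G p (stateAt p π g) (π.take g) ∧ IsPath G (stateAt p π g) q (π.drop g) := by
  induction π generalizing p g with
  | nil => cases h; simp [IsPath]
  | cons e π ih =>
    cases g with
    | zero => exact ⟨rfl, h⟩
    | succ g =>
      obtain ⟨he, hs, hrest⟩ := h
      exact ⟨⟨he, hs, (ih hrest g).1⟩, (ih hrest g).2⟩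

lemma stateAt_append_le {p : Q} {π₁ π₂ : List (Edge D Q)} {g : ℕ} (hg : g ≤ π₁.length) :
    stateAt p (π₁ ++ π₂) g = stateAt p π₁ g := by
  induction π₁ generalizing p g with
  | nil =>
    simp only [List.length_nil, Nat.le_zero] at hg
    subst hg; simp
  | cons e π ih =>
    cases g with
    | zero => simp
    | succ g => simpa using ih (Nat.succ_le_succ_iff.mp hg)

lemma stateAt_append_add (p : Q) (π₁ π₂ : List (Edge D Q)) (g : ℕ) :
    stateAt p (π₁ ++ π₂) (π₁.length + g) = stateAt (stateAt p π₁ π₁.length) π₂ g := by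
  induction π₁ generalizing p with
  | nil => simp
  | cons e π ih => simpa [Nat.succ_add] using ih e.2.2

lemma stateAt_take {p : Q} {π : List (Edge D Q)} {g k : ℕ} (hg : g ≤ k) (hl : g ≤ π.length) :
    stateAt p (π.take k) g = stateAt p π g := by
  conv_rhs => rw [← List.take_append_drop k π]
  rw [stateAt_append_le]
  simpa using le_min hg hl

lemma endState_eq {p q : Q} {π : List (Edge D Q)} (h : IsPath G p q π) :
    stateAt p π π.length = q := by
  induction π generalizing p with
  | nil => cases h; rfl
  | cons e π ih => exact ih h.2.2

lemma mem_T_of_isPath {p q : Q} {π : List (Edge D Q)} (h : IsPath G p q π) :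
    ∀ e ∈ π, e ∈ G.T := by
  induction π generalizing p with
  | nil => simp
  | cons e π ih =>
    intro f hf
    rcases List.mem_cons.mp hf with rfl | hf
    · exact h.1
    · exact ih h.2.2 f hf

lemma get_fst_eq_stateAt {p q : Q} {π : List (Edge D Q)} (h : IsPath G p q π) :
    ∀ (g : ℕ) (hg : g < π.length), (π.get ⟨g, hg⟩).1 = stateAt p π g := by
  induction π generalizing p with
  | nil => simp
  | cons e π ih =>
    intro g hg
    cases g with
    | zero => exact h.2.1
    | succ g => simpa using ih h.2.2 g (Nat.succ_lt_succ_iff.mp hg)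

lemma disp_take_add (π : List (Edge D Q)) (k g : ℕ) (i : Fin D) :
    disp (π.take (k+g)) i = disp (π.take k) i + disp ((π.drop k).take g) i := by
  rw [List.take_add, disp_append]

lemma disp_take_succ (π : List (Edge D Q)) (g : ℕ) (h : g < π.length) (i : Fin D) :
    disp (π.take (g+1)) i = disp (π.take g) i + (π.get ⟨g, h⟩).2.1 i := by
  rw [List.take_succ, disp_append]
  congr 1
  simp [disp, List.getElem?_eq_getElem h]
/-- Cut out repeated (state, I-displacement) profiles from a path. -/
lemma shorten (p q : Q) (I : Finset (Fin D)) :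
    ∀ (N : ℕ) (π : List (Edge D Q)), π.length ≤ N → IsPath G p q π →
    ∃ (π' : List (Edge D Q)) (m : ℕ → ℕ),
      IsPath G p q π' ∧
      (∀ g ≤ π'.length, m g ≤ π.length) ∧
      (∀ g ≤ π'.length, stateAt p π' g = stateAt p π (m g)) ∧
      (∀ g ≤ π'.length, ∀ i ∈ I, disp (π'.take g) i = disp (π.take (m g)) i) ∧
      (∀ i ∈ I, disp π' i = disp π i) ∧
      (∀ g₁ ≤ π'.length, ∀ g₂ ≤ π'.length, stateAt p π' g₁ = stateAt p π' g₂ →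
        (∀ i ∈ I, disp (π'.take g₁) i = disp (π'.take g₂) i) → g₁ = g₂) := by
  intro N
  induction N using Nat.strong_induction_on with
  | _ N IH =>
  intro π hlen hπ
  by_cases H : ∃ g₁ g₂, g₁ < g₂ ∧ g₂ ≤ π.length ∧ stateAt p π g₁ = stateAt p π g₂ ∧
      ∀ i ∈ I, disp (π.take g₁) i = disp (π.take g₂) i
  · obtain ⟨g₁, g₂, hlt, hg₂, hstate, hdisp⟩ := H
    have hg₁ : g₁ ≤ π.length := le_trans (le_of_lt hlt) hg₂
    set π₂ : List (Edge D Q) := π.take g₁ ++ π.drop g₂ with hπ₂def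
    have hlen₂ : π₂.length = g₁ + (π.length - g₂) := by
      simp [hπ₂def, min_eq_left hg₁]
    -- π₂ is a path
    have hpath₂ : IsPath G p q π₂ := by
      have h1 := (isPath_take_drop hπ g₁).1
      have h2 := (isPath_take_drop hπ g₂).2
      rw [← hstate] at h2
      exact isPath_append h1 h2
    -- state correspondence for π₂
    have m₂state : ∀ g ≤ π₂.length,
        stateAt p π₂ g = stateAt p π (if g ≤ g₁ then g else g + (g₂ - g₁)) := by
      intro g hg
      by_cases hgg : g ≤ g₁
      · rw [if_pos hgg, stateAt_append_le (by simpa [min_eq_left hg₁] using hgg)]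
        exact stateAt_take hgg (le_trans hgg hg₁)
      · rw [if_neg hgg]
        obtain ⟨k, rfl⟩ : ∃ k, g = g₁ + k := ⟨g - g₁, by omega⟩
        have e1 : stateAt p π₂ (g₁ + k)
            = stateAt (stateAt p (π.take g₁) g₁) (π.drop g₂) k := by
          have := stateAt_append_add p (π.take g₁) (π.drop g₂) k
          rwa [List.length_take, min_eq_left hg₁] at this
        have e2 : stateAt p π (g₂ + k)
            = stateAt (stateAt p (π.take g₂) g₂) (π.drop g₂) k := by
          conv_lhs => rw [← List.take_append_drop g₂ π]
          have := stateAt_append_add p (π.take g₂) (π.drop g₂) k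
          rwa [List.length_take, min_eq_left hg₂] at this
        rw [e1, stateAt_take (le_refl g₁) hg₁, hstate,
          ← stateAt_take (le_refl g₂) hg₂, ← e2]
        congr 1
        omega
    -- disp correspondence for π₂
    have m₂disp : ∀ g ≤ π₂.length, ∀ i ∈ I,
        disp (π₂.take g) i = disp (π.take (if g ≤ g₁ then g else g + (g₂ - g₁))) i := by
      intro g hg i hi
      by_cases hgg : g ≤ g₁
      · rw [if_pos hgg]
        have : π₂.take g = π.take g := by
          rw [hπ₂def, List.take_append, List.take_take,
            min_eq_left hgg, List.length_take, min_eq_left hg₁]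
          simp [Nat.sub_eq_zero_of_le hgg]
        rw [this]
      · rw [if_neg hgg]
        obtain ⟨k, rfl⟩ : ∃ k, g = g₁ + k := ⟨g - g₁, by omega⟩
        have ht : π₂.take (g₁ + k) = π.take g₁ ++ (π.drop g₂).take k := by
          rw [hπ₂def, List.take_append, List.take_take, List.length_take,
            min_eq_left hg₁, min_eq_right (by omega : g₁ ≤ g₁ + k)]
          congr 2
          omega
        have hdt : (π.drop g₂).take k = (π.take (g₂ + k)).drop g₂ := by
          rw [List.drop_take]
          congr 1
          omega
        have hsplit : π.take (g₂ + k) = π.take g₂ ++ (π.drop g₂).take k := by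
          conv_lhs => rw [← List.take_append_drop g₂ (π.take (g₂ + k))]
          rw [List.take_take, min_eq_left (by omega : g₂ ≤ g₂ + k), hdt]
        have harith : g₁ + k + (g₂ - g₁) = g₂ + k := by omega
        rw [ht, disp_append, harith, hsplit, disp_append, hdisp i hi]
    have hend₂ : ∀ i ∈ I, disp π₂ i = disp π i := by
      intro i hi
      conv_rhs => rw [← List.take_append_drop g₂ π]
      rw [hπ₂def, disp_append, disp_append, hdisp i hi]
    have hlt₂ : π₂.length < N := by omega
    obtain ⟨π', m', hpath', hm'le, hm'state, hm'disp, hm'end, hm'inj⟩ :=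
      IH π₂.length hlt₂ π₂ (le_refl _) hpath₂
    refine ⟨π', fun g => if m' g ≤ g₁ then m' g else m' g + (g₂ - g₁), hpath', ?_, ?_, ?_, ?_, hm'inj⟩
    · intro g hg
      have := hm'le g hg
      dsimp only
      split <;> omega
    · intro g hg
      rw [hm'state g hg, m₂state (m' g) (hm'le g hg)]
    · intro g hg i hi
      rw [hm'disp g hg i hi, m₂disp (m' g) (hm'le g hg) i hi]
    · intro i hi
      rw [hm'end i hi, hend₂ i hi]
  · refine ⟨π, id, hπ, fun g hg => hg, fun g _ => rfl, fun g _ i _ => rfl,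
      fun i _ => rfl, ?_⟩
    intro a ha b hb hs hd
    by_contra hne
    rcases Nat.lt_or_ge a b with hab | hab
    · exact H ⟨a, b, hab, hb, hs, hd⟩
    · have hab' : b < a := by omega
      exact H ⟨b, a, hab', ha, hs.symm, fun i hi => (hd i hi).symm⟩
/-- counting: profile-injective paths are short -/
lemma count_lemma [Fintype Q] (p : Q) (I : Finset (Fin D)) (r₀ : Fin D → ℤ) (C : ℤ)
    (π' : List (Edge D Q))
    (hbound : ∀ g ≤ π'.length, ∀ i ∈ I,
      0 ≤ r₀ i + disp (π'.take g) i ∧ r₀ i + disp (π'.take g) i < C)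
    (hinj : ∀ g₁ ≤ π'.length, ∀ g₂ ≤ π'.length, stateAt p π' g₁ = stateAt p π' g₂ →
      (∀ i ∈ I, disp (π'.take g₁) i = disp (π'.take g₂) i) → g₁ = g₂) :
    π'.length + 1 ≤ Fintype.card Q * C.toNat ^ I.card := by
  classical
  set F : Finset (Q × (Fin D → ℤ)) :=
    Finset.univ ×ˢ Fintype.piFinset
      (fun i => if i ∈ I then Finset.Icc (0:ℤ) (C-1) else {0}) with hF
  have hcard : F.card = Fintype.card Q * C.toNat ^ I.card := by
    rw [hF, Finset.card_product, Finset.card_univ, Fintype.card_piFinset]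
    congr 1
    calc (∏ i, (if i ∈ I then Finset.Icc (0:ℤ) (C-1) else {0}).card)
        = ∏ i, (if i ∈ I then C.toNat else 1) := by
          apply Finset.prod_congr rfl
          intro i _
          by_cases hi : i ∈ I
          · simp [hi]
          · simp [hi]
      _ = C.toNat ^ I.card := by
          rw [Finset.prod_ite_mem, Finset.univ_inter, Finset.prod_const]
  set f : Fin (π'.length + 1) → Q × (Fin D → ℤ) := fun g =>
    (stateAt p π' g, fun i => if i ∈ I then r₀ i + disp (π'.take g) i else 0) with hf
  have hmaps : ∀ g, f g ∈ F := by
    intro g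
    rw [hF, Finset.mem_product]
    refine ⟨Finset.mem_univ _, ?_⟩
    rw [Fintype.mem_piFinset]
    intro i
    by_cases hi : i ∈ I
    · have := hbound g (Nat.lt_succ_iff.mp g.isLt) i hi
      simp only [hf, hi, if_pos, Finset.mem_Icc]
      omega
    · simp [hf, hi]
  have hfinj : Function.Injective f := by
    intro a b hab
    have h1 : stateAt p π' (a:ℕ) = stateAt p π' (b:ℕ) := congrArg Prod.fst hab
    have h2 : ∀ i ∈ I, disp (π'.take (a:ℕ)) i = disp (π'.take (b:ℕ)) i := by
      intro i hi
      have := congrFun (congrArg Prod.snd hab) i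
      simp only [hf, if_pos hi] at this
      omega
    exact Fin.ext (hinj a (Nat.lt_succ_iff.mp a.isLt) b (Nat.lt_succ_iff.mp b.isLt) h1 h2)
  have hle := Finset.card_le_card_of_injOn (s := (Finset.univ : Finset (Fin (π'.length + 1))))
    (t := F) f (fun a _ => hmaps a) (fun a _ b _ h => hfinj h)
  rw [Finset.card_univ, Fintype.card_fin, hcard] at hle
  exact hle

/-- sum of |entries| bound for nodup edge lists -/
lemma nodup_disp_bound [DecidableEq Q] (l : List (Edge D Q)) (hnd : l.Nodup) (hmem : ∀ e ∈ l, e ∈ G.T)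
    (i : Fin D) :
    |disp l i| ≤ ((∑ e ∈ G.T, Finset.univ.sup fun j => (e.2.1 j).natAbs : ℕ) : ℤ) := by
  have h1 : disp l i = ∑ e ∈ l.toFinset, e.2.1 i := by
    rw [disp, ← List.sum_toFinset _ hnd]
  rw [h1]
  calc |∑ e ∈ l.toFinset, e.2.1 i| ≤ ∑ e ∈ l.toFinset, |e.2.1 i| :=
        Finset.abs_sum_le_sum_abs _ _
    _ ≤ ∑ e ∈ G.T, |e.2.1 i| := by
        apply Finset.sum_le_sum_of_subset_of_nonneg
        · intro e he
          exact hmem e (List.mem_toFinset.mp he)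
        · intros; positivity
    _ ≤ ∑ e ∈ G.T, ((Finset.univ.sup fun j => (e.2.1 j).natAbs : ℕ) : ℤ) := by
        apply Finset.sum_le_sum
        intro e _
        rw [Int.abs_eq_natAbs]
        exact_mod_cast Finset.le_sup (f := fun j => (e.2.1 j).natAbs) (Finset.mem_univ i)
    _ = _ := by rw [Nat.cast_sum]

lemma edge_entry_bound {e : Edge D Q} (he : e ∈ G.T) (i : Fin D) :
    |e.2.1 i| ≤ ((∑ e ∈ G.T, Finset.univ.sup fun j => (e.2.1 j).natAbs : ℕ) : ℤ) := by
  rw [Int.abs_eq_natAbs]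
  have h1 : (e.2.1 i).natAbs ≤ (Finset.univ.sup fun j => (e.2.1 j).natAbs) :=
    Finset.le_sup (f := fun j => (e.2.1 j).natAbs) (Finset.mem_univ i)
  have h2 : (Finset.univ.sup fun j => (e.2.1 j).natAbs)
      ≤ ∑ e ∈ G.T, Finset.univ.sup fun j => (e.2.1 j).natAbs :=
    Finset.single_le_sum (f := fun e : Edge D Q => Finset.univ.sup fun j => (e.2.1 j).natAbs)
      (fun _ _ => Nat.zero_le _) he
  exact_mod_cast le_trans h1 h2

lemma sum_lb (l : List ℤ) (b : ℤ) (h : ∀ x ∈ l, b ≤ x) : (l.length : ℤ) * b ≤ l.sum := by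
  induction l with
  | nil => simp
  | cons x l ih =>
    simp only [List.length_cons, List.sum_cons, Nat.cast_succ]
    have := ih (fun y hy => h y (List.mem_cons_of_mem x hy))
    have := h x (List.mem_cons_self)
    nlinarith [this]

lemma disp_take_lb {W : ℤ} (hW0 : 0 ≤ W) (l : List (Edge D Q)) (hW : ∀ e ∈ l, ∀ i, -W ≤ e.2.1 i)
    (g : ℕ) (i : Fin D) : -((g:ℤ) * W) ≤ disp (l.take g) i := by
  have h1 : ((l.take g).length : ℤ) * (-W) ≤ disp (l.take g) i := by
    rw [disp]
    have := sum_lb ((l.take g).map fun e => e.2.1 i) (-W) ?_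
    · simpa using this
    · intro x hx
      obtain ⟨e, he, rfl⟩ := List.mem_map.mp hx
      exact hW e (List.mem_of_mem_take he) i
  have h2 : ((l.take g).length : ℤ) ≤ (g : ℤ) := by
    have : (l.take g).length ≤ g := by
      rw [List.length_take]; omega
    exact_mod_cast this
  nlinarith [h1, h2, hW0]
def Mlen (A W : ℤ) : ℕ → ℤ
  | 0 => 0
  | c+1 => W * (A^(1+(c+1)^(c+1)) + W)^(c+1) + Mlen A W c

lemma nat_binom (m x : ℕ) : x^(m+1) + (m+1)*x^m ≤ (x+1)^(m+1) := by
  induction m with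
  | zero => simpa using Nat.le_refl _
  | succ m ih =>
    calc x^(m+2) + (m+2)*x^(m+1)
        ≤ (x^(m+1) + (m+1)*x^m) * (x+1) := by ring_nf; nlinarith [Nat.zero_le (x^m)]
      _ ≤ (x+1)^(m+1) * (x+1) := Nat.mul_le_mul_right _ ih
      _ = (x+1)^(m+2) := by ring

lemma four_le (c : ℕ) (hc : 1 ≤ c) : 4 ≤ (c+1)^(c+1) := by
  calc 4 = 2^2 := rfl
    _ ≤ (c+1)^2 := Nat.pow_le_pow_left (by omega) 2
    _ ≤ (c+1)^(c+1) := Nat.pow_le_pow_right (by omega) (by omega)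

lemma expo (c : ℕ) (hc : 1 ≤ c) :
    1 + (2 + (c+1)^(c+1)) * (c+1) ≤ (c+2)^(c+2) := by
  have h1 : (c+1)^(c+2) + (c+2)*(c+1)^(c+1) ≤ (c+2)^(c+2) := by
    have := nat_binom (c+1) (c+1)
    convert this using 2 <;> ring
  have h2 : 4 ≤ (c+1)^(c+1) := four_le c hc
  have h3 : (2 + (c+1)^(c+1)) * (c+1) = 2*(c+1) + (c+1)^(c+1)*(c+1) := by ring
  have h4 : (c+1)^(c+1)*(c+1) = (c+1)^(c+2) := by ring
  nlinarith [h1, h2]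

variable {A W : ℤ}

lemma pow_mono (hA : 2*W + 1 ≤ A) (hW : 1 ≤ W) {j k : ℕ} (h : j ≤ k) : A^j ≤ A^k :=
  pow_le_pow_right₀ (by linarith) h

lemma Mnonneg (hA : 2*W + 1 ≤ A) (hW : 1 ≤ W) : ∀ c, 0 ≤ Mlen A W c := by
  intro c
  induction c with
  | zero => exact le_refl 0
  | succ c ih =>
    have h1 : (0:ℤ) ≤ (A ^ (1+(c+1)^(c+1)) + W)^(c+1) :=
      pow_nonneg (by nlinarith [pow_nonneg (show (0:ℤ) ≤ A by linarith) (1+(c+1)^(c+1))]) _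
    have h2 : (0:ℤ) ≤ W * (A^(1+(c+1)^(c+1)) + W)^(c+1) := mul_nonneg (by linarith) h1
    show 0 ≤ W * (A^(1+(c+1)^(c+1)) + W)^(c+1) + Mlen A W c
    linarith

lemma arith (hA : 2*W + 1 ≤ A) (hW : 1 ≤ W) :
    ∀ c, 1 ≤ c → Mlen A W c ≤ A^((c+1)^(c+1)) - A - W := by
  intro c hc
  induction c with
  | zero => omega
  | succ c ih =>
    have hA1 : (1:ℤ) ≤ A := by linarith
    have hA0 : (0:ℤ) ≤ A := by linarith
    rcases Nat.eq_zero_or_pos c with rfl | hc1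
    · show W * (A^(1+(0+1)^(0+1)) + W)^(0+1) + Mlen A W 0 ≤ A^((0+1+1)^(0+1+1)) - A - W
      have e1 : (1+(0+1)^(0+1)) = 2 := by norm_num
      have e2 : ((0+1+1)^(0+1+1)) = 4 := by norm_num
      rw [e1, e2]
      show W * (A^2 + W)^1 + 0 ≤ A^4 - A - W
      have p2 : A^2 = A*A := sq A
      have p4 : A^4 = A*A*(A*A) := by ring
      have hWA : W ≤ A := by linarith
      have hb : (0:ℤ) ≤ A^2 + W := by nlinarith [sq_nonneg A]
      have hm : W * (A^2 + W) ≤ A * (A^2 + A) := mul_le_mul hWA (by linarith) hb hA0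
      nlinarith [hm, sq_nonneg (A*A - A), mul_nonneg hA0 (show (0:ℤ) ≤ A - 3 by linarith),
        mul_nonneg hA0 (mul_nonneg hA0 (show (0:ℤ) ≤ A - 3 by linarith))]
    · have ih' := ih hc1
      set E := (c+1)^(c+1) with hE
      have hE4 : 4 ≤ E := four_le c hc1
      have hWA : W ≤ A - 1 := by linarith
      have hpowA : A ≤ A^(1+E) := by
        calc A = A^1 := (pow_one A).symm
        _ ≤ A^(1+E) := pow_mono hA hW (by omega)
      have hXnn : (0:ℤ) ≤ A^((2+E)*(c+1)) := pow_nonneg hA0 _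
      have h1 : A^(1+E) + W ≤ A^(2+E) := by
        have e : A^(2+E) = A * A^(1+E) := by ring
        nlinarith [hpowA]
      have h2 : (A^(1+E)+W)^(c+1) ≤ (A^(2+E))^(c+1) :=
        pow_le_pow_left₀ (by nlinarith [hpowA]) h1 _
      have h3 : (A^(2+E))^(c+1) = A^((2+E)*(c+1)) := (pow_mul A _ _).symm
      have h4 : W * (A^(1+E)+W)^(c+1) ≤ (A-1) * A^((2+E)*(c+1)) := by
        calc W * (A^(1+E)+W)^(c+1) ≤ W * (A^(2+E))^(c+1) :=
              mul_le_mul_of_nonneg_left h2 (by linarith)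
        _ = W * A^((2+E)*(c+1)) := by rw [h3]
        _ ≤ (A-1) * A^((2+E)*(c+1)) := mul_le_mul_of_nonneg_right hWA hXnn
      have h5 : A^E ≤ A^((2+E)*(c+1)) := pow_mono hA hW (by nlinarith)
      have h6 : A^(1+(2+E)*(c+1)) ≤ A^((c+2)^(c+2)) := pow_mono hA hW (expo c hc1)
      have h7 : A^(1+(2+E)*(c+1)) = A * A^((2+E)*(c+1)) := by ring
      have goal_eq : ((c+1+1)^(c+1+1)) = (c+2)^(c+2) := by norm_num
      show W * (A^(1+(c+1)^(c+1)) + W)^(c+1) + Mlen A W c ≤ A^((c+1+1)^(c+1+1)) - A - W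
      rw [goal_eq, ← hE]
      nlinarith [h4, h5, h6, ih', hXnn]

lemma key (hA : 2*W + 1 ≤ A) (hW : 1 ≤ W) :
    ∀ c, A + W * Mlen A W c ≤ A^(1+(c+1)^(c+1)) := by
  intro c
  have hA1 : (1:ℤ) ≤ A := by linarith
  have hA0 : (0:ℤ) ≤ A := by linarith
  rcases Nat.eq_zero_or_pos c with rfl | hc
  · show A + W * Mlen A W 0 ≤ A^(1+(0+1)^(0+1))
    have e1 : (1+(0+1)^(0+1)) = 2 := by norm_num
    rw [e1]
    show A + W * 0 ≤ A^2
    nlinarith [sq_nonneg A]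
  · have h := arith hA hW c hc
    set E := (c+1)^(c+1) with hE
    have hAE : A ≤ A^E := by
      calc A = A^1 := (pow_one A).symm
      _ ≤ A^E := pow_mono hA hW (by have := four_le c hc; omega)
    have hAEnn : (0:ℤ) ≤ A^E := pow_nonneg hA0 _
    have h1 : W * Mlen A W c ≤ W * (A^E - A - W) :=
      mul_le_mul_of_nonneg_left h (by linarith)
    have h2 : (1+W) * A^E ≤ (A-W) * A^E :=
      mul_le_mul_of_nonneg_right (by linarith) hAEnn
    have h3 : A^(1+E) = A * A^E := by ring
    nlinarith [h1, h2, hAE]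

end Rack

namespace Rack
variable {D : ℕ} {Q : Type} {G : VASS D Q}

lemma main_induction [Fintype Q] (A W : ℤ) (hW : 1 ≤ W) (hA : 2*W + 1 ≤ A)
    (hQcard : (Fintype.card Q : ℤ) ≤ W)
    (hTb : ((∑ e ∈ G.T, Finset.univ.sup fun i => (e.2.1 i).natAbs : ℕ) : ℤ) ≤ W) :
    ∀ (c : ℕ) (I : Finset (Fin D)), I.card = c →
    ∀ (p₀ pL : Q) (r₀ : Fin D → ℤ) (π : List (Edge D Q)), IsPath G p₀ pL π →
    (∀ g ≤ π.length, ∀ i ∈ I, 0 ≤ r₀ i + disp (π.take g) i) →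
    (∀ i ∈ I, ∃ g ≤ π.length, A^(1+c^c) ≤ r₀ i + disp (π.take g) i) →
    ∃ (q : Q) (σ : List (Edge D Q)), IsPath G p₀ q σ ∧
      (∀ g ≤ σ.length, ∀ i ∈ I, 0 ≤ r₀ i + disp (σ.take g) i) ∧
      (σ.length : ℤ) ≤ Mlen A W c ∧
      (∀ i ∈ I, A ≤ r₀ i + disp σ i) := by
  have hent : ∀ e ∈ G.T, ∀ i, |e.2.1 i| ≤ W :=
    fun e he i => le_trans (edge_entry_bound he i) hTb
  intro c
  induction c with
  | zero =>
    intro I hcard p₀ pL r₀ π hπ hnn hhigh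
    rw [Finset.card_eq_zero] at hcard
    subst hcard
    exact ⟨p₀, [], isPath_nil p₀, by simp, by simp [Mlen], by simp⟩
  | succ c IH =>
    intro I hcard p₀ pL r₀ π hπ hnn hhigh
    classical
    set B : ℤ := A^(1+(c+1)^(c+1)) with hB
    have hA1 : (1:ℤ) ≤ A := by linarith
    have hA0 : (0:ℤ) ≤ A := by linarith
    have hB1 : 1 ≤ B := one_le_pow₀ hA1
    -- first time some coordinate reaches B
    have hI : ∃ i, i ∈ I := Finset.card_pos.mp (by omega)
    obtain ⟨i₀, hi₀⟩ := hI
    have hP : ∃ g, g ≤ π.length ∧ ∃ i ∈ I, B ≤ r₀ i + disp (π.take g) i := by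
      obtain ⟨g, hg, hgB⟩ := hhigh i₀ hi₀
      exact ⟨g, hg, i₀, hi₀, hgB⟩
    set gs := Nat.find hP with hgs
    obtain ⟨hgle, istar, histar, hstarB⟩ := Nat.find_spec hP
    have hmin : ∀ g < gs, ∀ i ∈ I, r₀ i + disp (π.take g) i < B := by
      intro g hg i hi
      by_contra hcon
      push_neg at hcon
      exact Nat.find_min hP hg ⟨by omega, i, hi, hcon⟩
    -- shortened prefix
    obtain ⟨π₁, hπ₁path, hπ₁nn, hπ₁len, hπ₁end⟩ :
        ∃ π₁, IsPath G p₀ (stateAt p₀ π gs) π₁ ∧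
          (∀ g ≤ π₁.length, ∀ i ∈ I, 0 ≤ r₀ i + disp (π₁.take g) i) ∧
          ((π₁.length : ℤ) ≤ W * (B+W)^(c+1) - 1) ∧
          (∀ i ∈ I, disp π₁ i = disp (π.take gs) i) := by
      rcases Nat.eq_zero_or_pos gs with hg0 | hg1
      · refine ⟨[], ?_, ?_, ?_, ?_⟩
        · rw [hg0, stateAt_zero]; exact isPath_nil p₀
        · intro g hg i hi
          simp only [List.length_nil, Nat.le_zero] at hg
          subst hg
          simpa using hnn 0 (Nat.zero_le _) i hi
        · have h1 : (1:ℤ) ≤ (B+W)^(c+1) := one_le_pow₀ (by linarith)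
          have : (1:ℤ) ≤ W * (B+W)^(c+1) := by nlinarith
          simpa using by linarith
        · intro i hi; rw [hg0]; simp
      · have hsplit := isPath_take_drop hπ gs
        obtain ⟨π', m, hp', hmle, hmstate, hmdisp, hmend, hinj⟩ :=
          shorten p₀ (stateAt p₀ π gs) I (π.take gs).length (π.take gs) le_rfl hsplit.1
        have hlent : (π.take gs).length = gs := by
          rw [List.length_take]; omega
        have hmle' : ∀ g ≤ π'.length, m g ≤ gs := by
          intro g hg; have := hmle g hg; omega
        have htransfer : ∀ g ≤ π'.length, ∀ i ∈ I,
            disp (π'.take g) i = disp (π.take (m g)) i := by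
          intro g hg i hi
          rw [hmdisp g hg i hi, List.take_take, min_eq_left (hmle' g hg)]
        -- value at position gs is < B + W in every coordinate of I
        have hatgs : ∀ i ∈ I, r₀ i + disp (π.take gs) i < B + W := by
          intro i hi
          have h1 := hmin (gs - 1) (by omega) i hi
          have hlt : gs - 1 < π.length := by omega
          have h2 := disp_take_succ π (gs - 1) hlt i
          have h3 := hent (π.get ⟨gs - 1, hlt⟩) (mem_T_of_isPath hπ (π.get ⟨gs - 1, hlt⟩) (List.get_mem π ⟨gs - 1, hlt⟩)) i
          have he : gs - 1 + 1 = gs := by omega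
          rw [he] at h2
          have := (abs_le.mp h3).2
          rw [h2]; linarith
        have hbound : ∀ g ≤ π'.length, ∀ i ∈ I,
            0 ≤ r₀ i + disp (π'.take g) i ∧ r₀ i + disp (π'.take g) i < B + W := by
          intro g hg i hi
          rw [htransfer g hg i hi]
          have hmgle : m g ≤ π.length := by have := hmle' g hg; omega
          refine ⟨hnn (m g) hmgle i hi, ?_⟩
          rcases Nat.lt_or_ge (m g) gs with h | h
          · have := hmin (m g) h i hi; linarith
          · have : m g = gs := le_antisymm (hmle' g hg) h
            rw [this]; exact hatgs i hi
        have hcount := count_lemma p₀ I r₀ (B+W) π' hbound hinj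
        rw [hcard] at hcount
        have hBW : ((B+W).toNat : ℤ) = B + W := Int.toNat_of_nonneg (by linarith)
        have hlen' : (π'.length : ℤ) + 1 ≤ (Fintype.card Q : ℤ) * (B+W)^(c+1) := by
          have := hcount
          have hcast : ((π'.length + 1 : ℕ) : ℤ)
              ≤ ((Fintype.card Q * (B+W).toNat ^ (c+1) : ℕ) : ℤ) := by exact_mod_cast this
          push_cast at hcast
          rw [hBW] at hcast
          linarith
        have hQW : (Fintype.card Q : ℤ) * (B+W)^(c+1) ≤ W * (B+W)^(c+1) :=
          mul_le_mul_of_nonneg_right hQcard (pow_nonneg (by linarith) _)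
        refine ⟨π', hp', ?_, by linarith, ?_⟩
        · intro g hg i hi
          rw [htransfer g hg i hi]
          exact hnn (m g) (by have := hmle' g hg; omega) i hi
        · intro i hi
          rw [hmend i hi]
      -- end prefix construction
    set qs := stateAt p₀ π gs with hqs
    set r₁ : Fin D → ℤ := fun i => r₀ i + disp (π.take gs) i with hr₁
    set π₂ := π.drop gs with hπ₂
    have hπ₂path : IsPath G qs pL π₂ := (isPath_take_drop hπ gs).2
    have hlen₂ : π₂.length = π.length - gs := by rw [hπ₂, List.length_drop]
    have hv₂ : ∀ (g : ℕ) (i : Fin D),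
        r₁ i + disp (π₂.take g) i = r₀ i + disp (π.take (gs + g)) i := by
      intro g i
      rw [disp_take_add π gs g i, hr₁]
      ring
    have hnn₂ : ∀ g ≤ π₂.length, ∀ i ∈ I, 0 ≤ r₁ i + disp (π₂.take g) i := by
      intro g hg i hi
      rw [hv₂]
      exact hnn (gs + g) (by omega) i hi
    have hhigh₂ : ∀ i ∈ I.erase istar, ∃ g ≤ π₂.length,
        A^(1+c^c) ≤ r₁ i + disp (π₂.take g) i := by
      intro i hi
      have hiI := Finset.mem_of_mem_erase hi
      obtain ⟨h, hhle, hval⟩ := hhigh i hiI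
      have hge : gs ≤ h := Nat.find_min' hP ⟨hhle, i, hiI, hval⟩
      refine ⟨h - gs, by omega, ?_⟩
      rw [hv₂]
      have he : gs + (h - gs) = h := by omega
      rw [he]
      refine le_trans ?_ hval
      apply pow_mono hA hW
      have h1 : c^c ≤ (c+1)^(c+1) :=
        le_trans (Nat.pow_le_pow_left (Nat.le_succ c) c)
          (Nat.pow_le_pow_right (by omega) (Nat.le_succ c))
      omega
    obtain ⟨q', σ', hσ'path, hσ'nn, hσ'len, hσ'end⟩ :=
      IH (I.erase istar) (by rw [Finset.card_erase_of_mem histar, hcard]; omega) qs pL r₁ π₂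
        hπ₂path (fun g hg i hi => hnn₂ g hg i (Finset.mem_of_mem_erase hi)) hhigh₂
    have hσ'T : ∀ e ∈ σ', e ∈ G.T := mem_T_of_isPath hσ'path
    have hMnn := Mnonneg hA hW c
    have hkey := key hA hW c
    have hstar_nn : ∀ g ≤ σ'.length, A ≤ r₁ istar + disp (σ'.take g) istar := by
      intro g hg
      have h1 : -((g:ℤ)*W) ≤ disp (σ'.take g) istar :=
        disp_take_lb (by linarith) σ'
          (fun e he i => neg_le_of_abs_le (hent e (hσ'T e he) i)) g istar
      have h2 : (g:ℤ) ≤ Mlen A W c := le_trans (by exact_mod_cast hg) hσ'len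
      have h3 : (g:ℤ)*W ≤ Mlen A W c * W := mul_le_mul_of_nonneg_right h2 (by linarith)
      have h4 : B ≤ r₁ istar := hstarB
      linarith [hkey]
    refine ⟨q', π₁ ++ σ', isPath_append hπ₁path hσ'path, ?_, ?_, ?_⟩
    · -- nonnegativity of combined path
      intro g hg i hi
      rcases le_or_gt g π₁.length with h | h
      · have ht : (π₁ ++ σ').take g = π₁.take g := by
          rw [List.take_append, Nat.sub_eq_zero_of_le h]
          simp
        rw [ht]
        exact hπ₁nn g h i hi
      · obtain ⟨k, rfl⟩ : ∃ k, g = π₁.length + k := ⟨g - π₁.length, by omega⟩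
        have hk : k ≤ σ'.length := by
          rw [List.length_append] at hg; omega
        have ht : (π₁ ++ σ').take (π₁.length + k) = π₁ ++ σ'.take k := by
          rw [List.take_append, List.take_of_length_le (by omega)]
          congr 2
          omega
        rw [ht, disp_append]
        have hval : r₀ i + (disp π₁ i + disp (σ'.take k) i)
            = r₁ i + disp (σ'.take k) i := by
          rw [hπ₁end i hi, hr₁]; ring
        rw [hval]
        rcases eq_or_ne i istar with rfl | hne
        · linarith [hstar_nn k hk]
        · exact hσ'nn k hk i (Finset.mem_erase.mpr ⟨hne, hi⟩)
    · -- length bound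
      have hM : Mlen A W (c+1) = W * (B+W)^(c+1) + Mlen A W c := rfl
      rw [List.length_append]
      push_cast
      linarith [hσ'len, hπ₁len]
    · -- final values
      intro i hi
      rw [disp_append]
      have hval : r₀ i + (disp π₁ i + disp σ' i) = r₁ i + disp σ' i := by
        rw [hπ₁end i hi, hr₁]; ring
      rw [hval]
      rcases eq_or_ne i istar with rfl | hne
      · have := hstar_nn σ'.length le_rfl
        rwa [List.take_length] at this
      · exact hσ'end i (Finset.mem_erase.mpr ⟨hne, hi⟩)

end Rack

/-- Rackoff-style lemma, part (II): if along an `I`-walk every coordinate of `I` gets at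
least as large as `A^{1+c^c}` at some point, then there is a short `I`-walk from the same
starting configuration, returning to the starting state, whose final location is
`> A - 2^(n+1)` on all coordinates of `I`. -/
theorem rackoff_part_II (D : ℕ) (Q : Type) [Fintype Q] (G : VASS D Q)
    (hsc : ∀ p q : Q, ∃ π : List (Edge D Q), IsPath G p q π)
    (I : Finset (Fin D)) (c : ℕ) (hc : c = I.card) (hc1 : 1 ≤ c)
    (n : ℕ) (hQ : Fintype.card Q ≤ 2 ^ n)
    (hT : (∑ e ∈ G.T, Finset.univ.sup fun i => (e.2.1 i).natAbs) ≤ 2 ^ n)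
    (A : ℤ) (hA : 2 ^ (n + 1) < A)
    (p₀ pL : Q) (r₀ : Fin D → ℤ) (π : List (Edge D Q))
    (hπ : IsPath G p₀ pL π)
    (hIwalk : ∀ g ≤ π.length, ∀ i ∈ I, 0 ≤ r₀ i + disp (π.take g) i)
    (hhigh : ∀ i ∈ I, ∃ g ≤ π.length, A ^ (1 + c ^ c) ≤ r₀ i + disp (π.take g) i) :
    ∃ σ : List (Edge D Q),
      IsPath G p₀ p₀ σ ∧
      (∀ g ≤ σ.length, ∀ i ∈ I, 0 ≤ r₀ i + disp (σ.take g) i) ∧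
      (σ.length : ℤ) < A ^ ((c + 1) ^ (c + 1)) ∧
      (∀ i ∈ I, A - 2 ^ (n + 1) < r₀ i + disp σ i) := by
  classical
  open Rack in
  set W : ℤ := 2^n with hWdef
  have hW : 1 ≤ W := one_le_pow₀ (by norm_num)
  have hW2 : (2:ℤ)^(n+1) = 2*W := by rw [hWdef, pow_succ]; ring
  have hA' : 2*W + 1 ≤ A := by rw [← hW2]; omega
  have hQ' : (Fintype.card Q : ℤ) ≤ W := by
    rw [hWdef]
    exact_mod_cast hQ
  have hT' : ((∑ e ∈ G.T, Finset.univ.sup fun i => (e.2.1 i).natAbs : ℕ) : ℤ) ≤ W := by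
    rw [hWdef]
    exact_mod_cast hT
  obtain ⟨q, σS, hSpath, hSnn, hSlen, hSend⟩ :=
    main_induction A W hW hA' hQ' hT' c I hc.symm p₀ pL r₀ π hπ hIwalk hhigh
  -- short return path from q to p₀
  obtain ⟨ρ₀, hρ₀⟩ := hsc q p₀
  obtain ⟨ρ, m, hρpath, _, _, _, _, hρinj⟩ :=
    shorten q p₀ (∅ : Finset (Fin D)) ρ₀.length ρ₀ le_rfl hρ₀
  have hst_inj : ∀ g₁ ≤ ρ.length, ∀ g₂ ≤ ρ.length,
      stateAt q ρ g₁ = stateAt q ρ g₂ → g₁ = g₂ :=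
    fun g₁ h₁ g₂ h₂ hs => hρinj g₁ h₁ g₂ h₂ hs
      (fun i hi => absurd hi (Finset.notMem_empty i))
  have hρlen : ρ.length + 1 ≤ Fintype.card Q := by
    have hinj : Function.Injective (fun g : Fin (ρ.length+1) => stateAt q ρ (g:ℕ)) := by
      intro a b hab
      exact Fin.ext (hst_inj a (Nat.lt_succ_iff.mp a.isLt) b (Nat.lt_succ_iff.mp b.isLt) hab)
    calc ρ.length + 1 = Fintype.card (Fin (ρ.length+1)) := (Fintype.card_fin _).symm
      _ ≤ Fintype.card Q := Fintype.card_le_of_injective _ hinj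
  have hρnodup : ρ.Nodup := by
    rw [List.nodup_iff_injective_get]
    intro a b hab
    have ha := get_fst_eq_stateAt hρpath a a.isLt
    have hb := get_fst_eq_stateAt hρpath b b.isLt
    have : stateAt q ρ (a:ℕ) = stateAt q ρ (b:ℕ) := by
      rw [← ha, ← hb, hab]
    exact Fin.ext (hst_inj a (le_of_lt a.isLt) b (le_of_lt b.isLt) this)
  have hρdisp : ∀ g, ∀ i, |disp (ρ.take g) i| ≤ W := by
    intro g i
    refine le_trans (nodup_disp_bound (ρ.take g) (hρnodup.sublist (List.take_sublist g ρ))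
      (fun e he => mem_T_of_isPath hρpath e (List.mem_of_mem_take he)) i) hT'
  have hρlenZ : (ρ.length : ℤ) ≤ W - 1 := by
    have : (ρ.length : ℤ) + 1 ≤ (Fintype.card Q : ℤ) := by exact_mod_cast hρlen
    linarith
  have harith := Rack.arith hA' hW c hc1
  have hA2W : A - 2^(n+1) = A - 2*W := by rw [hW2]
  refine ⟨σS ++ ρ, isPath_append hSpath hρpath, ?_, ?_, ?_⟩
  · intro g hg i hi
    rcases le_or_gt g σS.length with h | h
    · have ht : (σS ++ ρ).take g = σS.take g := by
        rw [List.take_append, Nat.sub_eq_zero_of_le h]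
        simp
      rw [ht]
      exact hSnn g h i hi
    · obtain ⟨k, rfl⟩ : ∃ k, g = σS.length + k := ⟨g - σS.length, by omega⟩
      have ht : (σS ++ ρ).take (σS.length + k) = σS ++ ρ.take k := by
        rw [List.take_append, List.take_of_length_le (by omega)]
        congr 2
        omega
      rw [ht, disp_append]
      have h1 := hSend i hi
      have h2 := neg_le_of_abs_le (hρdisp k i)
      linarith
  · rw [List.length_append]
    push_cast
    linarith
  · intro i hi
    rw [disp_append]
    have h1 := hSend i hi
    have h2 := neg_le_of_abs_le (hρdisp ρ.length i)
    rw [List.take_length] at h2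
    rw [hA2W]
    linarith
end

section
/- Let G = (Q, T) be a strongly connected D-VASS. Call a function ψ : T → ℕ a circulation if it conserves flow at every vertex (for every q ∈ Q, the sum of ψ(e) over transitions e entering q equals the sum of ψ(e) over transitions e leaving q) and has zero total displacement (Σ_{e ∈ T} ψ(e)·t_e = 0, where t_e is the label of e). Call a transition e ∈ T unbounded if there is a circulation ψ with ψ(e) > 0, and bounded otherwise. Let G' be the subgraph of G on the same vertex set whose edges are exactly the unbounded transitions. If G' ≠ G (i.e., some transition of G is bounded), then dim_ℚ V_{G'} < dim_ℚ V_G. -/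
/-- A simple cycle: a nonempty circular path in which no vertex occurs more than once. -/
def IsSimpleCycle {D : ℕ} {Q : Type} (G : VASS D Q) (p : Q) (π : List (Edge D Q)) : Prop :=
  π ≠ [] ∧ IsPath G p p π ∧ (π.map fun e => e.1).Nodup

/-- `V_G`: the `ℚ`-linear span of the displacements of the simple cycles of `G`. -/
noncomputable def spanV {D : ℕ} {Q : Type} (G : VASS D Q) : Submodule ℚ (Fin D → ℚ) :=
  Submodule.span ℚ {v | ∃ p π, IsSimpleCycle G p π ∧ v = fun i => ((disp π i : ℤ) : ℚ)}

/-- A circulation of `G`: a function `ψ : T → ℕ` conserving flow at every vertex and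
having zero total displacement. -/
def IsCirculation {D : ℕ} {Q : Type} [DecidableEq Q] (G : VASS D Q)
    (ψ : Edge D Q → ℕ) : Prop :=
  (∀ e, e ∉ G.T → ψ e = 0) ∧
  (∀ q : Q, (∑ e ∈ G.T, if e.2.2 = q then ψ e else 0)
          = ∑ e ∈ G.T, if e.1 = q then ψ e else 0) ∧
  (∀ i : Fin D, (∑ e ∈ G.T, (ψ e : ℤ) * e.2.1 i) = 0)

variable {D : ℕ} {Q : Type}

lemma isPath_mem {G : VASS D Q} : ∀ {p q : Q} {π : List (Edge D Q)},
    IsPath G p q π → ∀ f ∈ π, f ∈ G.T := by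
  intro p q π
  induction π generalizing p with
  | nil => intro _ f hf; simp at hf
  | cons e t ih =>
    rintro ⟨he, -, ht⟩ f hf
    rcases List.mem_cons.mp hf with hf | hf
    · exact hf ▸ he
    · exact ih ht f hf

lemma isPath_mono {G G' : VASS D Q} (hsub : G'.T ⊆ G.T) :
    ∀ {p q : Q} {π : List (Edge D Q)}, IsPath G' p q π → IsPath G p q π := by
  intro p q π
  induction π generalizing p with
  | nil => exact fun h => h
  | cons e t ih => rintro ⟨he, h1, ht⟩; exact ⟨hsub he, h1, ih ht⟩

lemma isPath_append {G : VASS D Q} :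
    ∀ {π₁ π₂ : List (Edge D Q)} {p r q : Q},
    IsPath G p r π₁ → IsPath G r q π₂ → IsPath G p q (π₁ ++ π₂) := by
  intro π₁
  induction π₁ with
  | nil => intro π₂ p r q h1 h2; cases h1; exact h2
  | cons e t ih =>
    rintro π₂ p r q ⟨he, h1, ht⟩ h2
    exact ⟨he, h1, ih ht h2⟩

lemma isPath_append_split {G : VASS D Q} :
    ∀ {π₁ π₂ : List (Edge D Q)} {p q : Q},
    IsPath G p q (π₁ ++ π₂) → ∃ r, IsPath G p r π₁ ∧ IsPath G r q π₂ := by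
  intro π₁
  induction π₁ with
  | nil => intro π₂ p q h; exact ⟨p, rfl, h⟩
  | cons e t ih =>
    rintro π₂ p q ⟨he, h1, ht⟩
    obtain ⟨r, hr1, hr2⟩ := ih ht
    exact ⟨r, ⟨he, h1, hr1⟩, hr2⟩

lemma not_nodup_split {π : List (Edge D Q)}
    (h : ¬ (π.map fun e => e.1).Nodup) :
    ∃ (a b : Edge D Q) (α β γ : List (Edge D Q)),
      π = α ++ a :: β ++ b :: γ ∧ a.1 = b.1 := by
  induction π with
  | nil => simp at h
  | cons e t ih =>
    rw [List.map_cons, List.nodup_cons] at h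
    push_neg at h
    by_cases hm : e.1 ∈ t.map fun f => f.1
    · obtain ⟨b, hb, hb1⟩ := List.mem_map.mp hm
      obtain ⟨β, γ, rfl⟩ := List.append_of_mem hb
      exact ⟨e, b, [], β, γ, rfl, hb1.symm⟩
    · obtain ⟨a, b, α, β, γ, rfl, hab⟩ := ih (h hm)
      exact ⟨a, b, e :: α, β, γ, rfl, hab⟩

lemma disp_append (π₁ π₂ : List (Edge D Q)) (i : Fin D) :
    disp (π₁ ++ π₂) i = disp π₁ i + disp π₂ i := by
  simp [disp]

lemma disp_cycle_mem (G : VASS D Q) :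
    ∀ (n : ℕ) (π : List (Edge D Q)), π.length ≤ n → ∀ p, IsPath G p p π →
      (fun i => ((disp π i : ℤ) : ℚ)) ∈ spanV G := by
  intro n
  induction n with
  | zero =>
    intro π hlen p hπ
    rw [List.length_eq_zero_iff.mp (Nat.le_zero.mp hlen)]
    have h0 : (fun i => ((disp ([] : List (Edge D Q)) i : ℤ) : ℚ)) = 0 := by
      funext i; simp [disp]
    rw [h0]; exact Submodule.zero_mem _
  | succ n ih =>
    intro π hlen p hπ
    rcases eq_or_ne π [] with rfl | hne
    · have h0 : (fun i => ((disp ([] : List (Edge D Q)) i : ℤ) : ℚ)) = 0 := by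
        funext i; simp [disp]
      rw [h0]; exact Submodule.zero_mem _
    by_cases hnd : (π.map fun e => e.1).Nodup
    · exact Submodule.subset_span ⟨p, π, ⟨hne, hπ, hnd⟩, rfl⟩
    · obtain ⟨a, b, α, β, γ, rfl, hab⟩ := not_nodup_split hnd
      have hπ' : IsPath G p p (α ++ ((a :: β) ++ (b :: γ))) := by
        rwa [← List.append_assoc]
      obtain ⟨r₁, hα, hrest⟩ := isPath_append_split (π₁ := α) hπ'
      obtain ⟨he_a, ha1, hrest2⟩ := hrest
      obtain ⟨r₂, hβ, hbγ⟩ := isPath_append_split hrest2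
      obtain ⟨he_b, hb1, hγ⟩ := hbγ
      -- inner cycle: a :: β  (from a.1 to a.1), since r₂ = b.1 = a.1
      have hr₂ : r₂ = a.1 := by rw [← hb1, hab]
      have hinner : IsPath G a.1 a.1 (a :: β) := ⟨he_a, rfl, hr₂ ▸ hβ⟩
      have houter : IsPath G p p (α ++ b :: γ) := by
        refine isPath_append hα ?_
        exact ha1 ▸ ⟨he_b, (hr₂ ▸ hb1 : b.1 = a.1), hγ⟩
      have hlil : (a :: β).length ≤ n := by
        simp only [List.length_append, List.length_cons] at hlen ⊢; omega
      have hlol : (α ++ b :: γ).length ≤ n := by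
        simp only [List.length_append, List.length_cons] at hlen ⊢; omega
      have h1 := ih _ hlil _ hinner
      have h2 := ih _ hlol _ houter
      have : (fun i => ((disp (α ++ a :: β ++ b :: γ) i : ℤ) : ℚ))
          = (fun i => ((disp (a :: β) i : ℤ) : ℚ)) + fun i => ((disp (α ++ b :: γ) i : ℤ) : ℚ) := by
        funext i
        simp only [Pi.add_apply, ← Int.cast_add]
        congr 1
        simp [disp]; ring
      rw [this]
      exact Submodule.add_mem _ h1 h2

lemma sum_count_smul {M : Type*} [AddCommMonoid M] [DecidableEq Q] :
    ∀ (π : List (Edge D Q)) (S : Finset (Edge D Q)) (g : Edge D Q → M),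
      (∀ f ∈ π, f ∈ S) → (∑ f ∈ S, (π.count f) • g f) = (π.map g).sum := by
  intro π
  induction π with
  | nil => intro S g _; simp
  | cons e t ih =>
    intro S g hsub
    have he : e ∈ S := hsub e List.mem_cons_self
    have ht : ∀ f ∈ t, f ∈ S := fun f hf => hsub f (List.mem_cons_of_mem e hf)
    have hcc : ∀ f, (e :: t).count f = t.count f + if f = e then 1 else 0 := by
      intro f; rw [List.count_cons]
      by_cases h : f = e
      · subst h; simp
      · simp [h, Ne.symm h]
    simp only [hcc, add_smul]
    rw [Finset.sum_add_distrib, ih S g ht]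
    simp only [ite_smul, one_smul, zero_smul]
    rw [Finset.sum_ite_eq' S e g]
    simp [he, add_comm]

lemma map_ite_sum [DecidableEq Q] (P : Edge D Q → Prop) [DecidablePred P] :
    ∀ (π : List (Edge D Q)),
      ((π.map fun f => if P f then (1 : ℕ) else 0).sum) = π.countP (fun f => decide (P f)) := by
  intro π
  induction π with
  | nil => simp
  | cons e t ih =>
    rw [List.map_cons, List.sum_cons, List.countP_cons, ih]
    by_cases h : P e <;> simp [h, add_comm]

lemma sum_count_ite [DecidableEq Q] (π : List (Edge D Q)) (S : Finset (Edge D Q))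
    (P : Edge D Q → Prop) [DecidablePred P] (hsub : ∀ f ∈ π, f ∈ S) :
    (∑ f ∈ S, if P f then π.count f else 0) = π.countP (fun f => decide (P f)) := by
  rw [← map_ite_sum P π, ← sum_count_smul π S (fun f => if P f then (1:ℕ) else 0) hsub]
  apply Finset.sum_congr rfl
  intro f _
  by_cases h : P f <;> simp [h]

/-- flow conservation for paths, на countP level -/
lemma path_countP {G : VASS D Q} [DecidableEq Q] :
    ∀ {π : List (Edge D Q)} {p q : Q}, IsPath G p q π → ∀ v : Q,
      π.countP (fun f => decide (f.2.2 = v)) + (if v = p then 1 else 0)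
        = π.countP (fun f => decide (f.1 = v)) + (if v = q then 1 else 0) := by
  intro π
  induction π with
  | nil => rintro p q rfl v; rfl
  | cons e t ih =>
    rintro p q ⟨he, rfl, ht⟩ v
    have h := ih ht v
    rw [List.countP_cons, List.countP_cons]
    simp only [decide_eq_true_eq]
    simp only [eq_comm] at h ⊢
    split_ifs at h ⊢ <;> omega

lemma cycle_flow_conservation [DecidableEq Q] {G : VASS D Q} {p : Q} {π : List (Edge D Q)}
    (hπ : IsPath G p p π) (S : Finset (Edge D Q)) (hS : ∀ f ∈ π, f ∈ S) (v : Q) :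
    (∑ f ∈ S, if f.2.2 = v then (π.count f : ℤ) else 0)
      = ∑ f ∈ S, if f.1 = v then (π.count f : ℤ) else 0 := by
  have h1 := sum_count_ite π S (fun f => f.2.2 = v) hS
  have h2 := sum_count_ite π S (fun f => f.1 = v) hS
  have h3 := path_countP hπ v
  beta_reduce at h1 h2
  have h4 : (∑ f ∈ S, if f.2.2 = v then π.count f else 0)
      = ∑ f ∈ S, if f.1 = v then π.count f else 0 := by omega
  have c1 : (∑ f ∈ S, if f.2.2 = v then (π.count f : ℤ) else 0)
      = ((∑ f ∈ S, if f.2.2 = v then π.count f else 0 : ℕ) : ℤ) := by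
    push_cast [apply_ite (Nat.cast : ℕ → ℤ)]; rfl
  have c2 : (∑ f ∈ S, if f.1 = v then (π.count f : ℤ) else 0)
      = ((∑ f ∈ S, if f.1 = v then π.count f else 0 : ℕ) : ℤ) := by
    push_cast [apply_ite (Nat.cast : ℕ → ℤ)]; rfl
  rw [c1, c2, h4]

lemma sum_count_mul [DecidableEq Q] (π : List (Edge D Q)) (S : Finset (Edge D Q))
    (hS : ∀ f ∈ π, f ∈ S) (i : Fin D) :
    (∑ f ∈ S, (π.count f : ℤ) * f.2.1 i) = disp π i := by
  have := sum_count_smul (M := ℤ) π S (fun f => f.2.1 i) hS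
  simpa [nsmul_eq_mul, disp] using this

lemma spanV_mono {G G' : VASS D Q} (h : G'.T ⊆ G.T) : spanV G' ≤ spanV G := by
  apply Submodule.span_mono
  rintro v ⟨p, π, ⟨hne, hp, hnd⟩, rfl⟩
  exact ⟨p, π, ⟨hne, isPath_mono h hp, hnd⟩, rfl⟩

lemma cast_ite_sum [DecidableEq Q] (S : Finset (Edge D Q)) (P : Edge D Q → Prop)
    [DecidablePred P] (ψ : Edge D Q → ℕ) :
    (∑ f ∈ S, if P f then (ψ f : ℤ) else 0)
      = ((∑ f ∈ S, if P f then ψ f else 0 : ℕ) : ℤ) := by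
  push_cast [apply_ite (Nat.cast : ℕ → ℤ)]; rfl


/-- If `G` is strongly connected and `G'` is the subgraph of `G` consisting of exactly the
unbounded transitions (those carried by some circulation), and some transition of `G` is
bounded (`G' ≠ G`), then the geometric dimension drops: `dim_ℚ V_{G'} < dim_ℚ V_G`. -/
theorem bounded_edge_dim_drop (D : ℕ) (Q : Type) [DecidableEq Q] (G : VASS D Q)
    (hsc : ∀ p q : Q, ∃ π : List (Edge D Q), IsPath G p q π)
    (G' : VASS D Q)
    (hG' : ∀ e, e ∈ G'.T ↔ e ∈ G.T ∧ ∃ ψ, IsCirculation G ψ ∧ 0 < ψ e)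
    (hne : G'.T ≠ G.T) :
    Module.finrank ℚ ↥(spanV G') < Module.finrank ℚ ↥(spanV G) := by
  have hsub : G'.T ⊆ G.T := fun e he => ((hG' e).mp he).1
  by_contra hcon
  push_neg at hcon
  have hle : spanV G' ≤ spanV G := spanV_mono hsub
  have heq : spanV G' = spanV G := Submodule.eq_of_le_of_finrank_le hle hcon
  apply hne
  apply Finset.Subset.antisymm hsub
  intro e he
  by_cases he' : e ∈ G'.T
  · exact he'
  -- e is in G.T but not G'.T; we build a circulation positive at e, a contradiction.
  obtain ⟨ρ, hρ⟩ := hsc e.2.2 e.1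
  set C : List (Edge D Q) := e :: ρ with hCdef
  have hC : IsPath G e.1 e.1 C := ⟨he, rfl, hρ⟩
  have hCT : ∀ f ∈ C, f ∈ G.T := isPath_mem hC
  have hCmem : (fun i => ((disp C i : ℤ) : ℚ)) ∈ spanV G' := by
    rw [heq]; exact disp_cycle_mem G C.length C le_rfl e.1 hC
  obtain ⟨n, c, vv, hsum⟩ := Submodule.mem_span_set'.mp hCmem
  have hvv : ∀ j, ∃ p π, IsSimpleCycle G' p π ∧
      (vv j : Fin D → ℚ) = fun i => ((disp π i : ℤ) : ℚ) := fun j => (vv j).2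
  choose pp CY hCY hCYd using hvv
  have hCYT : ∀ j, ∀ f ∈ CY j, f ∈ G'.T := fun j => isPath_mem (hCY j).2.1
  have hCYpath : ∀ j, IsPath G' (pp j) (pp j) (CY j) := fun j => (hCY j).2.1
  -- clear denominators
  set m : ℕ := ∏ j, (c j).den with hmdef
  have hm : 0 < m := Finset.prod_pos (fun j _ => (c j).pos)
  set z : Fin n → ℤ := fun j => ((m / (c j).den : ℕ) : ℤ) * (c j).num with hzdef
  have hzc : ∀ j, ((z j : ℤ) : ℚ) = (m : ℚ) * c j := by
    intro j
    have hd : (c j).den ∣ m := Finset.dvd_prod_of_mem _ (Finset.mem_univ j)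
    have hden : ((c j).den : ℚ) ≠ 0 := Nat.cast_ne_zero.mpr (c j).den_nz
    have h1 : ((m / (c j).den : ℕ) : ℚ) * ((c j).den : ℚ) = m := by
      rw [← Nat.cast_mul, Nat.div_mul_cancel hd]
    have h2 : ((c j).num : ℚ) = c j * ((c j).den : ℚ) :=
      (div_eq_iff hden).mp (Rat.num_div_den (c j))
    calc ((z j : ℤ) : ℚ) = ((m / (c j).den : ℕ) : ℚ) * ((c j).num : ℚ) := by
          simp only [hzdef]; rw [Int.cast_mul, Int.cast_natCast]
      _ = ((m / (c j).den : ℕ) : ℚ) * ((c j).den : ℚ) * c j := by rw [h2]; ring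
      _ = (m : ℚ) * c j := by rw [h1]
  -- the key linear identity
  have hkey : ∀ i, (m : ℤ) * disp C i = ∑ j, z j * disp (CY j) i := by
    intro i
    have h1 : ∑ j, c j * ((disp (CY j) i : ℤ) : ℚ) = ((disp C i : ℤ) : ℚ) := by
      calc ∑ j, c j * ((disp (CY j) i : ℤ) : ℚ)
          = ∑ j, c j * (vv j : Fin D → ℚ) i := by
            refine Finset.sum_congr rfl (fun j _ => ?_)
            rw [hCYd j]
        _ = (∑ j, c j • (vv j : Fin D → ℚ)) i := by
            rw [Finset.sum_apply]
            refine Finset.sum_congr rfl (fun j _ => ?_)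
            simp [Pi.smul_apply, smul_eq_mul]
        _ = ((disp C i : ℤ) : ℚ) := congrFun hsum i
    have h2 : ∑ j, ((z j : ℤ) : ℚ) * ((disp (CY j) i : ℤ) : ℚ)
        = (m : ℚ) * ((disp C i : ℤ) : ℚ) := by
      rw [← h1, Finset.mul_sum]
      refine Finset.sum_congr rfl (fun j _ => ?_)
      rw [hzc j]
      ring
    exact_mod_cast h2.symm
  -- the master circulation positive on all of G'.T
  have hU : ∀ g : {x // x ∈ G'.T}, ∃ ψ, IsCirculation G ψ ∧ 0 < ψ g.1 :=
    fun g => ((hG' g.1).mp g.2).2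
  choose Ψ hΨ hΨpos using hU
  set ψs : Edge D Q → ℕ := fun f => ∑ g ∈ G'.T.attach, Ψ g f with hψsdef
  have hψs_supp : ∀ f, f ∉ G.T → ψs f = 0 :=
    fun f hf => Finset.sum_eq_zero (fun g _ => (hΨ g).1 f hf)
  have hψs_pos : ∀ g, g ∈ G'.T → 1 ≤ ψs g := by
    intro g hg
    have h1 := Finset.single_le_sum (f := fun x : {x // x ∈ G'.T} => Ψ x g)
      (fun x _ => Nat.zero_le _) (Finset.mem_attach _ ⟨g, hg⟩)
    exact le_trans (hΨpos ⟨g, hg⟩) h1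
  have hψs_swap : ∀ (P : Edge D Q → Prop) [DecidablePred P],
      (∑ f ∈ G.T, if P f then (ψs f : ℤ) else 0)
        = ∑ g ∈ G'.T.attach, ∑ f ∈ G.T, if P f then (Ψ g f : ℤ) else 0 := by
    intro P _
    rw [Finset.sum_comm]
    refine Finset.sum_congr rfl (fun f _ => ?_)
    rw [hψsdef]
    push_cast
    split <;> simp
  have hψs_cons : ∀ v, (∑ f ∈ G.T, if f.2.2 = v then (ψs f : ℤ) else 0)
      = ∑ f ∈ G.T, if f.1 = v then (ψs f : ℤ) else 0 := by
    intro v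
    rw [hψs_swap, hψs_swap]
    refine Finset.sum_congr rfl (fun g _ => ?_)
    rw [cast_ite_sum, cast_ite_sum, (hΨ g).2.1 v]
  have hψs_disp : ∀ i, (∑ f ∈ G.T, (ψs f : ℤ) * f.2.1 i) = 0 := by
    intro i
    have h1 : (∑ f ∈ G.T, (ψs f : ℤ) * f.2.1 i)
        = ∑ g ∈ G'.T.attach, ∑ f ∈ G.T, (Ψ g f : ℤ) * f.2.1 i := by
      rw [Finset.sum_comm]
      refine Finset.sum_congr rfl (fun f _ => ?_)
      rw [hψsdef]
      push_cast
      rw [Finset.sum_mul]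
    rw [h1]
    exact Finset.sum_eq_zero (fun g _ => (hΨ g).2.2 i)
  -- the integer flow
  set N : ℤ := ∑ j, ((z j).natAbs : ℤ) * (CY j).length with hNdef
  have hN0 : 0 ≤ N := Finset.sum_nonneg (fun j _ => by positivity)
  set φ : Edge D Q → ℤ := fun f =>
    (m : ℤ) * (C.count f) - (∑ j, z j * ((CY j).count f)) + N * (ψs f) with hφdef
  have hφ0 : ∀ f, 0 ≤ φ f := by
    intro f
    by_cases hf : f ∈ G'.T
    · have h1 : (∑ j, z j * ((CY j).count f : ℤ)) ≤ N := by
        refine Finset.sum_le_sum (fun j _ => ?_)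
        calc z j * ((CY j).count f : ℤ)
            ≤ ((z j).natAbs : ℤ) * ((CY j).count f) :=
              mul_le_mul_of_nonneg_right (Int.le_natAbs) (by positivity)
          _ ≤ ((z j).natAbs : ℤ) * (CY j).length := by
              refine mul_le_mul_of_nonneg_left ?_ (by positivity)
              exact_mod_cast (List.count_le_length (a := f) (l := CY j))
      have h2 : (1 : ℤ) ≤ (ψs f : ℤ) := by exact_mod_cast hψs_pos f hf
      have h3 : N ≤ N * (ψs f : ℤ) := le_mul_of_one_le_right hN0 h2
      have h4 : (0 : ℤ) ≤ (m : ℤ) * (C.count f) := by positivity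
      simp only [hφdef]
      linarith
    · have hcnt : ∀ j, (CY j).count f = 0 :=
        fun j => List.count_eq_zero_of_not_mem (fun h => hf (hCYT j f h))
      have hs0 : (∑ j, z j * ((CY j).count f : ℤ)) = 0 :=
        Finset.sum_eq_zero (fun j _ => by rw [hcnt j]; simp)
      simp only [hφdef, hs0, sub_zero]
      positivity
  set ψ : Edge D Q → ℕ := fun f => (φ f).toNat with hψdef
  have hψcast : ∀ f, (ψ f : ℤ) = φ f := fun f => Int.toNat_of_nonneg (hφ0 f)
  have hcirc : IsCirculation G ψ := by
    refine ⟨?_, ?_, ?_⟩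
    · intro f hf
      have e1 : C.count f = 0 := List.count_eq_zero_of_not_mem (fun h => hf (hCT f h))
      have e2 : ∀ j, (CY j).count f = 0 :=
        fun j => List.count_eq_zero_of_not_mem (fun h => hf (hsub (hCYT j f h)))
      have e3 : ψs f = 0 := hψs_supp f hf
      have hφf : φ f = 0 := by
        simp only [hφdef, e1, e3, Nat.cast_zero, mul_zero, add_zero, sub_zero]
        simp [Finset.sum_eq_zero (fun j (_ : j ∈ Finset.univ) => by rw [e2 j]; simp :
          ∀ j ∈ Finset.univ, z j * (((CY j).count f : ℕ) : ℤ) = 0)]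
      simp [hψdef, hφf]
    · intro v
      have expand : ∀ (P : Edge D Q → Prop) [DecidablePred P],
          (∑ f ∈ G.T, if P f then (ψ f : ℤ) else 0)
            = (m : ℤ) * (∑ f ∈ G.T, if P f then (C.count f : ℤ) else 0)
              - (∑ j, z j * (∑ f ∈ G.T, if P f then ((CY j).count f : ℤ) else 0))
              + N * (∑ f ∈ G.T, if P f then (ψs f : ℤ) else 0) := by
        intro P _
        have step : ∀ f ∈ G.T, (if P f then (ψ f : ℤ) else 0)
            = ((m : ℤ) * (if P f then (C.count f : ℤ) else 0)
              - (∑ j, z j * (if P f then ((CY j).count f : ℤ) else 0))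
              + N * (if P f then (ψs f : ℤ) else 0)) := by
          intro f _
          rw [hψcast f]
          split
          · rfl
          · simp
        rw [Finset.sum_congr rfl step, Finset.sum_add_distrib, Finset.sum_sub_distrib,
          ← Finset.mul_sum, ← Finset.mul_sum]
        congr 2
        rw [Finset.sum_comm]
        refine Finset.sum_congr rfl (fun j _ => ?_)
        rw [Finset.mul_sum]
      have hZ : (∑ f ∈ G.T, if f.2.2 = v then (ψ f : ℤ) else 0)
          = ∑ f ∈ G.T, if f.1 = v then (ψ f : ℤ) else 0 := by
        rw [expand, expand, cycle_flow_conservation hC G.T hCT v, hψs_cons v]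
        congr 2
        refine Finset.sum_congr rfl (fun j _ => ?_)
        rw [cycle_flow_conservation (isPath_mono hsub (hCYpath j)) G.T
          (fun f hf => hsub (hCYT j f hf)) v]
      rw [cast_ite_sum, cast_ite_sum] at hZ
      exact_mod_cast hZ
    · intro i
      have expand2 : (∑ f ∈ G.T, (ψ f : ℤ) * f.2.1 i)
          = (m : ℤ) * (∑ f ∈ G.T, (C.count f : ℤ) * f.2.1 i)
            - (∑ j, z j * (∑ f ∈ G.T, ((CY j).count f : ℤ) * f.2.1 i))
            + N * (∑ f ∈ G.T, (ψs f : ℤ) * f.2.1 i) := by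
        have step : ∀ f ∈ G.T, (ψ f : ℤ) * f.2.1 i
            = (m : ℤ) * ((C.count f : ℤ) * f.2.1 i)
              - (∑ j, z j * (((CY j).count f : ℤ) * f.2.1 i))
              + N * ((ψs f : ℤ) * f.2.1 i) := by
          intro f _
          rw [hψcast f]
          simp only [hφdef]
          have hs : ∑ j, z j * ((CY j).count f : ℤ) * f.2.1 i
              = ∑ j, z j * (((CY j).count f : ℤ) * f.2.1 i) :=
            Finset.sum_congr rfl (fun j _ => by ring)
          rw [add_mul, sub_mul, Finset.sum_mul, hs]
          ring
        rw [Finset.sum_congr rfl step, Finset.sum_add_distrib, Finset.sum_sub_distrib,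
          ← Finset.mul_sum, ← Finset.mul_sum]
        congr 2
        rw [Finset.sum_comm]
        refine Finset.sum_congr rfl (fun j _ => ?_)
        rw [Finset.mul_sum]
      rw [expand2, hψs_disp i, mul_zero, add_zero,
        sum_count_mul C G.T hCT i]
      have : ∀ j ∈ Finset.univ, z j * (∑ f ∈ G.T, ((CY j).count f : ℤ) * f.2.1 i)
          = z j * disp (CY j) i := fun j _ => by
        rw [sum_count_mul (CY j) G.T (fun f hf => hsub (hCYT j f hf)) i]
      rw [Finset.sum_congr rfl this, hkey i]
      ring
  have hepos : 0 < ψ e := by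
    have hcC : 1 ≤ (C.count e : ℤ) := by
      have : 0 < C.count e := List.count_pos_iff.mpr List.mem_cons_self
      exact_mod_cast this
    have hcnt : ∀ j, (CY j).count e = 0 :=
      fun j => List.count_eq_zero_of_not_mem (fun h => he' (hCYT j e h))
    have hs0 : (∑ j, z j * ((CY j).count e : ℤ)) = 0 :=
      Finset.sum_eq_zero (fun j _ => by rw [hcnt j]; simp)
    have hns : (0 : ℤ) ≤ N * (ψs e : ℤ) := by positivity
    have hmc : (m : ℤ) ≤ (m : ℤ) * (C.count e : ℤ) :=
      le_mul_of_one_le_right (by positivity) hcC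
    have hφe : 0 < φ e := by
      simp only [hφdef, hs0, sub_zero]
      have : (0 : ℤ) < m := by exact_mod_cast hm
      linarith
    have := hψcast e
    omega
  exact (hG' e).mpr ⟨he, ψ, hcirc, hepos⟩
end
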